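/- arXiv:math-ph/0208007 — 7 statements merged into one kernel-verified Lean document; each statement's English description precedes it below -/
import Mathlib

section
/- For variables $w_1,\dots,w_n$ and a polynomial $f(w)=c_0+c_1w+\cdots+c_nw^n$ of degree at most $n$, one has $\sum_{j=1}^n \Delta(w_1,\dots,w_n)|_{w_j=0}\, f(w_j) = (c_0+(-1)^{n-1}c_n w_1\cdots w_n)\,\Delta(w_1,\dots,w_n)$, where $\Delta(w_1,\dots,w_n)|_{w_j=0}$ denotes the Vandermonde determinant in the $n$ variables with $w_j$ replaced by $0$. -/
open Finset

/-- The Vandermonde product `∏_{i<j} (w j - w i)`. -/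
def vandermondeProd {R : Type*} [CommRing R] {n : ℕ} (w : Fin n → R) : R :=
  ∏ p ∈ Finset.univ.filter (fun p : Fin n × Fin n => p.1 < p.2), (w p.2 - w p.1)

section Aux

variable {R : Type*} [CommRing R]

lemma vandermondeProd_eq_det {n : ℕ} (v : Fin n → R) :
    vandermondeProd v = (Matrix.vandermonde v).det := by
  rw [Matrix.det_vandermonde, vandermondeProd, Finset.prod_sigma']
  refine Finset.prod_nbij' (fun p => ⟨p.1, p.2⟩) (fun p => (p.1, p.2)) ?_ ?_ ?_ ?_ ?_ <;>
    simp +contextual [Finset.mem_Ioi, Finset.mem_sigma]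

lemma vandermonde_update_zero {m : ℕ} (u : Fin (m + 1) → R) (j : Fin (m + 1)) :
    Matrix.vandermonde (Function.update u j 0) =
      (Matrix.vandermonde u).updateRow j (Pi.single (0 : Fin (m + 1)) 1) := by
  ext i k
  by_cases h : i = j
  · subst h
    simp [Matrix.vandermonde, Function.update_self, Matrix.updateRow_self,
      zero_pow_eq, Pi.single_apply, Fin.ext_iff, eq_comm (a := k)]
  · simp [Matrix.vandermonde, Function.update_of_ne h, Matrix.updateRow_ne h]

lemma det_updateRow_single {n : ℕ} (M : Matrix (Fin n) (Fin n) R) (i j : Fin n) :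
    (M.updateRow j (Pi.single i 1)).det = (M.updateCol i (Pi.single j 1)).det := by
  rw [← Matrix.adjugate_apply, ← Matrix.det_transpose (M.updateCol i (Pi.single j 1)),
    ← Matrix.updateRow_transpose, ← Matrix.adjugate_apply, ← Matrix.adjugate_transpose,
    Matrix.transpose_apply]

end Aux

theorem stmt0 {R : Type*} [CommRing R] (n : ℕ) (hn : 1 ≤ n)
    (w : Fin n → R) (c : Fin (n + 1) → R) (f : R → R)
    (hf : ∀ x, f x = ∑ i : Fin (n + 1), c i * x ^ (i : ℕ)) :
    ∑ j : Fin n, vandermondeProd (Function.update w j 0) * f (w j)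
      = (c 0 + (-1 : R) ^ (n - 1) * c (Fin.last n) * ∏ j, w j) * vandermondeProd w := by
  obtain ⟨m, rfl⟩ : ∃ m, n = m + 1 := ⟨n - 1, by omega⟩
  set V := Matrix.vandermonde w with hV
  -- Step 1: rewrite each summand using the adjugate symmetry
  have step1 : ∀ j : Fin (m + 1),
      vandermondeProd (Function.update w j 0)
        = Matrix.cramer V (Pi.single j 1) (0 : Fin (m + 1)) := by
    intro j
    rw [vandermondeProd_eq_det, vandermonde_update_zero, det_updateRow_single,
      Matrix.cramer_apply]
  -- Step 2: the sum is cramer applied to the vector (f (w r))_r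
  have hb : (fun r => f (w r)) = ∑ j : Fin (m + 1), f (w j) • (Pi.single j 1 : Fin (m + 1) → R) := by
    funext r
    simp [Pi.single_apply, Finset.sum_apply, mul_ite, Finset.sum_ite_eq', eq_comm]
  have step2 : ∑ j : Fin (m + 1), vandermondeProd (Function.update w j 0) * f (w j)
      = Matrix.cramer V (fun r => f (w r)) 0 := by
    rw [hb, map_sum]
    simp only [Finset.sum_apply, map_smul, Pi.smul_apply, smul_eq_mul]
    refine Finset.sum_congr rfl fun j _ => ?_
    rw [step1 j]; ring
  -- Step 3: expand f into monomials
  have hb2 : (fun r => f (w r))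
      = ∑ i : Fin (m + 2), c i • (fun r => w r ^ (i : ℕ)) := by
    funext r
    simp [hf, Finset.sum_apply]
  have step3 : Matrix.cramer V (fun r => f (w r)) 0
      = ∑ i : Fin (m + 2), c i * Matrix.cramer V (fun r => w r ^ (i : ℕ)) 0 := by
    rw [hb2, map_sum]
    simp [Finset.sum_apply]
  -- values of the monomial cramer terms
  have hD0 : Matrix.cramer V (fun r => w r ^ ((0 : Fin (m + 2)) : ℕ)) 0 = V.det := by
    have : (fun r => w r ^ ((0 : Fin (m + 2)) : ℕ)) = fun r => V r 0 := by
      funext r; simp [hV, Matrix.vandermonde]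
    rw [Matrix.cramer_apply, this, Matrix.updateCol_eq_self]
  have hDmid : ∀ i : Fin (m + 2), i ≠ 0 → i ≠ Fin.last (m + 1) →
      Matrix.cramer V (fun r => w r ^ (i : ℕ)) 0 = 0 := by
    intro i h0 hl
    have hi : (i : ℕ) < m + 1 := by
      have := Fin.val_lt_last hl
      omega
    have hi0 : (i : ℕ) ≠ 0 := fun h => h0 (Fin.ext h)
    set i' : Fin (m + 1) := ⟨(i : ℕ), hi⟩ with hi'
    have hcol : (fun r => w r ^ (i : ℕ)) = fun r => V r i' := by
      funext r; simp [hV, Matrix.vandermonde, hi']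
    have hne : i' ≠ 0 := by
      intro h
      apply hi0
      simpa [hi'] using congrArg Fin.val h
    rw [Matrix.cramer_apply, hcol]
    exact Matrix.det_updateCol_eq_zero hne
  have hDlast : Matrix.cramer V (fun r => w r ^ ((Fin.last (m + 1) : Fin (m + 2)) : ℕ)) 0
      = (-1 : R) ^ m * (∏ j, w j) * V.det := by
    set ρ : Equiv.Perm (Fin (m + 1)) := (finRotate (m + 1))⁻¹ with hρ
    have hrho : ∀ k : Fin (m + 1), ρ k = k - 1 := by
      intro k
      rw [hρ, Equiv.Perm.inv_eq_iff_eq]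
      cases m with
      | zero =>
        haveI : Subsingleton (Fin (0 + 1)) := Fin.subsingleton_one
        exact Subsingleton.elim _ _
      | succ m' => rw [finRotate_succ_apply]; exact (sub_add_cancel k 1).symm
    have hmat : V.updateCol 0 (fun r => w r ^ (m + 1))
        = (Matrix.diagonal w) * (V.submatrix id ⇑ρ) := by
      ext r k
      rw [Matrix.mul_apply]
      rw [Finset.sum_eq_single r (fun b _ hb => by
        simp [Matrix.diagonal_apply_ne' w hb]) (by simp)]
      rw [Matrix.diagonal_apply_eq, Matrix.submatrix_apply, id_eq, hrho k]
      by_cases hk : k = 0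
      · subst hk
        have h01 : ((0 : Fin (m + 1)) - 1) = Fin.last m := by
          rw [sub_eq_iff_eq_add]
          cases m with
          | zero =>
            haveI : Subsingleton (Fin (0 + 1)) := Fin.subsingleton_one
            exact Subsingleton.elim _ _
          | succ m' =>
            ext
            rw [Fin.val_add_one]
            simp
        simp [hV, Matrix.vandermonde, h01, pow_succ, mul_comm]
      · have hkv : ((k - 1 : Fin (m + 1)) : ℕ) = (k : ℕ) - 1 := by
          rw [Fin.coe_sub_one, if_neg hk]
        have hk0 : (k : ℕ) ≠ 0 := fun h => hk (Fin.ext h)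
        rw [Matrix.updateCol_ne hk]
        simp only [hV, Matrix.vandermonde, Matrix.of_apply, hkv]
        rw [← pow_succ']
        congr 1
        omega
    have hlastval : ((Fin.last (m + 1) : Fin (m + 2)) : ℕ) = m + 1 := rfl
    rw [Matrix.cramer_apply, hlastval, hmat, Matrix.det_mul, Matrix.det_diagonal,
      Matrix.det_permute', hρ, Equiv.Perm.sign_inv, sign_finRotate]
    push_cast
    ring
  have h0l : (0 : Fin (m + 2)) ≠ Fin.last (m + 1) := by
    simp [Fin.ext_iff]
  rw [step2, step3,
    ← Finset.sum_subset (Finset.subset_univ {(0 : Fin (m + 2)), Fin.last (m + 1)})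
      (fun i _ hi => by
        simp only [Finset.mem_insert, Finset.mem_singleton, not_or] at hi
        rw [hDmid i hi.1 hi.2, mul_zero]),
    Finset.sum_pair h0l, hD0, hDlast, vandermondeProd_eq_det]
  simp only [Nat.add_sub_cancel]
  ring
end

section
/- For variables $w_1,\dots,w_n$, $\sum_{j=1}^n w_j^2\, \Delta(w_1,\dots,w_n)|_{w_j=0} \prod_{m\ne j} (1-w_m w_j)$ equals $w_1^2\cdots w_n^2\,\Delta(w_1,\dots,w_n)$ if $n$ is odd, and equals $(w_1^2\cdots w_n^2 - w_1\cdots w_n)\,\Delta(w_1,\dots,w_n)$ if $n$ is even. -/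
open Finset

open Polynomial


lemma prod_neg' {M : Type*} [CommRing M] {ι : Type*} (s : Finset ι) (f : ι → M) :
    ∏ i ∈ s, (-f i) = (-1) ^ s.card * ∏ i ∈ s, f i := by
  calc ∏ i ∈ s, (-f i) = ∏ i ∈ s, ((-1) * f i) := by simp [neg_one_mul]
    _ = (-1) ^ s.card * ∏ i ∈ s, f i := by rw [Finset.prod_mul_distrib, Finset.prod_const]

lemma prod_erase_univ' {α M : Type*} [Fintype α] [DecidableEq α] [CommMonoid M]
    (f : α → M) (a : α) :
    ∏ x ∈ Finset.univ.erase a, f x = ∏ x : α, (if x = a then 1 else f x) := by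
  rw [← Finset.mul_prod_erase Finset.univ (fun x => if x = a then 1 else f x)
    (Finset.mem_univ a), if_pos rfl, one_mul]
  exact Finset.prod_congr rfl fun x hx => (if_neg (Finset.mem_erase.mp hx).1).symm
open Finset Polynomial

lemma aux_deg_coeff {F : Type*} [Field F] {ι : Type*} (s : Finset ι) (a : ι → F) :
    (∏ i ∈ s, (1 - C (a i) * X)).degree ≤ (s.card : WithBot ℕ) ∧
    (∏ i ∈ s, (1 - C (a i) * X)).coeff s.card = ∏ i ∈ s, (-a i) := by
  induction s using Finset.cons_induction with
  | empty => simp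
  | cons i t hit ih =>
    rw [Finset.prod_cons, Finset.prod_cons, Finset.card_cons]
    obtain ⟨hdeg, hcoeff⟩ := ih
    constructor
    · have h1 : (1 - C (a i) * X : F[X]) = C (-a i) * X + C 1 := by rw [map_neg, map_one]; ring
      calc (((1 - C (a i) * X) * ∏ m ∈ t, (1 - C (a m) * X)).degree)
          ≤ (1 - C (a i) * X).degree + (∏ m ∈ t, (1 - C (a m) * X)).degree :=
            degree_mul_le _ _
        _ ≤ 1 + (t.card : WithBot ℕ) := add_le_add (by rw [h1]; exact degree_linear_le) hdeg
        _ = ((t.card + 1 : ℕ) : WithBot ℕ) := by push_cast; ring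
    · have expand : (1 - C (a i) * X) * (∏ m ∈ t, (1 - C (a m) * X))
        = C (-a i) * (X * ∏ m ∈ t, (1 - C (a m) * X)) + ∏ m ∈ t, (1 - C (a m) * X) := by
        rw [map_neg]; ring
      have hz : (∏ m ∈ t, (1 - C (a m) * X)).coeff (t.card + 1) = 0 :=
        coeff_eq_zero_of_degree_lt (lt_of_le_of_lt hdeg (by exact_mod_cast Nat.lt_succ_self _))
      rw [expand, coeff_add, coeff_C_mul, coeff_X_mul, hcoeff, hz, add_zero]

lemma coeff_interp {F : Type*} [Field F] {ι : Type*} [DecidableEq ι] (s : Finset ι)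
    (v : ι → F) (hvs : Set.InjOn v s) (g : F[X]) (hdeg : g.degree < s.card) :
    g.coeff (s.card - 1) = ∑ i ∈ s, eval (v i) g * Lagrange.nodalWeight s v i := by
  conv_lhs => rw [Lagrange.eq_interpolate hvs hdeg]
  rw [Lagrange.interpolate_apply, finset_sum_coeff]
  refine Finset.sum_congr rfl fun i hi => ?_
  rw [coeff_C_mul]
  congr 1
  have hb : Lagrange.basis s v i
      = C (Lagrange.nodalWeight s v i) * Lagrange.nodal (s.erase i) v := by
    rw [Lagrange.basis, Lagrange.nodalWeight, Lagrange.nodal_eq, map_prod,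
      ← Finset.prod_mul_distrib]
    exact Finset.prod_congr rfl fun j hj => rfl
  rw [hb, coeff_C_mul]
  have hcard : (s.erase i).card = s.card - 1 := Finset.card_erase_of_mem hi
  have : (Lagrange.nodal (s.erase i) v).coeff (s.card - 1) = 1 := by
    have hm : (Lagrange.nodal (s.erase i) v).Monic := Lagrange.nodal_monic
    have hnd : (Lagrange.nodal (s.erase i) v).natDegree = s.card - 1 := by
      rw [Lagrange.natDegree_nodal, hcard]
    rw [← hnd]; exact hm.coeff_natDegree
  rw [this, mul_one]


lemma V0 {R : Type*} [CommRing R] {n : ℕ} (v : Fin n → R) (j : Fin n) :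
    vandermondeProd v =
      (∏ m ∈ Finset.univ.erase j, (if j < m then v m - v j else v j - v m)) *
      ∏ p ∈ Finset.univ.filter
          (fun p : Fin n × Fin n => p.1 < p.2 ∧ p.1 ≠ j ∧ p.2 ≠ j), (v p.2 - v p.1) := by
  rw [vandermondeProd,
    ← Finset.prod_filter_mul_prod_filter_not
      (Finset.univ.filter (fun p : Fin n × Fin n => p.1 < p.2))
      (fun p : Fin n × Fin n => p.1 = j ∨ p.2 = j)]
  congr 1
  · refine Finset.prod_nbij' (fun p => if p.1 = j then p.2 else p.1)
      (fun m => if j < m then (j, m) else (m, j)) ?_ ?_ ?_ ?_ ?_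
    · rintro ⟨p1, p2⟩ hp
      simp only [Finset.mem_filter, Finset.mem_univ, true_and] at hp
      obtain ⟨hlt, hj⟩ := hp
      rcases hj with h1 | h2
      · subst h1; simp [Finset.mem_erase, (ne_of_gt hlt)]
      · subst h2
        have : p1 ≠ p2 := ne_of_lt hlt
        simp [Finset.mem_erase, this]
    · intro m hm
      simp only [Finset.mem_erase, Finset.mem_univ, and_true] at hm
      rcases lt_or_gt_of_ne (Ne.symm hm) with h | h
      · simp [h, Finset.mem_filter, not_lt.mpr (le_of_lt h)]
      · rw [if_neg (not_lt.mpr (le_of_lt h))]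
        simp [Finset.mem_filter, h]
    · rintro ⟨p1, p2⟩ hp
      simp only [Finset.mem_filter, Finset.mem_univ, true_and] at hp
      obtain ⟨hlt, hj⟩ := hp
      dsimp only
      rcases hj with h1 | h2
      · subst h1; simp [hlt]
      · subst h2
        have h1 : p1 ≠ p2 := ne_of_lt hlt
        rw [if_neg h1, if_neg (not_lt.mpr (le_of_lt hlt))]
    · intro m hm
      simp only [Finset.mem_erase, Finset.mem_univ, and_true] at hm
      rcases lt_or_gt_of_ne (Ne.symm hm) with h | h
      · simp [h]
      · rw [if_neg (not_lt.mpr (le_of_lt h))]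
        simp [hm]
    · rintro ⟨p1, p2⟩ hp
      simp only [Finset.mem_filter, Finset.mem_univ, true_and] at hp
      obtain ⟨hlt, hj⟩ := hp
      dsimp only
      rcases hj with h1 | h2
      · subst h1; simp [hlt]
      · subst h2
        have h1 : p1 ≠ p2 := ne_of_lt hlt
        rw [if_neg h1, if_neg (not_lt.mpr (le_of_lt hlt))]
  · rw [Finset.filter_filter]
    apply Finset.prod_congr _ (fun _ _ => rfl)
    apply Finset.filter_congr
    intro p _
    constructor
    · rintro ⟨h1, h2⟩; push_neg at h2; exact ⟨h1, h2.1, h2.2⟩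
    · rintro ⟨h1, h2, h3⟩; exact ⟨h1, by push_neg; exact ⟨h2, h3⟩⟩

lemma lemV {R : Type*} [CommRing R] {n : ℕ} (w : Fin n → R) (j : Fin n) :
    vandermondeProd (Function.update w j 0) * ∏ m ∈ Finset.univ.erase j, (w m - w j)
      = vandermondeProd w * ∏ m ∈ Finset.univ.erase j, w m := by
  rw [V0 (Function.update w j 0) j, V0 w j]
  have hrest : ∏ p ∈ Finset.univ.filter
      (fun p : Fin n × Fin n => p.1 < p.2 ∧ p.1 ≠ j ∧ p.2 ≠ j),
      (Function.update w j 0 p.2 - Function.update w j 0 p.1)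
      = ∏ p ∈ Finset.univ.filter
      (fun p : Fin n × Fin n => p.1 < p.2 ∧ p.1 ≠ j ∧ p.2 ≠ j), (w p.2 - w p.1) := by
    refine Finset.prod_congr rfl fun p hp => ?_
    simp only [Finset.mem_filter] at hp
    rw [Function.update_of_ne hp.2.2.2, Function.update_of_ne hp.2.2.1]
  rw [hrest]
  rw [mul_right_comm, mul_right_comm _ _ (∏ m ∈ Finset.univ.erase j, w m)]
  congr 1
  rw [← Finset.prod_mul_distrib, ← Finset.prod_mul_distrib]
  refine Finset.prod_congr rfl fun m hm => ?_
  simp only [Finset.mem_erase] at hm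
  rw [Function.update_of_ne hm.1, Function.update_self]
  split_ifs <;> ring
lemma key {K : Type*} [Field K] {n : ℕ} (w : Fin n → K)
    (h0 : ∀ i, w i ≠ 0) (h1 : ∀ i, w i ≠ 1) (h2 : ∀ i, w i ≠ -1)
    (hinj : Function.Injective w) (h2ne : (2 : K) ≠ 0) :
    ∑ j : Fin n, w j ^ 2 * vandermondeProd (Function.update w j 0) *
        ∏ m ∈ Finset.univ.erase j, (1 - w m * w j)
      = (if Odd n then (∏ j, w j ^ 2) * vandermondeProd w
         else ((∏ j, w j ^ 2) - ∏ j, w j) * vandermondeProd w) := by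
  classical
  set P : K := ∏ j, w j with hPdef
  set Δ : K := vandermondeProd w with hΔdef
  set D : Fin n → K := fun j => ∏ m ∈ Finset.univ.erase j, (w m - w j) with hDdef
  set B : Fin n → K := fun j => ∏ m ∈ Finset.univ.erase j, (1 - w m * w j) with hBdef
  have hsub : ∀ {i m : Fin n}, i ≠ m → w i - w m ≠ 0 := fun h =>
    sub_ne_zero.mpr (fun he => h (hinj he))
  have hD0 : ∀ j, D j ≠ 0 := by
    intro j
    refine Finset.prod_ne_zero_iff.mpr fun m hm => ?_
    exact hsub (Finset.mem_erase.mp hm).1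
  set T : Fin n → K := fun j => P * w j * B j * (D j)⁻¹ with hTdef
  -- each term equals Δ * T j
  have hterm : ∀ j : Fin n, w j ^ 2 * vandermondeProd (Function.update w j 0) *
      ∏ m ∈ Finset.univ.erase j, (1 - w m * w j) = Δ * T j := by
    intro j
    have hV := lemV w j
    have hupd : vandermondeProd (Function.update w j 0)
        = Δ * (∏ m ∈ Finset.univ.erase j, w m) * (D j)⁻¹ := by
      rw [eq_mul_inv_iff_mul_eq₀ (hD0 j)]
      exact hV
    have hP : P = w j * ∏ m ∈ Finset.univ.erase j, w m :=
      (Finset.mul_prod_erase Finset.univ w (Finset.mem_univ j)).symm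
    rw [hupd, hTdef]
    show _ = Δ * (P * w j * B j * (D j)⁻¹)
    rw [hP, hBdef]
    ring
  rw [Finset.sum_congr rfl (fun j _ => hterm j), ← Finset.mul_sum]
  -- Lagrange setup
  set v : Fin n ⊕ Bool → K := Sum.elim w (fun b => if b then 1 else -1) with hvdef
  have hv1 : v (Sum.inr true) = 1 := rfl
  have hvm1 : v (Sum.inr false) = -1 := rfl
  have hvl : ∀ i, v (Sum.inl i) = w i := fun _ => rfl
  have hne11 : (1 : K) ≠ -1 := fun hh => h2ne (by linear_combination hh)
  have h1' : ∀ i, w i - 1 ≠ 0 := fun i => sub_ne_zero.mpr (h1 i)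
  have h2' : ∀ i, w i + 1 ≠ 0 := fun i => by
    intro h; exact h2 i (by linear_combination h)
  have hone : ∀ i, (1 : K) - w i ≠ 0 := fun i => sub_ne_zero.mpr (fun h => h1 i h.symm)
  have hvinj : Function.Injective v := by
    rintro (i | b) (i' | b') h
    · exact congrArg Sum.inl (hinj h)
    · exfalso; cases b'
      · rw [hvl, hvm1] at h; exact h2 i h
      · rw [hvl, hv1] at h; exact h1 i h
    · exfalso; cases b
      · rw [hvl, hvm1] at h; exact h2 i' h.symm
      · rw [hvl, hv1] at h; exact h1 i' h.symm
    · cases b <;> cases b'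
      · rfl
      · rw [hvm1, hv1] at h; exact absurd h (Ne.symm hne11)
      · rw [hv1, hvm1] at h; exact absurd h hne11
      · rfl
  have hcard : (Finset.univ : Finset (Fin n ⊕ Bool)).card = n + 2 := by
    simp [Finset.card_univ]
  obtain ⟨hqdeg, hqcoeff⟩ := aux_deg_coeff (Finset.univ : Finset (Fin n)) w
  rw [Finset.card_univ, Fintype.card_fin] at hqdeg hqcoeff
  set g : K[X] := C P * (X * ∏ m : Fin n, (1 - C (w m) * X)) with hgdef
  have hgd : g.degree < ((Finset.univ : Finset (Fin n ⊕ Bool)).card : WithBot ℕ) := by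
    rw [hcard]
    have hle : g.degree ≤ ((n + 1 : ℕ) : WithBot ℕ) := by
      calc g.degree ≤ (C P).degree + (X * ∏ m : Fin n, (1 - C (w m) * X)).degree :=
            degree_mul_le _ _
        _ ≤ 0 + ((X : K[X]).degree + (∏ m : Fin n, (1 - C (w m) * X)).degree) :=
            add_le_add degree_C_le (degree_mul_le _ _)
        _ ≤ 0 + (1 + (n : WithBot ℕ)) := add_le_add le_rfl (add_le_add degree_X_le hqdeg)
        _ = ((n + 1 : ℕ) : WithBot ℕ) := by push_cast; ring
    exact lt_of_le_of_lt hle (by exact_mod_cast Nat.lt_succ_self (n + 1))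
  have Lag := coeff_interp Finset.univ v hvinj.injOn g hgd
  rw [hcard] at Lag
  have hgeval : ∀ x : K, eval x g = P * x * ∏ m : Fin n, (1 - w m * x) := by
    intro x
    simp [hgdef, eval_prod, mul_assoc]
  have hgcoeff : g.coeff (n + 2 - 1) = P * ((-1) ^ n * P) := by
    show g.coeff (n + 1) = _
    rw [hgdef, coeff_C_mul, coeff_X_mul, hqcoeff, prod_neg', Finset.card_univ, Fintype.card_fin]
  -- nodal weights
  have hnwl : ∀ j : Fin n, Lagrange.nodalWeight Finset.univ v (Sum.inl j)
      = (∏ m ∈ Finset.univ.erase j, (w j - w m)⁻¹) * ((w j - 1)⁻¹ * (w j + 1)⁻¹) := by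
    intro j
    rw [Lagrange.nodalWeight, prod_erase_univ', Fintype.prod_sum_type]
    congr 1
    · rw [prod_erase_univ']
      refine Finset.prod_congr rfl fun m _ => ?_
      simp [hvdef]
    · rw [Fintype.prod_bool]
      simp [hvdef, sub_neg_eq_add]
  have hnwt : Lagrange.nodalWeight Finset.univ v (Sum.inr true)
      = (∏ m : Fin n, (1 - w m)⁻¹) * 2⁻¹ := by
    rw [Lagrange.nodalWeight, prod_erase_univ', Fintype.prod_sum_type, Fintype.prod_bool]
    show (∏ m : Fin n, ((1:K) - w m)⁻¹) * (1 * (1 - -1)⁻¹) = _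
    norm_num
  have hnwf : Lagrange.nodalWeight Finset.univ v (Sum.inr false)
      = (∏ m : Fin n, (-1 - w m)⁻¹) * (-2)⁻¹ := by
    rw [Lagrange.nodalWeight, prod_erase_univ', Fintype.prod_sum_type, Fintype.prod_bool]
    show (∏ m : Fin n, ((-1:K) - w m)⁻¹) * ((-1 - 1)⁻¹ * 1) = _
    norm_num
  rw [Fintype.sum_sum_type, Fintype.sum_bool, hgcoeff] at Lag
  -- compute the three pieces
  have hEj : ∀ j : Fin n, eval (v (Sum.inl j)) g * Lagrange.nodalWeight Finset.univ v (Sum.inl j)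
      = (-1) ^ n * T j := by
    intro j
    have hvl : v (Sum.inl j) = w j := rfl
    rw [hvl, hgeval, hnwl]
    have hBsplit : ∏ m : Fin n, (1 - w m * w j) = (1 - w j * w j) * B j :=
      (Finset.mul_prod_erase Finset.univ (fun m => 1 - w m * w j) (Finset.mem_univ j)).symm
    have hDrw : ∏ m ∈ Finset.univ.erase j, (w j - w m)⁻¹ = (-1) ^ (n - 1) * (D j)⁻¹ := by
      have h25 : ∏ m ∈ Finset.univ.erase j, (w j - w m)
          = (-1) ^ (n - 1) * D j := by
        calc ∏ m ∈ Finset.univ.erase j, (w j - w m)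
            = ∏ m ∈ Finset.univ.erase j, -(w m - w j) := by
              refine Finset.prod_congr rfl fun m _ => (neg_sub _ _).symm
          _ = (-1) ^ (n - 1) * D j := by
              rw [prod_neg', Finset.card_erase_of_mem (Finset.mem_univ j),
                Finset.card_univ, Fintype.card_fin]
      rw [Finset.prod_inv_distrib, h25, mul_inv, ← inv_pow, inv_neg, inv_one]
    rw [hBsplit, hDrw, hTdef]
    show _ = (-1) ^ n * (P * w j * B j * (D j)⁻¹)
    have hfac : (1 - w j * w j) * ((w j - 1)⁻¹ * (w j + 1)⁻¹) = -1 := by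
      rw [← mul_inv, show (1 - w j * w j) = -((w j - 1) * (w j + 1)) from by ring, neg_mul,
        mul_inv_cancel₀ (mul_ne_zero (h1' j) (h2' j))]
    have hpow : (-1 : K) * (-1) ^ (n - 1) = (-1) ^ n := by
      obtain ⟨k, hk⟩ : ∃ k, n = k + 1 := ⟨n - 1, (Nat.succ_pred_eq_of_pos j.pos).symm⟩
      rw [hk, Nat.add_sub_cancel, pow_succ, mul_comm]
    calc P * w j * ((1 - w j * w j) * B j) *
          ((-1) ^ (n - 1) * (D j)⁻¹ * ((w j - 1)⁻¹ * (w j + 1)⁻¹))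
        = (P * w j * B j * (D j)⁻¹) * (-1) ^ (n - 1) *
          ((1 - w j * w j) * ((w j - 1)⁻¹ * (w j + 1)⁻¹)) := by ring
      _ = (P * w j * B j * (D j)⁻¹) * ((-1) * (-1) ^ (n - 1)) := by rw [hfac]; ring
      _ = (-1) ^ n * (P * w j * B j * (D j)⁻¹) := by rw [hpow]; ring
  have hEt : eval (v (Sum.inr true)) g * Lagrange.nodalWeight Finset.univ v (Sum.inr true)
      = P * 2⁻¹ := by
    rw [hv1, hgeval, hnwt, Finset.prod_inv_distrib]
    rw [show ∏ m : Fin n, ((1:K) - w m * 1) = ∏ m : Fin n, (1 - w m) from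
      Finset.prod_congr rfl fun m _ => by ring]
    have hQ : ∏ m : Fin n, ((1 : K) - w m) ≠ 0 := Finset.prod_ne_zero_iff.mpr fun m _ => hone m
    calc (P * 1 * ∏ m : Fin n, (1 - w m)) * ((∏ m : Fin n, (1 - w m))⁻¹ * 2⁻¹)
        = P * 2⁻¹ * ((∏ m : Fin n, (1 - w m)) * (∏ m : Fin n, (1 - w m))⁻¹) := by ring
      _ = P * 2⁻¹ := by rw [mul_inv_cancel₀ hQ, mul_one]
  have hEf : eval (v (Sum.inr false)) g * Lagrange.nodalWeight Finset.univ v (Sum.inr false)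
      = (-1) ^ n * (P * 2⁻¹) := by
    rw [hvm1, hgeval, hnwf, Finset.prod_inv_distrib]
    rw [show ∏ m : Fin n, ((1:K) - w m * -1) = ∏ m : Fin n, (1 + w m) from
      Finset.prod_congr rfl fun m _ => by ring]
    have hQrw : ∏ m : Fin n, ((-1 : K) - w m) = (-1) ^ n * ∏ m : Fin n, (1 + w m) := by
      calc ∏ m : Fin n, ((-1 : K) - w m) = ∏ m : Fin n, (-(1 + w m)) := by
            refine Finset.prod_congr rfl fun m _ => by ring
        _ = (-1) ^ n * ∏ m : Fin n, (1 + w m) := by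
            rw [prod_neg', Finset.card_univ, Fintype.card_fin]
    have hQ : ∏ m : Fin n, ((1 : K) + w m) ≠ 0 :=
      Finset.prod_ne_zero_iff.mpr fun m _ => by
        intro h; exact h2 m (by linear_combination h)
    rw [hQrw, mul_inv, ← inv_pow, inv_neg, inv_one, inv_neg]
    calc (P * -1 * ∏ m : Fin n, (1 + w m)) *
          ((-1 : K) ^ n * (∏ m : Fin n, (1 + w m))⁻¹ * -2⁻¹)
        = (-1) ^ n * (P * 2⁻¹) *
          ((∏ m : Fin n, (1 + w m)) * (∏ m : Fin n, (1 + w m))⁻¹) := by ring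
      _ = (-1) ^ n * (P * 2⁻¹) := by rw [mul_inv_cancel₀ hQ, mul_one]
  rw [Finset.sum_congr rfl (fun j _ => hEj j), hEt, hEf, ← Finset.mul_sum] at Lag
  set S : K := ∑ j, T j with hSdef
  have hε : ((-1 : K) ^ n) * ((-1 : K) ^ n) = 1 := by
    rw [← mul_pow]; norm_num
  have hinv2 : (2 : K) * 2⁻¹ = 1 := mul_inv_cancel₀ h2ne
  have hprodsq : (∏ j, w j ^ 2) = P ^ 2 := by
    rw [hPdef, ← Finset.prod_pow]
  rw [hprodsq]
  by_cases hodd : Odd n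
  · rw [if_pos hodd]
    have hε' : (-1 : K) ^ n = -1 := Odd.neg_one_pow hodd
    rw [hε'] at Lag
    have hS : S = P ^ 2 := by linear_combination Lag
    rw [hS]; ring
  · rw [if_neg hodd]
    have hε' : (-1 : K) ^ n = 1 := Even.neg_one_pow (Nat.not_odd_iff_even.mp hodd)
    rw [hε'] at Lag
    have hS : S = P ^ 2 - P := by linear_combination -Lag - P * hinv2
    rw [hS]; ring
lemma map_vdm {R S F : Type*} [CommRing R] [CommRing S] [FunLike F R S] [RingHomClass F R S]
    (f : F) {n : ℕ} (v : Fin n → R) :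
    f (vandermondeProd v) = vandermondeProd (fun i => f (v i)) := by
  simp [vandermondeProd, map_prod, map_sub]

theorem stmt2 {R : Type*} [CommRing R] (n : ℕ) (w : Fin n → R) :
    ∑ j : Fin n, w j ^ 2 * vandermondeProd (Function.update w j 0) *
        ∏ m ∈ Finset.univ.erase j, (1 - w m * w j)
      = (if Odd n then (∏ j, w j ^ 2) * vandermondeProd w
         else ((∏ j, w j ^ 2) - ∏ j, w j) * vandermondeProd w) := by
  classical
  let A := MvPolynomial (Fin n) ℤ
  let K := FractionRing A
  have hinjK : Function.Injective (algebraMap A K) := IsFractionRing.injective A K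
  set W : Fin n → K := fun i => algebraMap A K (MvPolynomial.X i) with hWdef
  have hne : ∀ (f : Fin n → ℤ) (p q : A),
      MvPolynomial.eval f p ≠ MvPolynomial.eval f q → p ≠ q :=
    fun f p q h hpq => h (by rw [hpq])
  have hX1 : ∀ i, (MvPolynomial.X i : A) ≠ 1 :=
    fun i => hne (fun _ => 0) _ _ (by simp)
  have hXm1 : ∀ i, (MvPolynomial.X i : A) ≠ -1 :=
    fun i => hne (fun _ => 0) _ _ (by simp)
  have h2A : (2 : A) ≠ 0 := hne (fun _ => 0) _ _ (by norm_num [map_ofNat])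
  have h0 : ∀ i, W i ≠ 0 :=
    fun i h => MvPolynomial.X_ne_zero i (hinjK (by rw [map_zero]; exact h))
  have h1 : ∀ i, W i ≠ 1 :=
    fun i h => hX1 i (hinjK (by rw [map_one]; exact h))
  have h2 : ∀ i, W i ≠ -1 :=
    fun i h => hXm1 i (hinjK (by rw [map_neg, map_one]; exact h))
  have hWinj : Function.Injective W :=
    fun i j h => MvPolynomial.X_injective (hinjK h)
  have h2ne : (2 : K) ≠ 0 := by
    intro h
    apply h2A
    apply hinjK
    rw [map_ofNat, map_zero]
    exact_mod_cast h
  have hkey := key W h0 h1 h2 hWinj h2ne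
  have hupdK : ∀ j : Fin n,
      (fun i => algebraMap A K (Function.update MvPolynomial.X j 0 i))
        = Function.update W j 0 := by
    intro j
    funext i
    by_cases h : i = j
    · subst h; simp
    · simp [Function.update_of_ne h, hWdef]
  have hA : ∑ j : Fin n, (MvPolynomial.X j : A) ^ 2 *
        vandermondeProd (Function.update MvPolynomial.X j 0) *
        ∏ m ∈ Finset.univ.erase j, (1 - MvPolynomial.X m * MvPolynomial.X j)
      = (if Odd n then (∏ j, (MvPolynomial.X j : A) ^ 2) * vandermondeProd MvPolynomial.X
         else ((∏ j, (MvPolynomial.X j : A) ^ 2) - ∏ j, (MvPolynomial.X j : A)) *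
           vandermondeProd MvPolynomial.X) := by
    apply hinjK
    rw [map_sum]
    simp only [map_mul, map_pow, map_prod, map_sub, map_one, map_vdm, hupdK,
      apply_ite (algebraMap A K)]
    exact hkey
  have hfin := congrArg (MvPolynomial.aeval w) hA
  have hupdR : ∀ j : Fin n,
      (fun i => MvPolynomial.aeval w (Function.update (MvPolynomial.X : Fin n → A) j 0 i))
        = Function.update w j 0 := by
    intro j
    funext i
    by_cases h : i = j
    · subst h; simp
    · simp [Function.update_of_ne h]
  rw [map_sum] at hfin
  simp only [map_mul, map_pow, map_prod, map_sub, map_one, map_vdm, hupdR,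
    apply_ite (MvPolynomial.aeval w), MvPolynomial.aeval_X] at hfin
  exact hfin
end

section
/- For $n\ge 2$ and variables $w_1,\dots,w_n$, the polynomial identity $\sum_{C\sqcup D=[n]} (-1)^{S(C,D)} \prod_{\alpha\in C} w_\alpha^{n-1}\, \Delta(C)\,\Delta(D) \prod_{\alpha\in C,\,\beta\in D}(1-w_\alpha w_\beta) = 0$ holds, where the sum is over all ordered partitions of $\{1,\dots,n\}$ into disjoint sets $C$ and $D$. -/
open Finset

/-- `Δ(A) = ∏_{i<j, i,j ∈ A} (w j - w i)`. -/
def deltaSet {R : Type*} [CommRing R] {n : ℕ} (w : Fin n → R) (A : Finset (Fin n)) : R :=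
  ∏ p ∈ (A ×ˢ A).filter (fun p => p.1 < p.2), (w p.2 - w p.1)

/-- `E(A,B) = ∏_{a ∈ A, b ∈ B} (1 - w a * w b)`. -/
def eAB {R : Type*} [CommRing R] {n : ℕ} (w : Fin n → R) (A B : Finset (Fin n)) : R :=
  ∏ a ∈ A, ∏ b ∈ B, (1 - w a * w b)

/-- `W(A,B) = #{(a,b) : a ∈ A, b ∈ B, a > b}`. -/
def wAB {n : ℕ} (A B : Finset (Fin n)) : ℕ :=
  ((A ×ˢ B).filter (fun p => p.2 < p.1)).card

/-- `S(A,B) = |A||B| + |A|(|A|+1)/2 + W(A,B)`. -/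
def sAB {n : ℕ} (A B : Finset (Fin n)) : ℕ :=
  A.card * B.card + A.card * (A.card + 1) / 2 + wAB A B

lemma my_prod_filter_product {M ι : Type*} [CommMonoid M] [DecidableEq ι]
    (s t : Finset ι) (P : ι → ι → Prop) [∀ i j, Decidable (P i j)] (f : ι → ι → M) :
    ∏ p ∈ (s ×ˢ t).filter (fun p => P p.1 p.2), f p.1 p.2
      = ∏ i ∈ s, ∏ j ∈ t.filter (fun j => P i j), f i j := by
  rw [Finset.prod_filter, Finset.prod_product]
  exact Finset.prod_congr rfl fun i _ => (Finset.prod_filter _ _).symm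

section Field
variable {K : Type*} [Field K] {n : ℕ}

private lemma aux1 {a b : K} (ha : a ≠ 0) (hb : b ≠ 0) :
    b⁻¹ - a⁻¹ = -1 * ((a * b)⁻¹ * (b - a)) := by
  calc b⁻¹ - a⁻¹ = a * a⁻¹ * b⁻¹ - b * b⁻¹ * a⁻¹ := by
        rw [mul_inv_cancel₀ ha, mul_inv_cancel₀ hb]; ring
    _ = -1 * ((a * b)⁻¹ * (b - a)) := by rw [mul_inv]; ring

private lemma aux2 {a b : K} (hb : b ≠ 0) : b⁻¹ - a = b⁻¹ * (1 - a * b) := by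
  calc b⁻¹ - a = b⁻¹ - a * (b * b⁻¹) := by rw [mul_inv_cancel₀ hb, mul_one]
    _ = b⁻¹ * (1 - a * b) := by ring

private lemma aux3 {a b : K} (hb : b ≠ 0) : a - b⁻¹ = -1 * (b⁻¹ * (1 - a * b)) := by
  calc a - b⁻¹ = a * (b * b⁻¹) - b⁻¹ := by rw [mul_inv_cancel₀ hb, mul_one]
    _ = -1 * (b⁻¹ * (1 - a * b)) := by ring

lemma detC (hn : 0 < n) (w : Fin n → K) (hw : ∀ i, w i ≠ 0) (C : Finset (Fin n)) :
    Matrix.det (Matrix.of fun i k : Fin n =>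
        if i ∈ C then w i ^ (n - 1 + (k : ℕ)) else -(w i ^ (n - 1 - (k : ℕ))))
      = (-1 : K) ^ (Cᶜ.card + ((Cᶜ ×ˢ Cᶜ).filter (fun p => p.1 < p.2)).card + wAB C Cᶜ)
          * (∏ x ∈ C, w x ^ (n - 1)) * deltaSet w C * deltaSet w Cᶜ * eAB w C Cᶜ := by
  classical
  set u : Fin n → K := fun i => if i ∈ C then w i else (w i)⁻¹ with hu
  set cc : Fin n → K := fun i => if i ∈ C then w i ^ (n - 1) else -(w i ^ (n - 1)) with hcc
  have hentry : (Matrix.of fun i k : Fin n =>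
      if i ∈ C then w i ^ (n - 1 + (k : ℕ)) else -(w i ^ (n - 1 - (k : ℕ))))
      = Matrix.of (fun i k => cc i * Matrix.vandermonde u i k) := by
    ext i k
    have hk : (k : ℕ) ≤ n - 1 := by have := k.isLt; omega
    by_cases hi : i ∈ C
    · simp [hi, hu, hcc, Matrix.vandermonde_apply, pow_add]
    · simp only [hi, if_false, hu, hcc, Matrix.vandermonde_apply, Matrix.of_apply]
      have h1 : w i ^ (n - 1 - (k : ℕ)) * w i ^ (k : ℕ) = w i ^ (n - 1) :=
        pow_sub_mul_pow _ hk
      have h2 : w i ^ (n - 1) * ((w i)⁻¹) ^ (k : ℕ) = w i ^ (n - 1 - (k : ℕ)) := by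
        rw [inv_pow, ← h1, mul_inv_cancel_right₀ (pow_ne_zero _ (hw i))]
      rw [← h2]; ring
  rw [hentry, Matrix.det_mul_column, Matrix.det_vandermonde]
  -- convert nested product to pair product
  have hv : ∏ p ∈ (univ ×ˢ univ).filter (fun p : Fin n × Fin n => p.1 < p.2), (u p.2 - u p.1)
      = ∏ i : Fin n, ∏ j ∈ Ioi i, (u j - u i) := by
    rw [my_prod_filter_product univ univ (· < ·) (fun i j => u j - u i)]
    exact Finset.prod_congr rfl fun i _ =>
      Finset.prod_congr (by ext j; simp) fun _ _ => rfl
  rw [← hv]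
  -- split the pair set
  have hsplit : (univ ×ˢ univ).filter (fun p : Fin n × Fin n => p.1 < p.2)
      = (((C ×ˢ C).filter (fun p => p.1 < p.2)) ∪ ((Cᶜ ×ˢ Cᶜ).filter (fun p => p.1 < p.2)))
        ∪ (((C ×ˢ Cᶜ).filter (fun p => p.1 < p.2)) ∪ ((Cᶜ ×ˢ C).filter (fun p => p.1 < p.2))) := by
    ext p
    simp only [mem_filter, mem_union, mem_product, mem_univ, mem_compl, true_and]
    by_cases h1 : p.1 ∈ C <;> by_cases h2 : p.2 ∈ C <;> tauto
  have d12 : Disjoint ((C ×ˢ C).filter (fun p : Fin n × Fin n => p.1 < p.2))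
      ((Cᶜ ×ˢ Cᶜ).filter (fun p => p.1 < p.2)) := by
    rw [Finset.disjoint_left]; intro p hp hq
    simp only [mem_filter, mem_product, mem_compl] at hp hq
    exact hq.1.1 hp.1.1
  have d34 : Disjoint ((C ×ˢ Cᶜ).filter (fun p : Fin n × Fin n => p.1 < p.2))
      ((Cᶜ ×ˢ C).filter (fun p => p.1 < p.2)) := by
    rw [Finset.disjoint_left]; intro p hp hq
    simp only [mem_filter, mem_product, mem_compl] at hp hq
    exact hq.1.1 hp.1.1
  have dbig : Disjoint
      (((C ×ˢ C).filter (fun p : Fin n × Fin n => p.1 < p.2)) ∪ ((Cᶜ ×ˢ Cᶜ).filter (fun p => p.1 < p.2)))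
      (((C ×ˢ Cᶜ).filter (fun p => p.1 < p.2)) ∪ ((Cᶜ ×ˢ C).filter (fun p => p.1 < p.2))) := by
    rw [Finset.disjoint_left]; intro p hp hq
    simp only [mem_union, mem_filter, mem_product, mem_compl] at hp hq
    tauto
  rw [hsplit, Finset.prod_union dbig, Finset.prod_union d12, Finset.prod_union d34]
  -- individual pieces
  have P1 : ∏ p ∈ (C ×ˢ C).filter (fun p : Fin n × Fin n => p.1 < p.2), (u p.2 - u p.1)
      = deltaSet w C := by
    rw [deltaSet]
    refine Finset.prod_congr rfl fun p hp => ?_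
    simp only [mem_filter, mem_product] at hp
    simp [hu, hp.1.1, hp.1.2]
  have P2 : ∏ p ∈ (Cᶜ ×ˢ Cᶜ).filter (fun p : Fin n × Fin n => p.1 < p.2), (u p.2 - u p.1)
      = (-1 : K) ^ ((Cᶜ ×ˢ Cᶜ).filter (fun p : Fin n × Fin n => p.1 < p.2)).card
        * ((∏ p ∈ (Cᶜ ×ˢ Cᶜ).filter (fun p : Fin n × Fin n => p.1 < p.2), (w p.1 * w p.2))⁻¹
          * deltaSet w Cᶜ) := by
    have step : ∀ p ∈ (Cᶜ ×ˢ Cᶜ).filter (fun p : Fin n × Fin n => p.1 < p.2),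
        u p.2 - u p.1 = (-1) * ((w p.1 * w p.2)⁻¹ * (w p.2 - w p.1)) := by
      intro p hp
      simp only [mem_filter, mem_product, mem_compl] at hp
      simp only [hu, if_neg hp.1.1, if_neg hp.1.2]
      exact aux1 (hw p.1) (hw p.2)
    rw [Finset.prod_congr rfl step, Finset.prod_mul_distrib, Finset.prod_mul_distrib,
      Finset.prod_const, Finset.prod_inv_distrib, deltaSet]
  have P3 : ∏ p ∈ (C ×ˢ Cᶜ).filter (fun p : Fin n × Fin n => p.1 < p.2), (u p.2 - u p.1)
      = (∏ p ∈ (C ×ˢ Cᶜ).filter (fun p : Fin n × Fin n => p.1 < p.2), w p.2)⁻¹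
        * ∏ p ∈ (C ×ˢ Cᶜ).filter (fun p : Fin n × Fin n => p.1 < p.2), (1 - w p.1 * w p.2) := by
    have step : ∀ p ∈ (C ×ˢ Cᶜ).filter (fun p : Fin n × Fin n => p.1 < p.2),
        u p.2 - u p.1 = (w p.2)⁻¹ * (1 - w p.1 * w p.2) := by
      intro p hp
      simp only [mem_filter, mem_product, mem_compl] at hp
      simp only [hu, if_pos hp.1.1, if_neg hp.1.2]
      exact aux2 (hw p.2)
    rw [Finset.prod_congr rfl step, Finset.prod_mul_distrib, Finset.prod_inv_distrib]
  have P4 : ∏ p ∈ (Cᶜ ×ˢ C).filter (fun p : Fin n × Fin n => p.1 < p.2), (u p.2 - u p.1)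
      = (-1 : K) ^ wAB C Cᶜ
        * ((∏ p ∈ (C ×ˢ Cᶜ).filter (fun p : Fin n × Fin n => p.2 < p.1), w p.2)⁻¹
          * ∏ p ∈ (C ×ˢ Cᶜ).filter (fun p : Fin n × Fin n => p.2 < p.1), (1 - w p.1 * w p.2)) := by
    have hswap : ∏ p ∈ (Cᶜ ×ˢ C).filter (fun p : Fin n × Fin n => p.1 < p.2), (u p.2 - u p.1)
        = ∏ p ∈ (C ×ˢ Cᶜ).filter (fun p : Fin n × Fin n => p.2 < p.1), (u p.1 - u p.2) := by
      refine Finset.prod_nbij' Prod.swap Prod.swap ?_ ?_ ?_ ?_ ?_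
      · intro p hp
        simp only [mem_filter, mem_product, mem_compl, Prod.fst_swap, Prod.snd_swap] at hp ⊢
        exact ⟨⟨hp.1.2, hp.1.1⟩, hp.2⟩
      · intro p hp
        simp only [mem_filter, mem_product, mem_compl, Prod.fst_swap, Prod.snd_swap] at hp ⊢
        exact ⟨⟨hp.1.2, hp.1.1⟩, hp.2⟩
      · intro p _; exact Prod.swap_swap p
      · intro p _; exact Prod.swap_swap p
      · intro p _; simp
    rw [hswap]
    have step : ∀ p ∈ (C ×ˢ Cᶜ).filter (fun p : Fin n × Fin n => p.2 < p.1),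
        u p.1 - u p.2 = (-1) * ((w p.2)⁻¹ * (1 - w p.1 * w p.2)) := by
      intro p hp
      simp only [mem_filter, mem_product, mem_compl] at hp
      simp only [hu, if_pos hp.1.1, if_neg hp.1.2]
      exact aux3 (hw p.2)
    rw [Finset.prod_congr rfl step, Finset.prod_mul_distrib, Finset.prod_mul_distrib,
      Finset.prod_const, Finset.prod_inv_distrib, wAB]
  -- scalars product
  have hprodc : (∏ i, cc i)
      = (-1 : K) ^ Cᶜ.card * ((∏ x ∈ C, w x ^ (n - 1)) * ∏ x ∈ Cᶜ, w x ^ (n - 1)) := by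
    rw [← Finset.prod_mul_prod_compl C cc]
    have h1 : ∏ x ∈ C, cc x = ∏ x ∈ C, w x ^ (n - 1) :=
      Finset.prod_congr rfl fun x hx => by simp [hcc, hx]
    have h2 : ∏ x ∈ Cᶜ, cc x = (-1 : K) ^ Cᶜ.card * ∏ x ∈ Cᶜ, w x ^ (n - 1) := by
      calc ∏ x ∈ Cᶜ, cc x = ∏ x ∈ Cᶜ, (-1) * w x ^ (n - 1) := by
            refine Finset.prod_congr rfl fun x hx => ?_
            have hx' : x ∉ C := Finset.mem_compl.mp hx
            simp [hcc, hx']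
        _ = (-1 : K) ^ Cᶜ.card * ∏ x ∈ Cᶜ, w x ^ (n - 1) := by
            rw [Finset.prod_mul_distrib, Finset.prod_const]
    rw [h1, h2]; ring
  -- eAB decomposition
  have hCD : C ×ˢ Cᶜ = ((C ×ˢ Cᶜ).filter (fun p : Fin n × Fin n => p.1 < p.2))
      ∪ ((C ×ˢ Cᶜ).filter (fun p : Fin n × Fin n => p.2 < p.1)) := by
    ext p
    simp only [mem_union, mem_filter, mem_product, mem_compl]
    constructor
    · intro h
      have hne : p.1 ≠ p.2 := fun he => h.2 (he ▸ h.1)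
      rcases lt_or_gt_of_ne hne with hlt | hgt
      · exact Or.inl ⟨h, hlt⟩
      · exact Or.inr ⟨h, hgt⟩
    · rintro (⟨h, _⟩ | ⟨h, _⟩) <;> exact h
  have hd34' : Disjoint ((C ×ˢ Cᶜ).filter (fun p : Fin n × Fin n => p.1 < p.2))
      ((C ×ˢ Cᶜ).filter (fun p : Fin n × Fin n => p.2 < p.1)) := by
    rw [Finset.disjoint_left]; intro p hp hq
    simp only [mem_filter] at hp hq
    exact lt_asymm hp.2 hq.2
  have heAB : (∏ p ∈ (C ×ˢ Cᶜ).filter (fun p : Fin n × Fin n => p.1 < p.2), (1 - w p.1 * w p.2))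
      * (∏ p ∈ (C ×ˢ Cᶜ).filter (fun p : Fin n × Fin n => p.2 < p.1), (1 - w p.1 * w p.2))
      = eAB w C Cᶜ := by
    rw [← Finset.prod_union hd34', ← hCD, eAB]
    exact Finset.prod_product C Cᶜ (fun p => 1 - w p.1 * w p.2)
  -- counting
  have hc3 : (∏ p ∈ (C ×ˢ Cᶜ).filter (fun p : Fin n × Fin n => p.1 < p.2), w p.2)
      * (∏ p ∈ (C ×ˢ Cᶜ).filter (fun p : Fin n × Fin n => p.2 < p.1), w p.2)
      = ∏ x ∈ Cᶜ, w x ^ C.card := by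
    rw [← Finset.prod_union hd34', ← hCD, Finset.prod_product, Finset.prod_comm]
    exact Finset.prod_congr rfl fun b _ => by simp
  have hswap2 : ∏ p ∈ (Cᶜ ×ˢ Cᶜ).filter (fun p : Fin n × Fin n => p.1 < p.2), w p.2
      = ∏ p ∈ (Cᶜ ×ˢ Cᶜ).filter (fun p : Fin n × Fin n => p.2 < p.1), w p.1 := by
    refine Finset.prod_nbij' Prod.swap Prod.swap ?_ ?_ ?_ ?_ ?_
    · intro p hp
      simp only [mem_filter, mem_product, mem_compl, Prod.fst_swap, Prod.snd_swap] at hp ⊢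
      exact ⟨⟨hp.1.2, hp.1.1⟩, hp.2⟩
    · intro p hp
      simp only [mem_filter, mem_product, mem_compl, Prod.fst_swap, Prod.snd_swap] at hp ⊢
      exact ⟨⟨hp.1.2, hp.1.1⟩, hp.2⟩
    · intro p _; exact Prod.swap_swap p
    · intro p _; exact Prod.swap_swap p
    · intro p _; simp
  have hd2' : Disjoint ((Cᶜ ×ˢ Cᶜ).filter (fun p : Fin n × Fin n => p.1 < p.2))
      ((Cᶜ ×ˢ Cᶜ).filter (fun p : Fin n × Fin n => p.2 < p.1)) := by
    rw [Finset.disjoint_left]; intro p hp hq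
    simp only [mem_filter] at hp hq
    exact lt_asymm hp.2 hq.2
  have hofd : ((Cᶜ ×ˢ Cᶜ).filter (fun p : Fin n × Fin n => p.1 < p.2))
      ∪ ((Cᶜ ×ˢ Cᶜ).filter (fun p : Fin n × Fin n => p.2 < p.1)) = Cᶜ.offDiag := by
    ext p
    simp only [mem_union, mem_filter, mem_product, Finset.mem_offDiag]
    constructor
    · rintro (⟨⟨h1, h2⟩, h⟩ | ⟨⟨h1, h2⟩, h⟩)
      · exact ⟨h1, h2, ne_of_lt h⟩
      · exact ⟨h1, h2, (ne_of_lt h).symm⟩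
    · rintro ⟨h1, h2, hne⟩
      rcases lt_or_gt_of_ne hne with hlt | hgt
      · exact Or.inl ⟨⟨h1, h2⟩, hlt⟩
      · exact Or.inr ⟨⟨h1, h2⟩, hgt⟩
  have hc2 : ∏ p ∈ (Cᶜ ×ˢ Cᶜ).filter (fun p : Fin n × Fin n => p.1 < p.2), (w p.1 * w p.2)
      = ∏ x ∈ Cᶜ, w x ^ (Cᶜ.card - 1) := by
    rw [Finset.prod_mul_distrib, hswap2, ← Finset.prod_union hd2', hofd]
    have hod : Cᶜ.offDiag = (Cᶜ ×ˢ Cᶜ).filter (fun p : Fin n × Fin n => p.1 ≠ p.2) := by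
      ext p; simp only [Finset.mem_offDiag, mem_filter, mem_product]; tauto
    rw [hod, my_prod_filter_product Cᶜ Cᶜ (fun i j => i ≠ j) (fun i _ => w i)]
    refine Finset.prod_congr rfl fun i hi => ?_
    rw [Finset.prod_const]
    have he : Cᶜ.filter (fun j => i ≠ j) = Cᶜ.erase i := by
      ext j; simp only [mem_filter, Finset.mem_erase]; tauto
    rw [he, Finset.card_erase_of_mem hi]
  have hcard : C.card + Cᶜ.card = n := by
    rw [Finset.card_add_card_compl, Fintype.card_fin]
  have hcount : (∏ p ∈ (Cᶜ ×ˢ Cᶜ).filter (fun p : Fin n × Fin n => p.1 < p.2), (w p.1 * w p.2))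
      * ((∏ p ∈ (C ×ˢ Cᶜ).filter (fun p : Fin n × Fin n => p.1 < p.2), w p.2)
        * (∏ p ∈ (C ×ˢ Cᶜ).filter (fun p : Fin n × Fin n => p.2 < p.1), w p.2))
      = ∏ x ∈ Cᶜ, w x ^ (n - 1) := by
    rw [hc2, hc3, ← Finset.prod_mul_distrib]
    refine Finset.prod_congr rfl fun x hx => ?_
    rw [← pow_add]
    have h2 : 0 < Cᶜ.card := Finset.card_pos.mpr ⟨x, hx⟩
    congr 1
    omega
  have hPD : (∏ x ∈ Cᶜ, w x ^ (n - 1)) ≠ 0 :=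
    Finset.prod_ne_zero_iff.mpr fun x _ => pow_ne_zero _ (hw x)
  have hkey : (∏ x ∈ Cᶜ, w x ^ (n - 1)) *
      ((∏ p ∈ (Cᶜ ×ˢ Cᶜ).filter (fun p : Fin n × Fin n => p.1 < p.2), (w p.1 * w p.2))⁻¹
        * ((∏ p ∈ (C ×ˢ Cᶜ).filter (fun p : Fin n × Fin n => p.1 < p.2), w p.2)⁻¹
          * (∏ p ∈ (C ×ˢ Cᶜ).filter (fun p : Fin n × Fin n => p.2 < p.1), w p.2)⁻¹)) = 1 := by
    rw [← mul_inv, ← mul_inv, hcount, mul_inv_cancel₀ hPD]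
  rw [P1, P2, P3, P4, hprodc, pow_add, pow_add, ← heAB]
  linear_combination ((-1 : K) ^ Cᶜ.card
      * (-1 : K) ^ ((Cᶜ ×ˢ Cᶜ).filter (fun p : Fin n × Fin n => p.1 < p.2)).card
      * (-1 : K) ^ wAB C Cᶜ * (∏ x ∈ C, w x ^ (n - 1)) * deltaSet w C * deltaSet w Cᶜ
      * ((∏ p ∈ (C ×ˢ Cᶜ).filter (fun p : Fin n × Fin n => p.1 < p.2), (1 - w p.1 * w p.2))
        * (∏ p ∈ (C ×ˢ Cᶜ).filter (fun p : Fin n × Fin n => p.2 < p.1), (1 - w p.1 * w p.2)))) * hkey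




lemma my_neg_one_pow_congr {a b : ℕ} (h : Even (a + b)) : (-1 : K) ^ a = (-1 : K) ^ b := by
  rcases Nat.even_or_odd a with ha | ha
  · have hb : Even b := (Nat.even_add.mp h).mp ha
    rw [ha.neg_one_pow, hb.neg_one_pow]
  · have hb : Odd b := Nat.odd_iff.mpr (by
      rcases Nat.even_or_odd b with h' | h'
      · exact absurd ((Nat.even_add.mp h).mpr h') (Nat.not_even_iff_odd.mpr ha)
      · exact Nat.odd_iff.mp h')
    rw [ha.neg_one_pow, hb.neg_one_pow]

theorem lhsSum_field (hn : 0 < n) (w : Fin n → K) (hw : ∀ i, w i ≠ 0) :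
    ∑ C : Finset (Fin n),
      (-1 : K) ^ (sAB C Cᶜ) * (∏ a ∈ C, w a ^ (n - 1)) *
        deltaSet w C * deltaSet w Cᶜ * eAB w C Cᶜ = 0 := by
  classical
  set A : Fin n → Fin n → K := fun i k => w i ^ (n - 1 + (k : ℕ)) with hA
  set B : Fin n → Fin n → K := fun i k => -(w i ^ (n - 1 - (k : ℕ))) with hB
  have hdetsum : ∑ C : Finset (Fin n), Matrix.det (Matrix.of fun i k : Fin n =>
      if i ∈ C then w i ^ (n - 1 + (k : ℕ)) else -(w i ^ (n - 1 - (k : ℕ)))) = 0 := by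
    have hpw : ∀ C : Finset (Fin n), (Matrix.of fun i k : Fin n =>
        if i ∈ C then w i ^ (n - 1 + (k : ℕ)) else -(w i ^ (n - 1 - (k : ℕ))))
        = Matrix.of (C.piecewise A B) := by
      intro C; ext i k
      by_cases hi : i ∈ C
      · simp [Finset.piecewise_eq_of_mem _ _ _ hi, hi, hA]
      · simp [Finset.piecewise_eq_of_notMem _ _ _ hi, hi, hB]
    calc ∑ C : Finset (Fin n), Matrix.det (Matrix.of fun i k : Fin n =>
          if i ∈ C then w i ^ (n - 1 + (k : ℕ)) else -(w i ^ (n - 1 - (k : ℕ))))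
        = ∑ C : Finset (Fin n),
            (Matrix.detRowAlternating (R := K) (n := Fin n)).toMultilinearMap
              (C.piecewise A B) := by
          refine Finset.sum_congr rfl fun C _ => ?_
          rw [hpw C]; rfl
      _ = (Matrix.detRowAlternating (R := K) (n := Fin n)).toMultilinearMap (A + B) :=
          (MultilinearMap.map_add_univ _ A B).symm
      _ = Matrix.det (Matrix.of fun i k : Fin n => A i k + B i k) := rfl
      _ = 0 := by
          rw [← Matrix.det_transpose]
          apply Matrix.det_eq_zero_of_row_eq_zero (⟨0, hn⟩ : Fin n)
          intro j
          simp [Matrix.transpose_apply, hA, hB]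
  have hpar : ∀ C : Finset (Fin n), (-1 : K) ^ (sAB C Cᶜ)
      = (-1 : K) ^ (n * (n + 1) / 2)
        * (-1 : K) ^ (Cᶜ.card + ((Cᶜ ×ˢ Cᶜ).filter (fun p => p.1 < p.2)).card + wAB C Cᶜ) := by
    intro C
    have hcard : C.card + Cᶜ.card = n := by
      rw [Finset.card_add_card_compl, Fintype.card_fin]
    -- 2 * t2 + d = d * d
    have hswapc : ((Cᶜ ×ˢ Cᶜ).filter (fun p : Fin n × Fin n => p.1 < p.2)).card
        = ((Cᶜ ×ˢ Cᶜ).filter (fun p : Fin n × Fin n => p.2 < p.1)).card := by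
      refine Finset.card_nbij' Prod.swap Prod.swap ?_ ?_ ?_ ?_
      · intro p hp
        simp only [Finset.mem_coe, mem_filter, mem_product, Prod.fst_swap, Prod.snd_swap] at hp ⊢
        exact ⟨⟨hp.1.2, hp.1.1⟩, hp.2⟩
      · intro p hp
        simp only [Finset.mem_coe, mem_filter, mem_product, Prod.fst_swap, Prod.snd_swap] at hp ⊢
        exact ⟨⟨hp.1.2, hp.1.1⟩, hp.2⟩
      · intro p _; exact Prod.swap_swap p
      · intro p _; exact Prod.swap_swap p
    have hd2' : Disjoint ((Cᶜ ×ˢ Cᶜ).filter (fun p : Fin n × Fin n => p.1 < p.2))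
        ((Cᶜ ×ˢ Cᶜ).filter (fun p : Fin n × Fin n => p.2 < p.1)) := by
      rw [Finset.disjoint_left]; intro p hp hq
      simp only [mem_filter] at hp hq
      exact lt_asymm hp.2 hq.2
    have hofd : ((Cᶜ ×ˢ Cᶜ).filter (fun p : Fin n × Fin n => p.1 < p.2))
        ∪ ((Cᶜ ×ˢ Cᶜ).filter (fun p : Fin n × Fin n => p.2 < p.1)) = Cᶜ.offDiag := by
      ext p
      simp only [mem_union, mem_filter, mem_product, Finset.mem_offDiag]
      constructor
      · rintro (⟨⟨h1, h2⟩, h⟩ | ⟨⟨h1, h2⟩, h⟩)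
        · exact ⟨h1, h2, ne_of_lt h⟩
        · exact ⟨h1, h2, (ne_of_lt h).symm⟩
      · rintro ⟨h1, h2, hne⟩
        rcases lt_or_gt_of_ne hne with hlt | hgt
        · exact Or.inl ⟨⟨h1, h2⟩, hlt⟩
        · exact Or.inr ⟨⟨h1, h2⟩, hgt⟩
    have hoffcard : Cᶜ.offDiag.card = Cᶜ.card * Cᶜ.card - Cᶜ.card := Finset.offDiag_card _
    have hunioncard := Finset.card_union_of_disjoint hd2'
    rw [hofd] at hunioncard
    have hdd : Cᶜ.card ≤ Cᶜ.card * Cᶜ.card := by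
      rcases Nat.eq_zero_or_pos Cᶜ.card with h | h
      · simp [h]
      · exact Nat.le_mul_of_pos_left _ h
    have ht : 2 * ((Cᶜ ×ˢ Cᶜ).filter (fun p : Fin n × Fin n => p.1 < p.2)).card + Cᶜ.card
        = Cᶜ.card * Cᶜ.card := by omega
    rw [← pow_add]
    apply my_neg_one_pow_congr
    rw [sAB, wAB]
    have e1 : C.card * (C.card + 1) / 2 * 2 = C.card * (C.card + 1) :=
      Nat.div_mul_cancel (Nat.even_mul_succ_self _).two_dvd
    have e2 : n * (n + 1) / 2 * 2 = n * (n + 1) :=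
      Nat.div_mul_cancel (Nat.even_mul_succ_self _).two_dvd
    have key0 : ∀ c d : ℕ, (c + d) * ((c + d) + 1) = c * (c + 1) + (d * d + d) + 2 * (c * d) :=
      fun c d => by ring
    have key := key0 C.card Cᶜ.card
    rw [hcard] at key
    rw [Nat.even_iff]
    omega
  calc ∑ C : Finset (Fin n),
      (-1 : K) ^ (sAB C Cᶜ) * (∏ a ∈ C, w a ^ (n - 1)) *
        deltaSet w C * deltaSet w Cᶜ * eAB w C Cᶜ
      = ∑ C : Finset (Fin n), (-1 : K) ^ (n * (n + 1) / 2)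
          * Matrix.det (Matrix.of fun i k : Fin n =>
            if i ∈ C then w i ^ (n - 1 + (k : ℕ)) else -(w i ^ (n - 1 - (k : ℕ)))) := by
        refine Finset.sum_congr rfl fun C _ => ?_
        rw [hpar C, detC hn w hw C]
        ring
    _ = 0 := by rw [← Finset.mul_sum, hdetsum, mul_zero]

end Field

def lhsSum {R : Type*} [CommRing R] (n : ℕ) (w : Fin n → R) : R :=
  ∑ C : Finset (Fin n),
    (-1 : R) ^ (sAB C Cᶜ) * (∏ a ∈ C, w a ^ (n - 1)) *
      deltaSet w C * deltaSet w Cᶜ * eAB w C Cᶜ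

lemma map_lhsSum {R S : Type*} [CommRing R] [CommRing S] (f : R →+* S) (n : ℕ)
    (w : Fin n → R) : f (lhsSum n w) = lhsSum n (fun i => f (w i)) := by
  simp only [lhsSum, deltaSet, eAB, map_sum, map_mul, map_pow, map_prod, map_sub,
    map_neg, map_one]

theorem stmt3 {R : Type*} [CommRing R] (n : ℕ) (hn : 2 ≤ n) (w : Fin n → R) :
    ∑ C : Finset (Fin n),
      (-1 : R) ^ (sAB C Cᶜ) * (∏ a ∈ C, w a ^ (n - 1)) *
        deltaSet w C * deltaSet w Cᶜ * eAB w C Cᶜ = 0 := by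
  have key : lhsSum n (fun i => (MvPolynomial.X i : MvPolynomial (Fin n) ℤ)) = 0 := by
    have hinj := IsFractionRing.injective (MvPolynomial (Fin n) ℤ)
      (FractionRing (MvPolynomial (Fin n) ℤ))
    apply hinj
    rw [map_zero, map_lhsSum]
    exact lhsSum_field (by omega) _ fun i =>
      (map_ne_zero_iff _ hinj).mpr (MvPolynomial.X_ne_zero i)
  have h2 := map_lhsSum ((MvPolynomial.aeval w).toRingHom :
    MvPolynomial (Fin n) ℤ →+* R) n (fun i => MvPolynomial.X i)
  rw [key, map_zero] at h2
  simp only [AlgHom.toRingHom_eq_coe, RingHom.coe_coe, MvPolynomial.aeval_X] at h2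
  exact h2.symm
end

section
/- For $n\ge 2$, the polynomial in $x$ and $w_1,\dots,w_n$ given by $\sum_{C\sqcup D=[n],\ |C|\text{ even}} (-1)^{S(C,D)} \prod_{\alpha\in C} w_\alpha^{n-2}\, \Delta(C)\,\Delta(D) \prod_{\alpha\in C,\,\beta\in D}(x^2-w_\alpha w_\beta)\; x^{|D|^2-2|D|+1}$ is identically zero. -/
open Finset

section Helpers
variable {n : ℕ}

private lemma negOnePow_congr {R : Type*} [Monoid R] [HasDistribNeg R] {a b : ℕ}
    (h : a % 2 = b % 2) : (-1 : R) ^ a = (-1 : R) ^ b := by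
  conv_lhs => rw [← Nat.div_add_mod a 2]
  conv_rhs => rw [← Nat.div_add_mod b 2]
  rw [pow_add, pow_add, pow_mul, pow_mul]
  norm_num [h]

private lemma prod_Ioi_eq_filter {K : Type*} [CommMonoid K] (f : Fin n → Fin n → K) :
    (∏ i, ∏ j ∈ Ioi i, f i j)
      = ∏ p ∈ (univ ×ˢ univ).filter (fun p : Fin n × Fin n => p.1 < p.2), f p.1 p.2 := by
  rw [Finset.prod_filter, Finset.prod_product]
  refine Finset.prod_congr rfl fun i _ => ?_
  have h : Ioi i = univ.filter (fun j => i < j) := by ext j; simp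
  rw [h, Finset.prod_filter]

private lemma prod_swap_pairs {K : Type*} [CommMonoid K] (A B : Finset (Fin n))
    (g : Fin n → Fin n → K) :
    ∏ p ∈ (A ×ˢ B).filter (fun p => p.2 < p.1), g p.1 p.2
      = ∏ p ∈ (B ×ˢ A).filter (fun p => p.1 < p.2), g p.2 p.1 := by
  refine Finset.prod_nbij' Prod.swap Prod.swap ?_ ?_ ?_ ?_ ?_ <;>
    simp +contextual [Finset.mem_filter, Finset.mem_product, and_comm]

private lemma card_swap_pairs (A B : Finset (Fin n)) :
    ((A ×ˢ B).filter (fun p => p.2 < p.1)).card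
      = ((B ×ˢ A).filter (fun p => p.1 < p.2)).card := by
  refine Finset.card_nbij' Prod.swap Prod.swap ?_ ?_ ?_ ?_ <;>
    simp +contextual [Finset.mem_filter, Finset.mem_product, and_comm, Set.MapsTo,
      Set.LeftInvOn, Set.RightInvOn]

private lemma card_split_pairs (A B : Finset (Fin n)) (h : ∀ a ∈ A, ∀ b ∈ B, a ≠ b) :
    ((A ×ˢ B).filter (fun p => p.1 < p.2)).card
      + ((A ×ˢ B).filter (fun p => p.2 < p.1)).card = A.card * B.card := by
  rw [← Finset.card_product]
  rw [← Finset.card_filter_add_card_filter_not (s := A ×ˢ B)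
    (p := fun p => p.1 < p.2)]
  congr 1
  apply congrArg
  apply Finset.filter_congr
  rintro ⟨a, b⟩ hab
  rw [Finset.mem_product] at hab
  have := h a hab.1 b hab.2
  simp only [decide_eq_true_eq]
  constructor
  · intro h'
    exact not_lt.mpr (le_of_lt h')
  · intro h'
    exact lt_of_le_of_ne (not_lt.mp h') (Ne.symm this)

end Helpers

section Helpers2
variable {n : ℕ}

private lemma card_diag_pairs (A : Finset (Fin n)) :
    ((A ×ˢ A).filter (fun p => p.1 = p.2)).card = A.card := by
  refine Finset.card_nbij' (fun p => p.1) (fun a => (a, a)) ?_ ?_ ?_ ?_ <;>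
    simp +contextual [Finset.mem_filter, Finset.mem_product, Set.MapsTo,
      Set.LeftInvOn, Set.RightInvOn]

private lemma card_within_pairs (A : Finset (Fin n)) :
    2 * ((A ×ˢ A).filter (fun p => p.1 < p.2)).card + A.card = A.card * A.card := by
  have h1 : ((A ×ˢ A).filter (fun p => ¬ p.1 < p.2)).card
      = ((A ×ˢ A).filter (fun p => p.2 < p.1)).card
        + ((A ×ˢ A).filter (fun p => p.1 = p.2)).card := by
    rw [← Finset.card_union_of_disjoint]
    · congr 1
      ext ⟨a, b⟩
      simp only [Finset.mem_filter, Finset.mem_union, Finset.mem_product]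
      constructor
      · rintro ⟨hm, hlt⟩
        rcases lt_or_eq_of_le (not_lt.mp hlt) with h | h
        · exact Or.inl ⟨hm, h⟩
        · exact Or.inr ⟨hm, h.symm⟩
      · rintro (⟨hm, h⟩ | ⟨hm, h⟩)
        · exact ⟨hm, not_lt.mpr (le_of_lt h)⟩
        · exact ⟨hm, by omega⟩
    · rw [Finset.disjoint_filter]
      rintro ⟨a, b⟩ _ h h'
      simp at h h'
      omega
  have h2 := Finset.card_filter_add_card_filter_not (s := A ×ˢ A)
    (p := fun p : Fin n × Fin n => p.1 < p.2)
  rw [h1, card_swap_pairs, card_diag_pairs, Finset.card_product] at h2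
  omega

private lemma prod_pair_mul {K : Type*} [CommMonoid K] (A : Finset (Fin n)) (g : Fin n → K) :
    (∏ p ∈ (A ×ˢ A).filter (fun p => p.1 < p.2), g p.1 * g p.2)
      = ∏ a ∈ A, g a ^ (A.card - 1) := by
  rw [Finset.prod_mul_distrib]
  have h2 : (∏ p ∈ (A ×ˢ A).filter (fun p => p.1 < p.2), g p.2)
      = ∏ p ∈ (A ×ˢ A).filter (fun p => p.2 < p.1), g p.1 :=
    (prod_swap_pairs A A (fun a b => g a)).symm
  rw [h2, ← Finset.prod_union]
  · have hset : ((A ×ˢ A).filter (fun p => p.1 < p.2))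
        ∪ ((A ×ˢ A).filter (fun p => p.2 < p.1))
        = (A ×ˢ A).filter (fun p => p.1 ≠ p.2) := by
      ext ⟨a, b⟩
      simp only [Finset.mem_union, Finset.mem_filter, Finset.mem_product]
      constructor
      · rintro (⟨hm, h⟩ | ⟨hm, h⟩) <;> exact ⟨hm, by omega⟩
      · rintro ⟨hm, h⟩
        have : a < b ∨ b < a := by omega
        tauto
    rw [hset, Finset.prod_filter, Finset.prod_product]
    refine Finset.prod_congr rfl fun a ha => ?_
    have : (∏ b ∈ A, if a ≠ b then g a else 1)
        = ∏ b ∈ A.filter (fun b => a ≠ b), g a := by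
      rw [Finset.prod_filter]
    rw [this, Finset.prod_const]
    congr 1
    have : A.filter (fun b => a ≠ b) = A.erase a := by
      ext b; simp [Finset.mem_erase, ne_comm, and_comm]
    rw [this, Finset.card_erase_of_mem ha]
  · rw [Finset.disjoint_filter]
    rintro ⟨a, b⟩ _ h h'
    simp at h h'
    omega

end Helpers2

section Helpers3
variable {n : ℕ}

private lemma prod_cross_split {K : Type*} [CommMonoid K] (A B : Finset (Fin n))
    (h : ∀ a ∈ A, ∀ b ∈ B, a ≠ b) (F : Fin n × Fin n → K) :
    (∏ p ∈ (A ×ˢ B).filter (fun p => p.1 < p.2), F p)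
      * (∏ p ∈ (A ×ˢ B).filter (fun p => p.2 < p.1), F p) = ∏ p ∈ A ×ˢ B, F p := by
  rw [← Finset.prod_filter_mul_prod_filter_not (A ×ˢ B) (fun p => p.1 < p.2)]
  congr 1
  apply Finset.prod_congr _ (fun _ _ => rfl)
  apply Finset.filter_congr
  rintro ⟨a, b⟩ hab
  rw [Finset.mem_product] at hab
  have := h a hab.1 b hab.2
  simp only [decide_eq_true_eq]
  constructor
  · intro h'
    exact not_lt.mpr (le_of_lt h')
  · intro h'
    exact lt_of_le_of_ne (not_lt.mp h') (Ne.symm this)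

private lemma prod_quadrant {K : Type*} [CommMonoid K] (C : Finset (Fin n))
    (F : Fin n × Fin n → K) :
    ∏ p ∈ (univ ×ˢ univ).filter (fun p : Fin n × Fin n => p.1 < p.2), F p
      = ((∏ p ∈ (C ×ˢ C).filter (fun p => p.1 < p.2), F p)
          * (∏ p ∈ (C ×ˢ Cᶜ).filter (fun p => p.1 < p.2), F p))
        * ((∏ p ∈ (Cᶜ ×ˢ C).filter (fun p => p.1 < p.2), F p)
          * (∏ p ∈ (Cᶜ ×ˢ Cᶜ).filter (fun p => p.1 < p.2), F p)) := by
  rw [← Finset.prod_filter_mul_prod_filter_not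
    ((univ ×ˢ univ).filter (fun p : Fin n × Fin n => p.1 < p.2)) (fun p => p.1 ∈ C)]
  congr 1
  · rw [← Finset.prod_filter_mul_prod_filter_not
      (((univ ×ˢ univ).filter (fun p : Fin n × Fin n => p.1 < p.2)).filter (fun p => p.1 ∈ C))
      (fun p => p.2 ∈ C)]
    congr 1 <;>
    · apply Finset.prod_congr _ (fun _ _ => rfl)
      ext ⟨a, b⟩
      simp only [Finset.mem_filter, Finset.mem_product, Finset.mem_univ, Finset.mem_compl,
        true_and]
      tauto
  · rw [← Finset.prod_filter_mul_prod_filter_not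
      (((univ ×ˢ univ).filter (fun p : Fin n × Fin n => p.1 < p.2)).filter (fun p => ¬ p.1 ∈ C))
      (fun p => p.2 ∈ C)]
    congr 1 <;>
    · apply Finset.prod_congr _ (fun _ _ => rfl)
      ext ⟨a, b⟩
      simp only [Finset.mem_filter, Finset.mem_product, Finset.mem_univ, Finset.mem_compl,
        true_and]
      tauto

end Helpers3

section KeyTerm
variable {n : ℕ} {K : Type*} [Field K]

private lemma key_term (hn : 2 ≤ n) (x : K) (w : Fin n → K)
    (hx : x ≠ 0) (hw : ∀ i, w i ≠ 0) (ε : K) (C : Finset (Fin n)) :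
    (∏ i, (if i ∈ C then ε * (w i) ^ (2 * n - 3) else x ^ (2 * n - 3)))
      * ∏ pp ∈ (univ ×ˢ univ).filter (fun pp : Fin n × Fin n => pp.1 < pp.2),
          ((if pp.2 ∈ C then x ^ 2 / w pp.2 else w pp.2)
            - (if pp.1 ∈ C then x ^ 2 / w pp.1 else w pp.1))
      = ε ^ C.card * ((-1 : K) ^ C.card * (x ^ (n * n - n - 1) *
          ((-1 : K) ^ (sAB C Cᶜ) * (∏ a ∈ C, w a ^ (n - 2)) *
            deltaSet w C * deltaSet w Cᶜ *
            (∏ a ∈ C, ∏ b ∈ Cᶜ, (x ^ 2 - w a * w b)) *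
            x ^ (Cᶜ.card * Cᶜ.card + 1 - 2 * Cᶜ.card)))) := by
  classical
  set c := C.card with hc
  set d := Cᶜ.card with hd
  have hcd : c + d = n := by
    rw [hc, hd]
    rw [Finset.card_add_card_compl]
    exact Fintype.card_fin n
  have hdisj : ∀ a ∈ C, ∀ b ∈ Cᶜ, a ≠ b := by
    intro a ha b hb
    intro h
    exact (Finset.mem_compl.mp hb) (h ▸ ha)
  set a₁ := ((C ×ˢ C).filter (fun p : Fin n × Fin n => p.1 < p.2)).card with ha₁
  set a₂ := ((C ×ˢ Cᶜ).filter (fun p : Fin n × Fin n => p.1 < p.2)).card with ha₂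
  have h2a : 2 * a₁ + c = c * c := card_within_pairs C
  have hsplit : a₂ + wAB C Cᶜ = c * d := by
    have h := card_split_pairs C Cᶜ hdisj
    rw [wAB, ha₂, hc, hd]
    exact h
  -- scalar product
  have hscal : (∏ i, (if i ∈ C then ε * (w i) ^ (2 * n - 3) else x ^ (2 * n - 3)))
      = (ε ^ c * ∏ a ∈ C, w a ^ (2 * n - 3)) * x ^ ((2 * n - 3) * d) := by
    rw [← Finset.prod_filter_mul_prod_filter_not univ (fun i => i ∈ C)]
    have e1 : univ.filter (fun i => i ∈ C) = C := by ext i; simp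
    have e2 : univ.filter (fun i => ¬ i ∈ C) = Cᶜ := by ext i; simp
    rw [e1, e2]
    rw [Finset.prod_congr rfl (fun i hi => if_pos hi),
        Finset.prod_congr rfl (fun i (hi : i ∈ Cᶜ) => if_neg (Finset.mem_compl.mp hi)),
        Finset.prod_mul_distrib, Finset.prod_const, Finset.prod_const, ← pow_mul]
  -- quadrant split of the Vandermonde product
  rw [prod_quadrant C (fun pp => ((if pp.2 ∈ C then x ^ 2 / w pp.2 else w pp.2)
            - (if pp.1 ∈ C then x ^ 2 / w pp.1 else w pp.1)))]
  -- E1 : both in C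
  have hE1 : (∏ pp ∈ (C ×ˢ C).filter (fun p : Fin n × Fin n => p.1 < p.2),
        ((if pp.2 ∈ C then x ^ 2 / w pp.2 else w pp.2)
          - (if pp.1 ∈ C then x ^ 2 / w pp.1 else w pp.1)))
      = (-1 : K) ^ a₁ * ((x ^ 2) ^ a₁ * deltaSet w C) * ∏ a ∈ C, ((w a)⁻¹) ^ (c - 1) := by
    have : ∀ pp ∈ (C ×ˢ C).filter (fun p : Fin n × Fin n => p.1 < p.2),
        ((if pp.2 ∈ C then x ^ 2 / w pp.2 else w pp.2)
          - (if pp.1 ∈ C then x ^ 2 / w pp.1 else w pp.1))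
        = (-1 : K) * (x ^ 2 * (w pp.2 - w pp.1)) * ((w pp.1)⁻¹ * (w pp.2)⁻¹) := by
      rintro ⟨i, j⟩ hpp
      rw [Finset.mem_filter, Finset.mem_product] at hpp
      rw [if_pos hpp.1.1, if_pos hpp.1.2]
      have hi := hw i; have hj := hw j
      field_simp
      ring
    rw [Finset.prod_congr rfl this, Finset.prod_mul_distrib, Finset.prod_mul_distrib,
      Finset.prod_mul_distrib, Finset.prod_const, Finset.prod_const,
      prod_pair_mul C (fun i => (w i)⁻¹)]
    rfl
  -- E4 : both in complement
  have hE4 : (∏ pp ∈ (Cᶜ ×ˢ Cᶜ).filter (fun p : Fin n × Fin n => p.1 < p.2),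
        ((if pp.2 ∈ C then x ^ 2 / w pp.2 else w pp.2)
          - (if pp.1 ∈ C then x ^ 2 / w pp.1 else w pp.1)))
      = deltaSet w Cᶜ := by
    rw [deltaSet]
    refine Finset.prod_congr rfl ?_
    rintro ⟨i, j⟩ hpp
    rw [Finset.mem_filter, Finset.mem_product] at hpp
    rw [if_neg (Finset.mem_compl.mp hpp.1.1), if_neg (Finset.mem_compl.mp hpp.1.2)]
  -- E2 : C x Ccompl
  have hE2 : (∏ pp ∈ (C ×ˢ Cᶜ).filter (fun p : Fin n × Fin n => p.1 < p.2),
        ((if pp.2 ∈ C then x ^ 2 / w pp.2 else w pp.2)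
          - (if pp.1 ∈ C then x ^ 2 / w pp.1 else w pp.1)))
      = (-1 : K) ^ a₂
          * (∏ pp ∈ (C ×ˢ Cᶜ).filter (fun p : Fin n × Fin n => p.1 < p.2),
              (x ^ 2 - w pp.1 * w pp.2))
          * ∏ pp ∈ (C ×ˢ Cᶜ).filter (fun p : Fin n × Fin n => p.1 < p.2), (w pp.1)⁻¹ := by
    have hcongr : ∀ pp ∈ (C ×ˢ Cᶜ).filter (fun p : Fin n × Fin n => p.1 < p.2),
        ((if pp.2 ∈ C then x ^ 2 / w pp.2 else w pp.2)
          - (if pp.1 ∈ C then x ^ 2 / w pp.1 else w pp.1))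
        = (-1 : K) * (x ^ 2 - w pp.1 * w pp.2) * (w pp.1)⁻¹ := by
      rintro ⟨i, j⟩ hpp
      rw [Finset.mem_filter, Finset.mem_product] at hpp
      rw [if_neg (Finset.mem_compl.mp hpp.1.2), if_pos hpp.1.1]
      have hi := hw i
      field_simp
      ring
    rw [Finset.prod_congr rfl hcongr, Finset.prod_mul_distrib, Finset.prod_mul_distrib,
      Finset.prod_const]
  -- E3 : Ccompl x C, swapped to C x Ccompl with reversed order
  have hE3 : (∏ pp ∈ (Cᶜ ×ˢ C).filter (fun p : Fin n × Fin n => p.1 < p.2),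
        ((if pp.2 ∈ C then x ^ 2 / w pp.2 else w pp.2)
          - (if pp.1 ∈ C then x ^ 2 / w pp.1 else w pp.1)))
      = (∏ pp ∈ (C ×ˢ Cᶜ).filter (fun p : Fin n × Fin n => p.2 < p.1),
              (x ^ 2 - w pp.1 * w pp.2))
          * ∏ pp ∈ (C ×ˢ Cᶜ).filter (fun p : Fin n × Fin n => p.2 < p.1), (w pp.1)⁻¹ := by
    have hcongr : ∀ pp ∈ (Cᶜ ×ˢ C).filter (fun p : Fin n × Fin n => p.1 < p.2),
        ((if pp.2 ∈ C then x ^ 2 / w pp.2 else w pp.2)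
          - (if pp.1 ∈ C then x ^ 2 / w pp.1 else w pp.1))
        = (x ^ 2 - w pp.2 * w pp.1) * (w pp.2)⁻¹ := by
      rintro ⟨i, j⟩ hpp
      rw [Finset.mem_filter, Finset.mem_product] at hpp
      rw [if_pos hpp.1.2, if_neg (Finset.mem_compl.mp hpp.1.1)]
      have hj := hw j
      field_simp
    rw [Finset.prod_congr rfl hcongr, Finset.prod_mul_distrib,
      ← prod_swap_pairs C Cᶜ (fun a b => (x ^ 2 - w a * w b)),
      ← prod_swap_pairs C Cᶜ (fun a b => (w a)⁻¹)]
  -- merging the two cross products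
  have hcross : (∏ pp ∈ (C ×ˢ Cᶜ).filter (fun p : Fin n × Fin n => p.1 < p.2),
          (x ^ 2 - w pp.1 * w pp.2))
        * (∏ pp ∈ (C ×ˢ Cᶜ).filter (fun p : Fin n × Fin n => p.2 < p.1),
          (x ^ 2 - w pp.1 * w pp.2))
      = ∏ a ∈ C, ∏ b ∈ Cᶜ, (x ^ 2 - w a * w b) := by
    rw [prod_cross_split C Cᶜ hdisj (fun pp => (x ^ 2 - w pp.1 * w pp.2)),
      Finset.prod_product]
  have hinvcross : (∏ pp ∈ (C ×ˢ Cᶜ).filter (fun p : Fin n × Fin n => p.1 < p.2), (w pp.1)⁻¹)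
        * (∏ pp ∈ (C ×ˢ Cᶜ).filter (fun p : Fin n × Fin n => p.2 < p.1), (w pp.1)⁻¹)
      = ∏ a ∈ C, ((w a)⁻¹) ^ d := by
    rw [prod_cross_split C Cᶜ hdisj (fun pp => (w pp.1)⁻¹), Finset.prod_product]
    refine Finset.prod_congr rfl fun a _ => ?_
    rw [hd]
    simp [Finset.prod_const]
  -- exponent identity for x
  have hd2 : 2 * d ≤ d * d + 1 := by nlinarith
  have hnn : n + 1 ≤ n * n := by nlinarith
  have h3 : 3 ≤ 2 * n := by omega
  have hnle : n ≤ n * n := by nlinarith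
  have h1le : 1 ≤ n * n - n := by omega
  have hee : (2 * n - 3) * d + 2 * a₁ = (n * n - n - 1) + (d * d + 1 - 2 * d) := by
    have hcd' : (c : ℤ) + d = n := by exact_mod_cast hcd
    have h2a' : 2 * (a₁ : ℤ) + c = c * c := by exact_mod_cast h2a
    zify [h3, hd2, hnle, h1le]
    linear_combination h2a' + ((c : ℤ) + n - d - 1) * hcd'
  have hX : x ^ ((2 * n - 3) * d) * (x ^ 2) ^ a₁
      = x ^ (n * n - n - 1) * x ^ (d * d + 1 - 2 * d) := by
    rw [← pow_mul, ← pow_add, ← pow_add, hee]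
  -- sign identity
  have hparity : ∀ P Q t W a b cc : ℕ, 2 * a + cc = P → b + W = Q → 2 * t = P + cc →
      (a + b) % 2 = (Q + t + W + cc) % 2 := by intros; omega
  have ht2 : 2 * (c * (c + 1) / 2) = c * (c + 1) := by
    have h := Nat.div_two_mul_two_of_even (Nat.even_mul_succ_self c)
    omega
  have ht2' : 2 * (c * (c + 1) / 2) = c * c + c := by
    have : c * (c + 1) = c * c + c := by ring
    omega
  have hS : (-1 : K) ^ a₁ * (-1 : K) ^ a₂ = (-1 : K) ^ (sAB C Cᶜ) * (-1 : K) ^ c := by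
    rw [← pow_add, ← pow_add]
    apply negOnePow_congr
    rw [sAB, ← hc, ← hd]
    exact hparity (c * c) (c * d) (c * (c + 1) / 2) (wAB C Cᶜ) a₁ a₂ c h2a hsplit ht2'
  -- w power merge
  have hW : (∏ a ∈ C, w a ^ (2 * n - 3))
        * ((∏ a ∈ C, ((w a)⁻¹) ^ (c - 1)) * (∏ a ∈ C, ((w a)⁻¹) ^ d))
      = ∏ a ∈ C, w a ^ (n - 2) := by
    rw [← Finset.prod_mul_distrib, ← Finset.prod_mul_distrib]
    refine Finset.prod_congr rfl fun a ha => ?_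
    have hc1 : 1 ≤ c := Finset.card_pos.mpr ⟨a, ha⟩
    have hwa := hw a
    rw [inv_pow, inv_pow, ← mul_inv, ← pow_add,
      show 2 * n - 3 = (n - 2) + ((c - 1) + d) from by omega, pow_add,
      mul_assoc, mul_inv_cancel₀ (pow_ne_zero _ hwa), mul_one]
  -- final assembly
  rw [hscal, hE1, hE2, hE3, hE4]
  calc ((ε ^ c * ∏ a ∈ C, w a ^ (2 * n - 3)) * x ^ ((2 * n - 3) * d))
        * (((-1 : K) ^ a₁ * ((x ^ 2) ^ a₁ * deltaSet w C) * ∏ a ∈ C, ((w a)⁻¹) ^ (c - 1))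
            * ((-1 : K) ^ a₂
              * (∏ pp ∈ (C ×ˢ Cᶜ).filter (fun p : Fin n × Fin n => p.1 < p.2),
                  (x ^ 2 - w pp.1 * w pp.2))
              * ∏ pp ∈ (C ×ˢ Cᶜ).filter (fun p : Fin n × Fin n => p.1 < p.2), (w pp.1)⁻¹)
          * (((∏ pp ∈ (C ×ˢ Cᶜ).filter (fun p : Fin n × Fin n => p.2 < p.1),
                  (x ^ 2 - w pp.1 * w pp.2))
              * ∏ pp ∈ (C ×ˢ Cᶜ).filter (fun p : Fin n × Fin n => p.2 < p.1), (w pp.1)⁻¹)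
            * deltaSet w Cᶜ))
      = ((∏ a ∈ C, w a ^ (2 * n - 3))
          * ((∏ a ∈ C, ((w a)⁻¹) ^ (c - 1))
            * ((∏ pp ∈ (C ×ˢ Cᶜ).filter (fun p : Fin n × Fin n => p.1 < p.2), (w pp.1)⁻¹)
              * ∏ pp ∈ (C ×ˢ Cᶜ).filter (fun p : Fin n × Fin n => p.2 < p.1), (w pp.1)⁻¹)))
        * ((x ^ ((2 * n - 3) * d) * (x ^ 2) ^ a₁)
          * (((-1 : K) ^ a₁ * (-1 : K) ^ a₂)
            * (((∏ pp ∈ (C ×ˢ Cᶜ).filter (fun p : Fin n × Fin n => p.1 < p.2),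
                  (x ^ 2 - w pp.1 * w pp.2))
                * ∏ pp ∈ (C ×ˢ Cᶜ).filter (fun p : Fin n × Fin n => p.2 < p.1),
                  (x ^ 2 - w pp.1 * w pp.2))
              * (deltaSet w C * deltaSet w Cᶜ * ε ^ c)))) := by ring
    _ = _ := by
      rw [hinvcross, hW, hX, hS, hcross]
      ring


end KeyTerm

section DetSide
variable {n : ℕ} {K : Type*} [Field K]

private lemma det_M_zero (hn : 2 ≤ n) (x : K) (w : Fin n → K)
    (hx : x ≠ 0) (hw : ∀ i, w i ≠ 0) (ε : K) (hε : ε * ε = 1) :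
    Matrix.det (Matrix.of fun i j : Fin n =>
      x ^ (2 * n - 3) * w i ^ (j : ℕ) + ε * w i ^ (2 * n - 3) * (x ^ 2 / w i) ^ (j : ℕ)) = 0 := by
  obtain ⟨m, rfl⟩ : ∃ m, n = m + 2 := ⟨n - 2, by omega⟩
  rw [← Matrix.exists_mulVec_eq_zero_iff]
  set j₀ : Fin (m + 2) := ⟨m, by omega⟩
  set j₁ : Fin (m + 2) := ⟨m + 1, by omega⟩
  refine ⟨Pi.single j₀ (ε * x) + Pi.single j₁ (-1), ?_, ?_⟩
  · intro hv
    have := congrFun hv j₁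
    have hne : j₁ ≠ j₀ := by
      intro h
      have := congrArg Fin.val h
      simp [j₀, j₁] at this
    simp [Pi.single_apply, hne, Pi.add_apply] at this
  · rw [Matrix.mulVec_add, Matrix.mulVec_single, Matrix.mulVec_single]
    funext i
    simp only [Pi.add_apply, Pi.zero_apply, Matrix.of_apply, Pi.smul_apply, Matrix.col_apply,
      op_smul_eq_mul]
    have hwi := hw i
    have hj0 : (j₀ : ℕ) = m := rfl
    have hj1 : (j₁ : ℕ) = m + 1 := rfl
    rw [show 2 * (m + 2) - 3 = 2 * m + 1 from by omega]
    simp only [hj0, hj1, div_pow]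
    field_simp
    ring_nf
    linear_combination (x * x ^ (m * 2) * w i ^ 2 * w i ^ (m * 3)) * hε
end DetSide

section Expand
variable {n : ℕ} {K : Type*} [Field K]

private lemma det_expand (x : K) (w : Fin n → K) (ε : K) :
    Matrix.det (Matrix.of fun i j : Fin n =>
      x ^ (2 * n - 3) * w i ^ (j : ℕ) + ε * w i ^ (2 * n - 3) * (x ^ 2 / w i) ^ (j : ℕ))
    = ∑ C : Finset (Fin n),
        (∏ i, (if i ∈ C then ε * (w i) ^ (2 * n - 3) else x ^ (2 * n - 3)))
          * ∏ pp ∈ (univ ×ˢ univ).filter (fun pp : Fin n × Fin n => pp.1 < pp.2),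
              ((if pp.2 ∈ C then x ^ 2 / w pp.2 else w pp.2)
                - (if pp.1 ∈ C then x ^ 2 / w pp.1 else w pp.1)) := by
  classical
  set ra : Fin n → Fin n → K := fun i j => x ^ (2 * n - 3) * w i ^ (j : ℕ) with hra
  set rb : Fin n → Fin n → K := fun i j => ε * w i ^ (2 * n - 3) * (x ^ 2 / w i) ^ (j : ℕ)
    with hrb
  have h0 : (Matrix.of fun i j : Fin n =>
      x ^ (2 * n - 3) * w i ^ (j : ℕ) + ε * w i ^ (2 * n - 3) * (x ^ 2 / w i) ^ (j : ℕ))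
      = Matrix.of (rb + ra) := by
    funext i j
    simp only [Matrix.of_apply, Pi.add_apply, hra, hrb]
    ring
  rw [h0]
  have hexp := (Matrix.detRowAlternating :
      (Fin n → K) [⋀^Fin n]→ₗ[K] K).toMultilinearMap.map_add_univ rb ra
  have hdet : Matrix.det (Matrix.of (rb + ra))
      = ∑ C : Finset (Fin n), Matrix.det (Matrix.of (C.piecewise rb ra)) := hexp
  rw [hdet]
  refine Finset.sum_congr rfl fun C _ => ?_
  have hpc : Matrix.of (C.piecewise rb ra)
      = Matrix.of (fun i j => (if i ∈ C then ε * (w i) ^ (2 * n - 3) else x ^ (2 * n - 3))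
          * Matrix.vandermonde (fun k => if k ∈ C then x ^ 2 / w k else w k) i j) := by
    funext i j
    by_cases hi : i ∈ C <;>
      simp [Finset.piecewise, hi, hra, hrb, Matrix.vandermonde] <;> ring
  rw [hpc, Matrix.det_mul_column, Matrix.det_vandermonde,
    prod_Ioi_eq_filter (fun i j => ((if j ∈ C then x ^ 2 / w j else w j)
      - (if i ∈ C then x ^ 2 / w i else w i)))]

private lemma field_version (hn : 2 ≤ n) (x : K) (w : Fin n → K)
    (hx : x ≠ 0) (hw : ∀ i, w i ≠ 0) (h2 : (2 : K) ≠ 0) :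
    ∑ C ∈ Finset.univ.filter (fun C : Finset (Fin n) => Even C.card),
      (-1 : K) ^ (sAB C Cᶜ) * (∏ a ∈ C, w a ^ (n - 2)) *
        deltaSet w C * deltaSet w Cᶜ *
        (∏ a ∈ C, ∏ b ∈ Cᶜ, (x ^ 2 - w a * w b)) *
        x ^ (Cᶜ.card * Cᶜ.card + 1 - 2 * Cᶜ.card) = 0 := by
  classical
  set T : Finset (Fin n) → K := fun C =>
    (-1 : K) ^ (sAB C Cᶜ) * (∏ a ∈ C, w a ^ (n - 2)) *
      deltaSet w C * deltaSet w Cᶜ *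
      (∏ a ∈ C, ∏ b ∈ Cᶜ, (x ^ 2 - w a * w b)) *
      x ^ (Cᶜ.card * Cᶜ.card + 1 - 2 * Cᶜ.card) with hT
  have hdet : ∀ ε : K, ε * ε = 1 →
      (∑ C : Finset (Fin n), ε ^ C.card * ((-1 : K) ^ C.card
        * (x ^ (n * n - n - 1) * T C))) = 0 := by
    intro ε hε
    have h1 := det_M_zero hn x w hx hw ε hε
    rw [det_expand x w ε] at h1
    rw [← h1]
    refine Finset.sum_congr rfl fun C _ => ?_
    rw [hT]
    exact (key_term hn x w hx hw ε C).symm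
  have hA := hdet 1 (by ring)
  have hB := hdet (-1) (by ring)
  have hsum : (∑ C : Finset (Fin n), ((-1 : K) ^ C.card + 1)
      * (x ^ (n * n - n - 1) * T C)) = 0 := by
    have h' : (∑ C : Finset (Fin n), ((-1 : K) ^ C.card + 1) * (x ^ (n * n - n - 1) * T C))
        = (∑ C : Finset (Fin n), (1 : K) ^ C.card
            * ((-1 : K) ^ C.card * (x ^ (n * n - n - 1) * T C)))
          + ∑ C : Finset (Fin n), (-1 : K) ^ C.card
            * ((-1 : K) ^ C.card * (x ^ (n * n - n - 1) * T C)) := by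
      rw [← Finset.sum_add_distrib]
      refine Finset.sum_congr rfl fun C _ => ?_
      have hone : (-1 : K) ^ C.card * (-1 : K) ^ C.card = 1 := by
        rw [← mul_pow]; norm_num
      linear_combination (- x ^ (n * n - n - 1) * T C) * hone
    rw [h', hA, hB, add_zero]
  have h3 : (∑ C ∈ Finset.univ.filter (fun C : Finset (Fin n) => Even C.card), T C)
      * (2 * x ^ (n * n - n - 1))
      = ∑ C : Finset (Fin n), ((-1 : K) ^ C.card + 1) * (x ^ (n * n - n - 1) * T C) := by
    rw [Finset.sum_filter, Finset.sum_mul]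
    refine Finset.sum_congr rfl fun C _ => ?_
    by_cases hC : Even C.card
    · rw [if_pos hC, Even.neg_one_pow hC]
      ring
    · rw [if_neg hC, Odd.neg_one_pow (Nat.not_even_iff_odd.mp hC)]
      ring
  have h4 := h3.trans hsum
  have h5 := mul_eq_zero.mp h4
  rcases h5 with h5 | h5
  · exact h5
  · exact absurd h5 (mul_ne_zero h2 (pow_ne_zero _ hx))

end Expand

section Transfer

private lemma map_deltaSet {R S : Type*} [CommRing R] [CommRing S] (f : R →+* S) {n : ℕ}
    (w : Fin n → R) (A : Finset (Fin n)) :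
    f (deltaSet w A) = deltaSet (fun i => f (w i)) A := by
  rw [deltaSet, deltaSet, map_prod]
  exact Finset.prod_congr rfl fun p _ => map_sub f _ _

private lemma map_sum_expr {R S : Type*} [CommRing R] [CommRing S] (f : R →+* S) {n : ℕ}
    (x : R) (w : Fin n → R) :
    f (∑ C ∈ Finset.univ.filter (fun C : Finset (Fin n) => Even C.card),
      (-1 : R) ^ (sAB C Cᶜ) * (∏ a ∈ C, w a ^ (n - 2)) *
        deltaSet w C * deltaSet w Cᶜ *
        (∏ a ∈ C, ∏ b ∈ Cᶜ, (x ^ 2 - w a * w b)) *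
        x ^ (Cᶜ.card * Cᶜ.card + 1 - 2 * Cᶜ.card))
    = ∑ C ∈ Finset.univ.filter (fun C : Finset (Fin n) => Even C.card),
      (-1 : S) ^ (sAB C Cᶜ) * (∏ a ∈ C, f (w a) ^ (n - 2)) *
        deltaSet (fun i => f (w i)) C * deltaSet (fun i => f (w i)) Cᶜ *
        (∏ a ∈ C, ∏ b ∈ Cᶜ, (f x ^ 2 - f (w a) * f (w b))) *
        f x ^ (Cᶜ.card * Cᶜ.card + 1 - 2 * Cᶜ.card) := by
  rw [map_sum]
  refine Finset.sum_congr rfl fun C _ => ?_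
  simp only [map_mul, map_pow, map_prod, map_sub, map_neg, map_one, map_deltaSet]

end Transfer

private theorem stmt4_aux {R : Type*} [CommRing R] (n : ℕ) (hn : 2 ≤ n) (x : R) (w : Fin n → R) :
    ∑ C ∈ Finset.univ.filter (fun C : Finset (Fin n) => Even C.card),
      (-1 : R) ^ (sAB C Cᶜ) * (∏ a ∈ C, w a ^ (n - 2)) *
        deltaSet w C * deltaSet w Cᶜ *
        (∏ a ∈ C, ∏ b ∈ Cᶜ, (x ^ 2 - w a * w b)) *
        x ^ (Cᶜ.card * Cᶜ.card + 1 - 2 * Cᶜ.card) = 0 := by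
  classical
  set P := MvPolynomial (Option (Fin n)) ℤ with hP
  let K := FractionRing P
  set xP : P := MvPolynomial.X none with hxP
  set wP : Fin n → P := fun i => MvPolynomial.X (some i) with hwP
  let alg : P →+* K := algebraMap P K
  have halg : Function.Injective alg := IsFractionRing.injective P K
  have hx : alg xP ≠ 0 := by
    intro h
    exact MvPolynomial.X_ne_zero none (halg (by rw [h, map_zero]))
  have hw : ∀ i, alg (wP i) ≠ 0 := by
    intro i h
    exact MvPolynomial.X_ne_zero (some i) (halg (by rw [h, map_zero]))
  have h2P : (2 : P) ≠ 0 := by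
    have : ((2 : ℕ) : P) ≠ 0 := Nat.cast_ne_zero.mpr (by norm_num)
    simpa using this
  have h2 : (2 : K) ≠ 0 := by
    intro h
    apply h2P
    apply halg
    rw [map_ofNat, map_zero]
    exact h
  have key := field_version hn (alg xP) (fun i => alg (wP i)) hx hw h2
  have hmap := map_sum_expr alg xP wP
  have hzero : (∑ C ∈ Finset.univ.filter (fun C : Finset (Fin n) => Even C.card),
      (-1 : P) ^ (sAB C Cᶜ) * (∏ a ∈ C, wP a ^ (n - 2)) *
        deltaSet wP C * deltaSet wP Cᶜ *
        (∏ a ∈ C, ∏ b ∈ Cᶜ, (xP ^ 2 - wP a * wP b)) *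
        xP ^ (Cᶜ.card * Cᶜ.card + 1 - 2 * Cᶜ.card)) = 0 := by
    apply halg
    rw [map_zero, hmap, key]
  let ev : P →+* R := MvPolynomial.eval₂Hom (Int.castRingHom R) (fun o => o.elim x w)
  have hevx : ev xP = x := by
    show (MvPolynomial.eval₂Hom (Int.castRingHom R) fun o => o.elim x w)
      (MvPolynomial.X none) = x
    rw [MvPolynomial.eval₂Hom_X']
    rfl
  have hevw : ∀ i, ev (wP i) = w i := by
    intro i
    show (MvPolynomial.eval₂Hom (Int.castRingHom R) fun o => o.elim x w)
      (MvPolynomial.X (some i)) = w i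
    rw [MvPolynomial.eval₂Hom_X']
    rfl
  have := congrArg ev hzero
  rw [map_zero, map_sum_expr ev xP wP] at this
  rw [hevx] at this
  have hfun : (fun i => ev (wP i)) = w := funext hevw
  rw [hfun] at this
  simp only [hevw] at this
  exact this

theorem stmt4 {R : Type*} [CommRing R] (n : ℕ) (hn : 2 ≤ n) (x : R) (w : Fin n → R) :
    ∑ C ∈ Finset.univ.filter (fun C : Finset (Fin n) => Even C.card),
      (-1 : R) ^ (sAB C Cᶜ) * (∏ a ∈ C, w a ^ (n - 2)) *
        deltaSet w C * deltaSet w Cᶜ *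
        (∏ a ∈ C, ∏ b ∈ Cᶜ, (x ^ 2 - w a * w b)) *
        x ^ (Cᶜ.card * Cᶜ.card + 1 - 2 * Cᶜ.card) = 0 := by
  exact stmt4_aux n hn x w
end

section
/- Let $A\subseteq\{1,\dots,m\}$ be nonempty and $w_1,\dots,w_m$ variables. Then $\sum_{j\in A} w_j\,\Delta(A_j)\,E(\{j\},A_j)\,(-1)^{W(A_j,\{j\})} = (-1)^{|A|-1}\Delta(A)\cdot\begin{cases} w_A-1 & |A|\text{ even}\\ w_A & |A|\text{ odd}\end{cases}$. -/
open Finset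

section Aux

variable {R : Type*} [CommRing R] {m : ℕ}

open Finset

variable {R : Type*} [CommRing R] {m : ℕ}

def esym (w : Fin m → R) (B : Finset (Fin m)) (c : ℕ) : R :=
  ∑ T ∈ B.powersetCard c, ∏ b ∈ T, w b

lemma esym_zero (w : Fin m → R) (B : Finset (Fin m)) : esym w B 0 = 1 := by
  simp [esym]

lemma esym_of_gt (w : Fin m → R) {B : Finset (Fin m)} {c : ℕ} (h : B.card < c) :
    esym w B c = 0 := by
  rw [esym, Finset.powersetCard_eq_empty.2 h, Finset.sum_empty]

lemma esym_self (w : Fin m → R) (B : Finset (Fin m)) : esym w B B.card = ∏ b ∈ B, w b := by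
  rw [esym, Finset.powersetCard_self, Finset.sum_singleton]

lemma esym_insert (w : Fin m → R) {a : Fin m} {B : Finset (Fin m)} (ha : a ∉ B) (c : ℕ) :
    esym w (insert a B) (c + 1) = esym w B (c + 1) + w a * esym w B c := by
  rw [esym, Finset.powersetCard_succ_insert ha, Finset.sum_union, Finset.sum_image]
  · rw [esym, esym, Finset.mul_sum]
    congr 1
    refine Finset.sum_congr rfl fun T hT => ?_
    rw [Finset.prod_insert fun hmem => ha ((Finset.mem_powersetCard.1 hT).1 hmem)]
  · intro T hT U hU hTU
    have hTa : a ∉ T := fun hmem => ha ((Finset.mem_powersetCard.1 hT).1 hmem)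
    have hUa : a ∉ U := fun hmem => ha ((Finset.mem_powersetCard.1 hU).1 hmem)
    have := congrArg (Finset.erase · a) hTU
    simpa [Finset.erase_insert, hTa, hUa] using this
  · rw [Finset.disjoint_left]
    intro T hT hT2
    rcases Finset.mem_image.1 hT2 with ⟨U, hU, rfl⟩
    exact ha ((Finset.mem_powersetCard.1 hT).1 (Finset.mem_insert_self a U))

lemma prod_one_sub_eq (w : Fin m → R) (B : Finset (Fin m)) (x : R) :
    ∏ b ∈ B, (1 - x * w b)
      = ∑ c ∈ Finset.range (B.card + 1), (-1 : R) ^ c * esym w B c * x ^ c := by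
  induction B using Finset.induction_on with
  | empty => simp [esym_zero]
  | insert a B ha ih =>
    have key : ∑ c ∈ Finset.range (B.card + 1), (-1 : R) ^ c * esym w B c * x ^ c
        = 1 + ∑ c ∈ Finset.range (B.card + 1), (-1 : R) ^ (c+1) * esym w B (c+1) * x ^ (c+1) := by
      rw [Finset.sum_range_succ' (fun c => (-1 : R) ^ c * esym w B c * x ^ c)]
      rw [Finset.sum_range_succ (fun c => (-1 : R) ^ (c+1) * esym w B (c+1) * x ^ (c+1))]
      rw [esym_zero, esym_of_gt w (Nat.lt_succ_self _)]
      ring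
    rw [Finset.prod_insert ha, ih, Finset.card_insert_of_notMem ha, key,
      Finset.sum_range_succ' (fun c => (-1 : R) ^ c * esym w (insert a B) c * x ^ c),
      esym_zero]
    have : ∀ c ∈ Finset.range (B.card + 1),
        (-1 : R) ^ (c+1) * esym w (insert a B) (c+1) * x ^ (c+1)
        = (-1 : R) ^ (c+1) * esym w B (c+1) * x ^ (c+1)
          + (-(w a * ((-1 : R) ^ c * esym w B c * x ^ c))) * x := by
      intro c _
      rw [esym_insert w ha]
      ring
    rw [Finset.sum_congr rfl this, Finset.sum_add_distrib]
    rw [← Finset.sum_mul, Finset.sum_neg_distrib, ← Finset.mul_sum, key]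
    ring

lemma prod_sub_eq (w : Fin m → R) (B : Finset (Fin m)) (x : R) :
    ∏ b ∈ B, (x - w b)
      = ∑ c ∈ Finset.range (B.card + 1), (-1 : R) ^ c * esym w B c * x ^ (B.card - c) := by
  induction B using Finset.induction_on with
  | empty => simp [esym_zero]
  | insert a B ha ih =>
    rw [Finset.prod_insert ha, ih, Finset.card_insert_of_notMem ha, sub_mul, Finset.mul_sum,
      Finset.sum_range_succ' (fun c => (-1 : R) ^ c * esym w (insert a B) c * x ^ (B.card + 1 - c)),
      esym_zero]
    have h1 : ∀ c ∈ Finset.range (B.card + 1),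
        x * ((-1 : R) ^ c * esym w B c * x ^ (B.card - c))
          = (-1 : R) ^ c * esym w B c * x ^ (B.card + 1 - c) := by
      intro c hc
      rw [Finset.mem_range] at hc
      have : B.card + 1 - c = (B.card - c) + 1 := by omega
      rw [this, pow_succ]
      ring
    rw [Finset.sum_congr rfl h1,
      Finset.sum_range_succ' (fun c => (-1 : R) ^ c * esym w B c * x ^ (B.card + 1 - c)),
      esym_zero]
    have h2 : ∀ c ∈ Finset.range (B.card + 1),
        (-1 : R) ^ (c+1) * esym w (insert a B) (c+1) * x ^ (B.card + 1 - (c+1))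
          = (-1 : R) ^ (c+1) * esym w B (c+1) * x ^ (B.card + 1 - (c+1))
            + (- (w a * ((-1 : R) ^ c * esym w B c * x ^ (B.card - c)))) := by
      intro c hc
      rw [esym_insert w ha]
      have : B.card + 1 - (c+1) = B.card - c := by omega
      rw [this]
      ring
    rw [Finset.sum_congr rfl h2, Finset.sum_add_distrib, Finset.sum_neg_distrib, ← Finset.mul_sum]
    have h3 : Finset.range (B.card + 1) = Finset.range B.card ∪ {B.card} := by
      ext c; simp [Nat.lt_succ_iff_lt_or_eq]; omega
    have h4 : ∑ c ∈ Finset.range (B.card + 1), (-1:R)^(c+1) * esym w B (c+1) * x ^ (B.card+1-(c+1))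
        = ∑ c ∈ Finset.range B.card, (-1:R)^(c+1) * esym w B (c+1) * x ^ (B.card+1-(c+1)) := by
      rw [Finset.sum_range_succ, esym_of_gt w (Nat.lt_succ_self _)]
      ring
    rw [h4]
    ring

lemma key_expand (w : Fin m → R) (B : Finset (Fin m)) (x : R) :
    x * ∏ b ∈ B, (1 - x * w b)
      = ∑ c ∈ Finset.range (B.card + 1),
          (-1 : R) ^ c * (esym w B c + x * (if c = 0 then 0 else esym w B (c - 1)))
            * ∑ t ∈ Finset.range (B.card + 1 - c), x ^ (c + 2*t + 1) := by
  set n := B.card with hn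
  set S : ℕ → R := fun c => ∑ t ∈ Finset.range (n + 1 - c), x ^ (c + 2*t + 1) with hS
  have split : ∀ c ∈ Finset.range (n+1),
      (-1 : R) ^ c * (esym w B c + x * (if c = 0 then 0 else esym w B (c - 1))) * S c
        = (-1 : R) ^ c * esym w B c * S c
          + (-1 : R) ^ c * (x * (if c = 0 then 0 else esym w B (c - 1))) * S c := by
    intro c _; ring
  rw [Finset.sum_congr rfl split, Finset.sum_add_distrib]
  have second : ∑ c ∈ Finset.range (n+1),
      (-1 : R) ^ c * (x * (if c = 0 then 0 else esym w B (c - 1))) * S c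
      = ∑ c ∈ Finset.range (n+1), -((-1 : R) ^ c * esym w B c * (x * S (c+1))) := by
    rw [Finset.sum_range_succ'
      (fun c => (-1 : R) ^ c * (x * (if c = 0 then 0 else esym w B (c - 1))) * S c)]
    rw [Finset.sum_range_succ (fun c => -((-1 : R) ^ c * esym w B c * (x * S (c+1))))]
    have hSn : S (n+1) = 0 := by
      rw [hS]; simp
    rw [hSn]
    simp only [if_pos rfl, Nat.add_sub_cancel, if_neg (Nat.succ_ne_zero _)]
    rw [Finset.sum_congr rfl (fun c _ => by ring :
      ∀ c ∈ Finset.range n, (-1 : R) ^ (c+1) * (x * esym w B c) * S (c+1)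
        = -((-1:R)^c * esym w B c * (x * S (c+1))))]
    simp
  rw [second, ← Finset.sum_add_distrib]
  have tele : ∀ c ∈ Finset.range (n+1),
      (-1 : R) ^ c * esym w B c * S c + -((-1 : R) ^ c * esym w B c * (x * S (c+1)))
        = (-1 : R) ^ c * esym w B c * x ^ (c+1) := by
    intro c hc
    rw [Finset.mem_range] at hc
    have htel : S c = x ^ (c+1) + x * S (c+1) := by
      simp only [hS]
      have h1 : n + 1 - c = (n - c) + 1 := by omega
      rw [h1, Finset.sum_range_succ' (fun t => x ^ (c + 2*t + 1))]
      have h2 : n + 1 - (c + 1) = n - c := by omega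
      rw [h2, Finset.mul_sum]
      have h3 : ∀ t ∈ Finset.range (n - c), x ^ (c + 2*(t+1) + 1) = x * x ^ ((c+1) + 2*t + 1) := by
        intro t _
        rw [← pow_succ']
        congr 1
        omega
      rw [Finset.sum_congr rfl h3]
      simp [add_comm]
    rw [htel]; ring
  rw [Finset.sum_congr rfl tele]
  have last : ∀ c ∈ Finset.range (n+1),
      (-1 : R) ^ c * esym w B c * x ^ (c+1) = x * ((-1 : R) ^ c * esym w B c * x ^ c) := by
    intro c _; rw [pow_succ]; ring
  rw [Finset.sum_congr rfl last, ← Finset.mul_sum, ← prod_one_sub_eq]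

lemma key_expand_A (w : Fin m → R) (A : Finset (Fin m)) {j : Fin m} (hj : j ∈ A) :
    w j * ∏ b ∈ A.erase j, (1 - w j * w b)
      = ∑ c ∈ Finset.range A.card,
          (-1 : R) ^ c * esym w A c * ∑ t ∈ Finset.range (A.card - c), (w j) ^ (c + 2*t + 1) := by
  have hcard : (A.erase j).card + 1 = A.card := by
    rw [Finset.card_erase_of_mem hj]
    have := Finset.card_pos.2 ⟨j, hj⟩
    omega
  rw [key_expand w (A.erase j) (w j), hcard]
  have hesym : ∀ c : ℕ,
      esym w A (c+1) = esym w (A.erase j) (c+1) + w j * esym w (A.erase j) c := by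
    intro c
    have h := esym_insert w (Finset.notMem_erase j A) c
    rwa [Finset.insert_erase hj] at h
  refine Finset.sum_congr rfl fun c hc => ?_
  cases c with
  | zero => rw [esym_zero, esym_zero]; simp
  | succ c' => rw [hesym c', if_neg (Nat.succ_ne_zero _), Nat.add_sub_cancel]

lemma mem_iff_orderEmb {A : Finset (Fin m)} {k : ℕ} (h : A.card = k) (a : Fin m) :
    a ∈ A ↔ ∃ i : Fin k, A.orderEmbOfFin h i = a := by
  constructor
  · intro ha
    have : a ∈ Set.range (A.orderEmbOfFin h) := by
      rw [Finset.range_orderEmbOfFin]; exact ha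
    exact this
  · rintro ⟨i, rfl⟩
    exact Finset.orderEmbOfFin_mem A h i

lemma deltaSet_eq_prod {A : Finset (Fin m)} {k : ℕ} (h : A.card = k) (w : Fin m → R) :
    deltaSet w A
      = ∏ i : Fin k, ∏ j ∈ Finset.Ioi i,
          (w (A.orderEmbOfFin h j) - w (A.orderEmbOfFin h i)) := by
  set φ := A.orderEmbOfFin h with hφ
  have himg : (A ×ˢ A).filter (fun p => p.1 < p.2)
      = ((Finset.univ ×ˢ Finset.univ).filter (fun p : Fin k × Fin k => p.1 < p.2)).image
          (fun p => (φ p.1, φ p.2)) := by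
    ext p
    simp only [Finset.mem_image, Finset.mem_filter, Finset.mem_product, Finset.mem_univ,
      true_and, and_true]
    constructor
    · rintro ⟨⟨h1, h2⟩, hlt⟩
      obtain ⟨i, hi⟩ := (mem_iff_orderEmb h p.1).1 h1
      obtain ⟨j, hj⟩ := (mem_iff_orderEmb h p.2).1 h2
      refine ⟨(i, j), ?_, ?_⟩
      · show i < j
        rw [← φ.lt_iff_lt, hi, hj]; exact hlt
      · rw [Prod.ext_iff]; exact ⟨hi, hj⟩
    · rintro ⟨q, hq, rfl⟩
      exact ⟨⟨Finset.orderEmbOfFin_mem A h q.1, Finset.orderEmbOfFin_mem A h q.2⟩,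
        φ.strictMono hq⟩
  rw [deltaSet, himg, Finset.prod_image]
  · rw [Finset.prod_filter, Finset.prod_product]
    refine Finset.prod_congr rfl fun i _ => ?_
    rw [← Finset.prod_filter]
    apply Finset.prod_congr _ (fun _ _ => rfl)
    ext j; simp
  · intro p hp q hq hpq
    rw [Prod.ext_iff] at hpq ⊢
    exact ⟨φ.injective hpq.1, φ.injective hpq.2⟩

lemma det_vandermonde_deltaSet {A : Finset (Fin m)} {k : ℕ} (h : A.card = k) (w : Fin m → R) :
    (Matrix.vandermonde (fun i => w (A.orderEmbOfFin h i))).det = deltaSet w A := by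
  rw [Matrix.det_vandermonde, deltaSet_eq_prod h w]

lemma card_erase_orderEmb {A : Finset (Fin m)} {n : ℕ} (h : A.card = n + 1) (i : Fin (n + 1)) :
    (A.erase (A.orderEmbOfFin h i)).card = n := by
  rw [Finset.card_erase_of_mem (Finset.orderEmbOfFin_mem A h i), h]
  omega

lemma orderEmb_erase {A : Finset (Fin m)} {n : ℕ} (h : A.card = n + 1) (i : Fin (n + 1)) :
    (fun r : Fin n => A.orderEmbOfFin h (i.succAbove r))
      = (A.erase (A.orderEmbOfFin h i)).orderEmbOfFin (card_erase_orderEmb h i) := by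
  apply Finset.orderEmbOfFin_unique
  · intro r
    rw [Finset.mem_erase]
    exact ⟨(A.orderEmbOfFin h).injective.ne (Fin.succAbove_ne i r),
      Finset.orderEmbOfFin_mem A h _⟩
  · exact (A.orderEmbOfFin h).strictMono.comp (Fin.strictMono_succAbove i)

lemma sum_over_orderEmb {A : Finset (Fin m)} {k : ℕ} (h : A.card = k) (F : Fin m → R) :
    ∑ j ∈ A, F j = ∑ i : Fin k, F (A.orderEmbOfFin h i) := by
  have hset : A = Finset.image (A.orderEmbOfFin h) Finset.univ := by
    ext a
    simp only [Finset.mem_image, Finset.mem_univ, true_and]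
    exact (mem_iff_orderEmb h a)
  calc ∑ j ∈ A, F j = ∑ j ∈ Finset.image (A.orderEmbOfFin h) Finset.univ, F j :=
        Finset.sum_congr hset fun _ _ => rfl
    _ = ∑ i : Fin k, F (A.orderEmbOfFin h i) :=
        Finset.sum_image (fun p _ q _ hpq => (A.orderEmbOfFin h).injective hpq)

lemma wAB_erase {A : Finset (Fin m)} {n : ℕ} (h : A.card = n + 1) (i : Fin (n + 1)) :
    wAB (A.erase (A.orderEmbOfFin h i)) {A.orderEmbOfFin h i} = n - (i : ℕ) := by
  set φ := A.orderEmbOfFin h with hφ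
  set jj := φ i with hj
  have h1 : ((A.erase jj ×ˢ ({jj} : Finset (Fin m))).filter (fun p => p.2 < p.1))
      = (A.filter (fun b => jj < b)) ×ˢ ({jj} : Finset (Fin m)) := by
    ext p
    simp only [Finset.mem_filter, Finset.mem_product, Finset.mem_singleton, Finset.mem_erase]
    constructor
    · rintro ⟨⟨⟨hne, hmem⟩, h2⟩, hlt⟩
      refine ⟨⟨hmem, ?_⟩, h2⟩
      rw [← h2]; exact hlt
    · rintro ⟨⟨hmem, hlt⟩, h2⟩
      have hlt2 : p.2 < p.1 := by rw [h2]; exact hlt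
      refine ⟨⟨⟨?_, hmem⟩, h2⟩, hlt2⟩
      rw [← h2]; exact ne_of_gt hlt2
  have h2 : A.filter (fun b => jj < b) = (Finset.Ioi i).image φ := by
    ext a
    simp only [Finset.mem_filter, Finset.mem_image, Finset.mem_Ioi]
    constructor
    · rintro ⟨ha, hlt⟩
      obtain ⟨r, rfl⟩ := (mem_iff_orderEmb h a).1 ha
      exact ⟨r, φ.lt_iff_lt.1 hlt, rfl⟩
    · rintro ⟨r, hr, rfl⟩
      exact ⟨Finset.orderEmbOfFin_mem A h r, φ.strictMono hr⟩
  rw [wAB, h1, Finset.card_product, Finset.card_singleton, mul_one, h2,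
    Finset.card_image_of_injective _ φ.injective, Fin.card_Ioi]
  omega

/-- `V(d) = ∑_{j∈A} (-1)^{W_j} w_j^d Δ(A_j)`. -/
def Vd (w : Fin m → R) (A : Finset (Fin m)) (d : ℕ) : R :=
  ∑ j ∈ A, (-1 : R) ^ (wAB (A.erase j) {j}) * w j ^ d * deltaSet w (A.erase j)

lemma Vd_eq_det {A : Finset (Fin m)} {n : ℕ} (h : A.card = n + 1) (w : Fin m → R) (d : ℕ) :
    Vd w A d = Matrix.det (Matrix.of fun i j : Fin (n + 1) =>
      if j = Fin.last n then (w (A.orderEmbOfFin h i)) ^ d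
      else (w (A.orderEmbOfFin h i)) ^ (j : ℕ)) := by
  rw [Matrix.det_succ_column _ (Fin.last n)]
  rw [Vd, sum_over_orderEmb h]
  refine Finset.sum_congr rfl fun i _ => ?_
  have hsub : (Matrix.of fun i j : Fin (n + 1) =>
      if j = Fin.last n then (w (A.orderEmbOfFin h i)) ^ d
      else (w (A.orderEmbOfFin h i)) ^ (j : ℕ)).submatrix i.succAbove (Fin.last n).succAbove
      = Matrix.vandermonde (fun r =>
          w ((A.erase (A.orderEmbOfFin h i)).orderEmbOfFin (card_erase_orderEmb h i) r)) := by
    funext r c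
    rw [Matrix.submatrix_apply, Fin.succAbove_last, Matrix.of_apply,
      if_neg (Fin.ne_last_of_lt (Fin.castSucc_lt_last c)), Matrix.vandermonde]
    rw [← orderEmb_erase h i]
    simp
  rw [hsub, det_vandermonde_deltaSet, Matrix.of_apply, if_pos rfl, wAB_erase h i]
  have hpow : (-1 : R) ^ ((i : ℕ) + (Fin.last n : ℕ)) = (-1 : R) ^ (n - (i : ℕ)) := by
    have hle : (i : ℕ) ≤ n := Nat.lt_succ_iff.1 i.isLt
    have : (i : ℕ) + (Fin.last n : ℕ) = (n - (i : ℕ)) + 2 * (i : ℕ) := by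
      simp only [Fin.val_last]; omega
    rw [this, pow_add, pow_mul]
    simp
  rw [hpow]

lemma Vd_zero {A : Finset (Fin m)} {n : ℕ} (h : A.card = n + 1) (w : Fin m → R) {d : ℕ}
    (hd : d < n) : Vd w A d = 0 := by
  rw [Vd_eq_det h w d]
  apply Matrix.det_zero_of_column_eq (i := (⟨d, by omega⟩ : Fin (n+1))) (j := Fin.last n)
  · intro hcon
    have := congrArg Fin.val hcon
    simp only [Fin.val_last] at this
    omega
  · intro k
    rw [Matrix.of_apply, Matrix.of_apply, if_pos rfl, if_neg]
    intro hcon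
    have := congrArg Fin.val hcon
    simp only [Fin.val_last] at this
    omega

lemma Vd_base {A : Finset (Fin m)} {n : ℕ} (h : A.card = n + 1) (w : Fin m → R) :
    Vd w A n = deltaSet w A := by
  rw [Vd_eq_det h w n, ← det_vandermonde_deltaSet h w]
  congr 1
  funext i j
  rw [Matrix.of_apply, Matrix.vandermonde]
  by_cases hj : j = Fin.last n
  · subst hj; simp
  · rw [if_neg hj, Matrix.of_apply]

lemma Vd_rec {A : Finset (Fin m)} {n : ℕ} (h : A.card = n + 1) (w : Fin m → R) (d : ℕ) :
    ∑ c ∈ Finset.range (n + 2), (-1 : R) ^ c * esym w A c * Vd w A (d + (n + 1 - c)) = 0 := by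
  have expand : ∀ c ∈ Finset.range (n+2),
      (-1 : R) ^ c * esym w A c * Vd w A (d + (n + 1 - c))
      = ∑ j ∈ A, (-1 : R) ^ (wAB (A.erase j) {j}) * deltaSet w (A.erase j)
          * ((-1 : R) ^ c * esym w A c * w j ^ (d + (n + 1 - c))) := by
    intro c _
    rw [Vd, Finset.mul_sum]
    exact Finset.sum_congr rfl fun j _ => by ring
  rw [Finset.sum_congr rfl expand, Finset.sum_comm]
  refine Finset.sum_eq_zero fun j hj => ?_
  rw [← Finset.mul_sum]
  have inner : ∑ c ∈ Finset.range (n+2), (-1:R)^c * esym w A c * w j ^ (d + (n+1-c))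
      = w j ^ d * ∑ c ∈ Finset.range (n+2), (-1:R)^c * esym w A c * w j ^ (n+1-c) := by
    rw [Finset.mul_sum]
    exact Finset.sum_congr rfl fun c _ => by rw [pow_add]; ring
  have hprod : ∑ c ∈ Finset.range (n+2), (-1:R)^c * esym w A c * w j ^ (n+1-c) = 0 := by
    have hps := prod_sub_eq w A (w j)
    rw [h] at hps
    rw [← hps]
    exact Finset.prod_eq_zero hj (sub_self _)
  rw [inner, hprod, mul_zero, mul_zero]

def gfun (w : Fin m → R) (A : Finset (Fin m)) : ℕ → R
  | 0 => 1
  | (nn+1) => ∑ c ∈ Finset.range A.card, (-1:R)^c * esym w A (c+1) *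
      (if c ≤ nn then gfun w A (nn - c) else 0)
  decreasing_by exact Nat.lt_succ_of_le (Nat.sub_le _ _)

lemma gfun_zero (w : Fin m → R) (A : Finset (Fin m)) : gfun w A 0 = 1 := by rw [gfun]

lemma gfun_succ (w : Fin m → R) (A : Finset (Fin m)) (nn : ℕ) :
    gfun w A (nn+1) = ∑ c ∈ Finset.range A.card, (-1:R)^c * esym w A (c+1) *
      (if c ≤ nn then gfun w A (nn - c) else 0) := by rw [gfun]

lemma Vd_closed {A : Finset (Fin m)} {n : ℕ} (h : A.card = n + 1) (w : Fin m → R) :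
    ∀ nn, Vd w A (n + nn) = deltaSet w A * gfun w A nn := by
  intro nn
  induction nn using Nat.strong_induction_on with
  | _ nn ih =>
    match nn with
    | 0 => rw [Nat.add_zero, Vd_base h w, gfun_zero, mul_one]
    | Nat.succ nn =>
      have hrec := Vd_rec h w nn
      rw [Finset.sum_range_succ'
        (fun c => (-1:R)^c * esym w A c * Vd w A (nn + (n+1-c)))] at hrec
      have hstep : ∀ c ∈ Finset.range (n+1),
          (-1:R)^(c+1) * esym w A (c+1) * Vd w A (nn + (n+1-(c+1)))
          = -((-1:R)^c * esym w A (c+1)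
              * (deltaSet w A * (if c ≤ nn then gfun w A (nn-c) else 0))) := by
        intro c hc
        rw [Finset.mem_range] at hc
        by_cases hcn : c ≤ nn
        · rw [if_pos hcn]
          have h1 : nn + (n+1-(c+1)) = n + (nn - c) := by omega
          rw [h1, ih (nn-c) (by omega), pow_succ]
          ring
        · rw [if_neg hcn]
          have h1 : nn + (n+1-(c+1)) < n := by omega
          rw [Vd_zero h w h1]
          ring
      rw [Finset.sum_congr rfl hstep, Finset.sum_neg_distrib, esym_zero, pow_zero, one_mul,
        one_mul, Nat.sub_zero] at hrec
      have hidx : nn + (n+1) = n + (nn+1) := by omega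
      rw [hidx] at hrec
      have hsum : ∑ c ∈ Finset.range (n+1), (-1:R)^c * esym w A (c+1)
          * (deltaSet w A * (if c ≤ nn then gfun w A (nn-c) else 0))
          = deltaSet w A * gfun w A (nn+1) := by
        rw [gfun_succ, h, Finset.mul_sum]
        exact Finset.sum_congr rfl fun c _ => by ring
      rw [hsum] at hrec
      linear_combination hrec

lemma window_mid {A : Finset (Fin m)} {n : ℕ} (h : A.card = n + 1) (w : Fin m → R) {s : ℕ}
    (hs1 : 1 ≤ s) (hsn : s ≤ n) :
    ∑ c ∈ Finset.range (s+1), (-1:R)^c * esym w A c * gfun w A (s - c) = 0 := by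
  obtain ⟨s', rfl⟩ : ∃ s', s = s' + 1 := ⟨s - 1, by omega⟩
  rw [Finset.sum_range_succ' (fun c => (-1:R)^c * esym w A c * gfun w A (s'+1-c)),
    esym_zero, pow_zero, one_mul, one_mul, Nat.sub_zero, gfun_succ, h]
  have h1 : ∀ c ∈ Finset.range (s'+1),
      (-1:R)^(c+1) * esym w A (c+1) * gfun w A (s'+1-(c+1))
      = -((-1:R)^c * esym w A (c+1) * (if c ≤ s' then gfun w A (s'-c) else 0)) := by
    intro c hc
    rw [Finset.mem_range] at hc
    rw [if_pos (by omega : c ≤ s')]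
    have hx : s'+1-(c+1) = s'-c := by omega
    rw [hx, pow_succ]
    ring
  rw [Finset.sum_congr rfl h1, Finset.sum_neg_distrib]
  have h2 : ∑ c ∈ Finset.range (s'+1),
      ((-1:R)^c * esym w A (c+1) * (if c ≤ s' then gfun w A (s'-c) else 0))
      = ∑ c ∈ Finset.range (n+1),
      ((-1:R)^c * esym w A (c+1) * (if c ≤ s' then gfun w A (s'-c) else 0)) := by
    apply Finset.sum_subset
    · intro x hx
      rw [Finset.mem_range] at hx ⊢
      omega
    · intro c _ hcn
      rw [Finset.mem_range] at hcn
      rw [if_neg (by omega), mul_zero]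
  rw [h2]
  ring

lemma window_top {A : Finset (Fin m)} {n : ℕ} (h : A.card = n + 1) (w : Fin m → R) :
    ∑ c ∈ Finset.range (n+1), (-1:R)^c * esym w A c * gfun w A (n+1-c)
      = (-1:R)^n * ∏ a ∈ A, w a := by
  rw [Finset.sum_range_succ' (fun c => (-1:R)^c * esym w A c * gfun w A (n+1-c)),
    esym_zero, pow_zero, one_mul, one_mul, Nat.sub_zero, gfun_succ, h]
  have h1 : ∀ c ∈ Finset.range (n+1),
      (-1:R)^c * esym w A (c+1) * (if c ≤ n then gfun w A (n-c) else 0)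
      = (-1:R)^c * esym w A (c+1) * gfun w A (n-c) := by
    intro c hc
    rw [Finset.mem_range] at hc
    rw [if_pos (by omega : c ≤ n)]
  rw [Finset.sum_congr rfl h1,
    Finset.sum_range_succ (fun c => (-1:R)^c * esym w A (c+1) * gfun w A (n-c))]
  have h2 : ∀ c ∈ Finset.range n,
      (-1:R)^(c+1) * esym w A (c+1) * gfun w A (n+1-(c+1))
      = -((-1:R)^c * esym w A (c+1) * gfun w A (n-c)) := by
    intro c hc
    have hx : n+1-(c+1) = n-c := by omega
    rw [hx, pow_succ]
    ring
  rw [Finset.sum_congr rfl h2, Finset.sum_neg_distrib, Nat.sub_self, gfun_zero]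
  have hes : esym w A (n+1) = ∏ a ∈ A, w a := by
    rw [← h]
    exact esym_self w A
  rw [hes]
  ring

lemma tri_swap {n : ℕ} (F : ℕ → ℕ → R) :
    ∑ c ∈ Finset.range (n+1), ∑ u ∈ Finset.range (n+1-c), F c u
      = ∑ u ∈ Finset.range (n+1), ∑ c ∈ Finset.range (n+1-u), F c u := by
  have key : ∀ (G : ℕ → ℕ → R), ∑ c ∈ Finset.range (n+1), ∑ u ∈ Finset.range (n+1-c), G c u
      = ∑ c ∈ Finset.range (n+1), ∑ u ∈ Finset.range (n+1), if c + u ≤ n then G c u else 0 := by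
    intro G
    refine Finset.sum_congr rfl fun c hc => ?_
    rw [Finset.mem_range] at hc
    rw [← Finset.sum_filter]
    apply Finset.sum_congr _ fun _ _ => rfl
    ext u
    simp only [Finset.mem_filter, Finset.mem_range]
    omega
  rw [key F, key (fun u c => F c u), Finset.sum_comm]
  refine Finset.sum_congr rfl fun u _ => Finset.sum_congr rfl fun c _ => ?_
  rw [Nat.add_comm]

end Aux

theorem stmt6 {R : Type*} [CommRing R] (m : ℕ) (w : Fin m → R)
    (A : Finset (Fin m)) (hA : A.Nonempty) :
    ∑ j ∈ A, w j * deltaSet w (A.erase j) *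
        (∏ b ∈ A.erase j, (1 - w j * w b)) *
        (-1 : R) ^ (wAB (A.erase j) {j}) =
      (-1 : R) ^ (A.card - 1) * deltaSet w A *
        (if Even A.card then (∏ a ∈ A, w a) - 1 else ∏ a ∈ A, w a) := by
  obtain ⟨n, h⟩ : ∃ n, A.card = n + 1 := ⟨A.card - 1, by
    have := Finset.card_pos.2 hA; omega⟩
  have step1 : ∀ j ∈ A,
      w j * deltaSet w (A.erase j) * (∏ b ∈ A.erase j, (1 - w j * w b))
          * (-1:R)^(wAB (A.erase j) {j})
      = ∑ c ∈ Finset.range (n+1), ∑ t ∈ Finset.range (n+1-c),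
          (-1:R)^c * esym w A c
            * ((-1:R)^(wAB (A.erase j) {j}) * w j ^ (c+2*t+1) * deltaSet w (A.erase j)) := by
    intro j hj
    have hk := key_expand_A w A hj
    rw [h] at hk
    calc w j * deltaSet w (A.erase j) * (∏ b ∈ A.erase j, (1 - w j * w b))
          * (-1:R)^(wAB (A.erase j) {j})
        = (w j * ∏ b ∈ A.erase j, (1 - w j * w b))
            * ((-1:R)^(wAB (A.erase j) {j}) * deltaSet w (A.erase j)) := by ring
      _ = _ := by
          rw [hk, Finset.sum_mul]
          refine Finset.sum_congr rfl fun c _ => ?_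
          rw [Finset.mul_sum, Finset.sum_mul]
          refine Finset.sum_congr rfl fun t _ => ?_
          ring
  rw [Finset.sum_congr rfl step1, Finset.sum_comm]
  have step2 : ∀ c ∈ Finset.range (n+1),
      ∑ j ∈ A, ∑ t ∈ Finset.range (n+1-c),
        (-1:R)^c * esym w A c
          * ((-1:R)^(wAB (A.erase j) {j}) * w j ^ (c+2*t+1) * deltaSet w (A.erase j))
      = ∑ t ∈ Finset.range (n+1-c), (-1:R)^c * esym w A c * Vd w A (c+2*t+1) := by
    intro c _
    rw [Finset.sum_comm]
    refine Finset.sum_congr rfl fun t _ => ?_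
    rw [Vd, ← Finset.mul_sum]
  rw [Finset.sum_congr rfl step2]
  have step3 : ∀ c ∈ Finset.range (n+1),
      ∑ t ∈ Finset.range (n+1-c), (-1:R)^c * esym w A c * Vd w A (c+2*t+1)
      = ∑ u ∈ Finset.range (n+1-c), (-1:R)^c * esym w A c * Vd w A (2*n+1-2*u-c) := by
    intro c hc
    rw [Finset.mem_range] at hc
    rw [← Finset.sum_range_reflect
      (fun u => (-1:R)^c * esym w A c * Vd w A (2*n+1-2*u-c)) (n+1-c)]
    refine Finset.sum_congr rfl fun t ht => ?_
    rw [Finset.mem_range] at ht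
    congr 2
    omega
  rw [Finset.sum_congr rfl step3,
    tri_swap (fun c u => (-1:R)^c * esym w A c * Vd w A (2*n+1-2*u-c))]
  have step4 : ∀ u ∈ Finset.range (n+1),
      ∑ c ∈ Finset.range (n+1-u), (-1:R)^c * esym w A c * Vd w A (2*n+1-2*u-c)
      = if u = 0 then deltaSet w A * ((-1:R)^n * ∏ a ∈ A, w a)
        else if 2*u = n+1 then deltaSet w A else 0 := by
    intro u hu
    rw [Finset.mem_range] at hu
    by_cases hu0 : u = 0
    · subst hu0
      rw [if_pos rfl, Nat.sub_zero]
      have h1 : ∀ c ∈ Finset.range (n+1), (-1:R)^c * esym w A c * Vd w A (2*n+1-2*0-c)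
          = deltaSet w A * ((-1:R)^c * esym w A c * gfun w A (n+1-c)) := by
        intro c hc
        rw [Finset.mem_range] at hc
        have hx : 2*n+1-2*0-c = n + (n+1-c) := by omega
        rw [hx, Vd_closed h w]
        ring
      rw [Finset.sum_congr rfl h1, ← Finset.mul_sum, window_top h w]
    · rw [if_neg hu0]
      by_cases h2u : 2*u = n+1
      · rw [if_pos h2u]
        have hx : n+1-u = (n-u)+1 := by omega
        rw [hx, Finset.sum_range_succ'
          (fun c => (-1:R)^c * esym w A c * Vd w A (2*n+1-2*u-c))]
        have hz : ∀ c ∈ Finset.range (n-u),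
            (-1:R)^(c+1) * esym w A (c+1) * Vd w A (2*n+1-2*u-(c+1)) = 0 := by
          intro c hc
          rw [Finset.mem_range] at hc
          rw [Vd_zero h w (by omega : 2*n+1-2*u-(c+1) < n), mul_zero]
        rw [Finset.sum_congr rfl hz, Finset.sum_const_zero, zero_add, esym_zero, pow_zero,
          one_mul, one_mul, Nat.sub_zero]
        have hx2 : 2*n+1-2*u = n := by omega
        rw [hx2, Vd_base h w]
      · rw [if_neg h2u]
        by_cases hbig : n+1 < 2*u
        · refine Finset.sum_eq_zero fun c hc => ?_
          rw [Finset.mem_range] at hc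
          rw [Vd_zero h w (by omega), mul_zero]
        · have hu1 : 1 ≤ u := by omega
          have h2un : 2*u ≤ n := by omega
          have hsplit : ∑ c ∈ Finset.range (n+1-u), (-1:R)^c * esym w A c * Vd w A (2*n+1-2*u-c)
              = ∑ c ∈ Finset.range ((n+1-2*u)+1), (-1:R)^c * esym w A c * Vd w A (2*n+1-2*u-c) := by
            symm
            apply Finset.sum_subset
            · intro x hx
              rw [Finset.mem_range] at hx ⊢
              omega
            · intro c hc hcn
              rw [Finset.mem_range] at hc
              rw [Finset.mem_range] at hcn
              rw [Vd_zero h w (by omega), mul_zero]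
          rw [hsplit]
          have h1 : ∀ c ∈ Finset.range ((n+1-2*u)+1),
              (-1:R)^c * esym w A c * Vd w A (2*n+1-2*u-c)
              = deltaSet w A * ((-1:R)^c * esym w A c * gfun w A ((n+1-2*u)-c)) := by
            intro c hc
            rw [Finset.mem_range] at hc
            have hx : 2*n+1-2*u-c = n + ((n+1-2*u)-c) := by omega
            rw [hx, Vd_closed h w]
            ring
          rw [Finset.sum_congr rfl h1, ← Finset.mul_sum,
            window_mid h w (by omega : 1 ≤ n+1-2*u) (by omega : n+1-2*u ≤ n), mul_zero]
  rw [Finset.sum_congr rfl step4]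
  rw [Finset.sum_range_succ' (fun u => if u = 0 then deltaSet w A * ((-1:R)^n * ∏ a ∈ A, w a)
        else if 2*u = n+1 then deltaSet w A else 0)]
  have e1 : ∀ u ∈ Finset.range n,
      (if u+1 = 0 then deltaSet w A * ((-1:R)^n * ∏ a ∈ A, w a)
        else if 2*(u+1) = n+1 then deltaSet w A else 0)
      = (if 2*(u+1) = n+1 then deltaSet w A else 0) := by
    intro u _
    rw [if_neg (Nat.succ_ne_zero u)]
  rw [Finset.sum_congr rfl e1, if_pos rfl, h, Nat.add_sub_cancel]
  by_cases hev : Even (n+1)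
  · obtain ⟨r, hr⟩ := hev
    have hsum : ∑ u ∈ Finset.range n, (if 2*(u+1) = n+1 then deltaSet w A else 0)
        = deltaSet w A := by
      rw [Finset.sum_eq_single (r-1)]
      · rw [if_pos (by omega)]
      · intro b _ hb
        rw [if_neg (by omega)]
      · intro hnot
        exact absurd (Finset.mem_range.2 (by omega)) hnot
    rw [hsum, if_pos ⟨r, hr⟩]
    have hodd : Odd n := by
      refine Nat.odd_iff.2 ?_
      omega
    rw [Odd.neg_one_pow hodd]
    ring
  · have hmod : ¬ (n+1) % 2 = 0 := by
      intro hc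
      exact hev (Nat.even_iff.2 hc)
    have hsum : ∑ u ∈ Finset.range n, (if 2*(u+1) = n+1 then deltaSet w A else 0) = 0 := by
      refine Finset.sum_eq_zero fun u _ => ?_
      rw [if_neg (by omega)]
    rw [hsum, if_neg hev]
    ring
end

section
/- (Determinant formula for the unitary autocorrelation.) Let $0\le m\le n$ and $N\ge 0$. Define $D_{N,m,n}(w_1,\dots,w_n)$ as the $n\times n$ determinant whose $(j,\cdot)$-row is $(1, w_j, \dots, w_j^{m-1}, w_j^{N+m}, w_j^{N+m+1},\dots, w_j^{N+n-1})$. Then $D_{N,m,n}(w_1,\dots,w_n) = \sum_{\sigma\in\Xi_m} \operatorname{sgn}(\sigma)\, \Big[\prod_{1\le \ell<j\le m}(w_{\sigma(j)}-w_{\sigma(\ell)})\Big] \Big[\prod_{m+1\le p<q\le n}(w_{\sigma(q)}-w_{\sigma(p)})\Big] \big(w_{\sigma(m+1)}\cdots w_{\sigma(n)}\big)^{N+m}$. -/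
open Finset

open Equiv

lemma aux_perm_id {m : ℕ} {α : Type*} [LinearOrder α] {f g : Fin m → α}
    (q : Equiv.Perm (Fin m)) (hf : StrictMono f) (hg : StrictMono g)
    (h : ∀ i, f i = g (q i)) : q = 1 ∧ f = g := by
  haveI : WellFoundedLT (Fin m) := Finite.to_wellFoundedLT
  have hq : StrictMono (q : Fin m → Fin m) := by
    intro i j hij
    have := hf hij
    rw [h i, h j] at this
    exact hg.lt_iff_lt.mp this
  have hqid : (q : Fin m → Fin m) = id := by
    have hr : Set.range (q : Fin m → Fin m) = Set.range (id : Fin m → Fin m) := by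
      rw [Set.range_id, Set.range_eq_univ]; exact q.surjective
    exact (hq.range_inj strictMono_id).mp hr
  constructor
  · ext i; exact congrArg Fin.val (congrFun hqid i)
  · funext i; rw [h i, congrFun hqid i]; rfl

lemma aux_vdm_sum {R : Type*} [CommRing R] {m : ℕ} (u : Fin m → R) :
    ∑ π : Equiv.Perm (Fin m), ((Equiv.Perm.sign π : ℤ) : R) * ∏ i, u (π i) ^ (i : ℕ)
      = ∏ i : Fin m, ∏ j ∈ Ioi i, (u j - u i) := by
  rw [← Matrix.det_vandermonde, Matrix.det_apply']
  rfl

lemma aux_vdm_sum' {R : Type*} [CommRing R] {k : ℕ} (M : ℕ) (v : Fin k → R) :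
    ∑ π : Equiv.Perm (Fin k), ((Equiv.Perm.sign π : ℤ) : R) * ∏ j, v (π j) ^ (M + (j : ℕ))
      = (∏ j : Fin k, v j) ^ M * ∏ i : Fin k, ∏ j ∈ Ioi i, (v j - v i) := by
  rw [← aux_vdm_sum, Finset.mul_sum]
  refine Finset.sum_congr rfl fun π _ => ?_
  have : ∏ j : Fin k, v (π j) ^ (M + (j : ℕ))
      = (∏ j : Fin k, v j) ^ M * ∏ j : Fin k, v (π j) ^ (j : ℕ) := by
    simp only [pow_add, Finset.prod_mul_distrib]
    rw [← Finset.prod_pow]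
    rw [Equiv.prod_comp π (fun j => v j ^ M)]
  rw [this]; ring

lemma aux_reindex_pairs {β : Type*} [CommMonoid β] {m n : ℕ} (a : Fin m → Fin n)
    (S : Finset (Fin n × Fin n)) (f : Fin n → Fin n → β)
    (hinj : Function.Injective a)
    (hmem : ∀ i j : Fin m, ((a i, a j) ∈ S ↔ i < j))
    (hsurj : ∀ p ∈ S, ∃ i j : Fin m, p = (a i, a j)) :
    ∏ i : Fin m, ∏ j ∈ Ioi i, f (a i) (a j) = ∏ p ∈ S, f p.1 p.2 := by
  rw [← Finset.prod_sigma (Finset.univ) (fun i => Ioi i) (fun x => f (a x.1) (a x.2))]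
  refine Finset.prod_bij (fun x _ => (a x.1, a x.2)) ?_ ?_ ?_ ?_
  · intro x hx
    simp only [Finset.mem_sigma, Finset.mem_univ, Finset.mem_Ioi, true_and] at hx
    exact (hmem _ _).mpr hx
  · rintro ⟨x1, x2⟩ hx ⟨y1, y2⟩ hy h
    simp only [Prod.mk.injEq] at h
    obtain ⟨h1, h2⟩ := h
    exact Sigma.ext (hinj h1) (heq_of_eq (hinj h2))
  · intro p hp
    obtain ⟨i, j, rfl⟩ := hsurj p hp
    exact ⟨⟨i, j⟩, by simpa using (hmem i j).mp hp, rfl⟩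
  · intro x hx; rfl

open scoped Classical in
/-- Determinant formula for the unitary autocorrelation. -/
theorem stmt10 {R : Type*} [CommRing R] (n m N : ℕ) (hm : m ≤ n)
    (w : Fin n → R) :
    Matrix.det (Matrix.of fun j c : Fin n =>
        w j ^ (if (c : ℕ) < m then (c : ℕ) else N + (c : ℕ)))
    = ∑ σ ∈ Finset.univ.filter
          (fun σ : Equiv.Perm (Fin n) =>
            (∀ a b : Fin n, a < b → (b : ℕ) < m → σ a < σ b) ∧
            (∀ a b : Fin n, a < b → m ≤ (a : ℕ) → σ a < σ b)),
        ((Equiv.Perm.sign σ : ℤ) : R) *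
          (∏ p ∈ Finset.univ.filter
              (fun p : Fin n × Fin n => p.1 < p.2 ∧ (p.2 : ℕ) < m),
            (w (σ p.2) - w (σ p.1))) *
          (∏ p ∈ Finset.univ.filter
              (fun p : Fin n × Fin n => p.1 < p.2 ∧ m ≤ (p.1 : ℕ)),
            (w (σ p.2) - w (σ p.1))) *
          (∏ c ∈ Finset.univ.filter (fun c : Fin n => m ≤ (c : ℕ)),
            w (σ c)) ^ (N + m) := by
  have hk : m + (n - m) = n := by omega
  set k := n - m with hk0
  set E : Fin m ⊕ Fin k ≃ Fin n := finSumFinEquiv.trans (finCongr hk) with hE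
  set a : Fin m → Fin n := fun i => E (Sum.inl i) with haa
  set b : Fin k → Fin n := fun j => E (Sum.inr j) with hbb
  have ha : ∀ i : Fin m, ((a i : ℕ)) = (i : ℕ) := by
    intro i; simp [haa, hE]
  have hb : ∀ j : Fin k, ((b j : ℕ)) = m + (j : ℕ) := by
    intro j; simp [hbb, hE]
  have haLt : ∀ i j : Fin m, a i < a j ↔ i < j := by
    intro i j
    rw [Fin.lt_def, Fin.lt_def, ha, ha]
  have hbLt : ∀ i j : Fin k, b i < b j ↔ i < j := by
    intro i j
    rw [Fin.lt_def, Fin.lt_def, hb, hb]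
    omega
  have haInj : Function.Injective a := fun i j h => by
    have := congrArg Fin.val h; rw [ha, ha] at this; exact Fin.ext this
  have hbInj : Function.Injective b := fun i j h => by
    have := congrArg Fin.val h; rw [hb, hb] at this; exact Fin.ext (by omega)
  have hcaseA : ∀ c : Fin n, (c : ℕ) < m → ∃ i : Fin m, c = a i := by
    intro c h
    exact ⟨⟨c, h⟩, Fin.ext (by rw [ha])⟩
  have hcaseB : ∀ c : Fin n, m ≤ (c : ℕ) → ∃ j : Fin k, c = b j := by
    intro c h
    refine ⟨⟨(c : ℕ) - m, by omega⟩, Fin.ext ?_⟩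
    rw [hb]; simp; omega
  set Φ : Equiv.Perm (Fin m) × Equiv.Perm (Fin k) → Equiv.Perm (Fin n) :=
    fun π => E.permCongr (Equiv.sumCongr π.1 π.2) with hΦ
  have hΦa : ∀ π i, Φ π (a i) = a (π.1 i) := by
    intro π i; simp [hΦ, haa, Equiv.permCongr_apply]
  have hΦb : ∀ π j, Φ π (b j) = b (π.2 j) := by
    intro π j; simp [hΦ, hbb, Equiv.permCongr_apply]
  have hΦs : ∀ π, Equiv.Perm.sign (Φ π)
      = Equiv.Perm.sign π.1 * Equiv.Perm.sign π.2 := by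
    intro π
    rw [hΦ]
    rw [Equiv.Perm.sign_permCongr, Equiv.Perm.sign_sumCongr]
  set P : Equiv.Perm (Fin n) → Prop := fun σ =>
      (∀ a b : Fin n, a < b → (b : ℕ) < m → σ a < σ b) ∧
      (∀ a b : Fin n, a < b → m ≤ (a : ℕ) → σ a < σ b) with hP
  have hPa : ∀ τ : Equiv.Perm (Fin n), P τ → StrictMono (fun i => τ (a i)) := by
    intro τ hτ i j hij
    exact hτ.1 _ _ ((haLt i j).mpr hij) (by rw [ha]; exact j.2)
  have hPb : ∀ τ : Equiv.Perm (Fin n), P τ → StrictMono (fun j => τ (b j)) := by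
    intro τ hτ i j hij
    exact hτ.2 _ _ ((hbLt i j).mpr hij) (by rw [hb]; omega)
  rw [Matrix.det_apply']
  simp only [Matrix.of_apply]
  have step1 :
      (∑ σ : Equiv.Perm (Fin n), ((Equiv.Perm.sign σ : ℤ) : R) * ∏ c : Fin n,
          w (σ c) ^ (if (c : ℕ) < m then (c : ℕ) else N + (c : ℕ)))
      = ∑ p ∈ (Finset.univ.filter P) ×ˢ
            (Finset.univ : Finset (Equiv.Perm (Fin m) × Equiv.Perm (Fin k))),
          ((Equiv.Perm.sign (p.1 * Φ p.2) : ℤ) : R) * ∏ c : Fin n,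
            w ((p.1 * Φ p.2) c) ^ (if (c : ℕ) < m then (c : ℕ) else N + (c : ℕ)) := by
    refine (Finset.sum_bij (fun p _ => p.1 * Φ p.2) ?_ ?_ ?_ ?_).symm
    · intro p _; exact Finset.mem_univ _
    · -- injectivity
      intro p hp q hq h
      simp only [Finset.mem_product, Finset.mem_filter, Finset.mem_univ, true_and,
        and_true] at hp hq
      have h' : ∀ c, p.1 (Φ p.2 c) = q.1 (Φ q.2 c) := by
        intro c
        have := congrArg (fun (e : Equiv.Perm (Fin n)) => e c) h
        simpa [Equiv.Perm.mul_apply] using this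
      -- a-side
      have hA : ∀ i, p.1 (a i) = q.1 (a ((q.2.1 * p.2.1⁻¹) i)) := by
        intro i
        have := h' (a (p.2.1⁻¹ i))
        rw [hΦa, hΦa] at this
        simpa [Equiv.Perm.mul_apply] using this
      obtain ⟨hqm, hfa⟩ := aux_perm_id (q.2.1 * p.2.1⁻¹) (hPa p.1 hp) (hPa q.1 hq) hA
      have h21 : q.2.1 = p.2.1 := by
        have := mul_inv_eq_one.mp hqm; exact this
      -- b-side
      have hB : ∀ j, p.1 (b j) = q.1 (b ((q.2.2 * p.2.2⁻¹) j)) := by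
        intro j
        have := h' (b (p.2.2⁻¹ j))
        rw [hΦb, hΦb] at this
        simpa [Equiv.Perm.mul_apply] using this
      obtain ⟨hqk, hfb⟩ := aux_perm_id (q.2.2 * p.2.2⁻¹) (hPb p.1 hp) (hPb q.1 hq) hB
      have h22 : q.2.2 = p.2.2 := mul_inv_eq_one.mp hqk
      have h1 : p.1 = q.1 := by
        apply Equiv.ext
        intro c
        rcases lt_or_ge (c : ℕ) m with hc | hc
        · obtain ⟨i, rfl⟩ := hcaseA c hc
          exact congrFun hfa i
        · obtain ⟨j, rfl⟩ := hcaseB c hc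
          exact congrFun hfb j
      have h2 : p.2 = q.2 := Prod.ext h21.symm h22.symm
      exact Prod.ext h1 h2
    · -- surjectivity
      intro σ _
      set s := Tuple.sort (fun i => σ (a i)) with hs
      set t := Tuple.sort (fun j => σ (b j)) with ht
      refine ⟨(σ * (Φ (s⁻¹, t⁻¹))⁻¹, (s⁻¹, t⁻¹)), ?_, inv_mul_cancel_right σ _⟩
      simp only [Finset.mem_product, Finset.mem_filter, Finset.mem_univ, true_and, and_true]
      have hτa : ∀ i, (σ * (Φ (s⁻¹, t⁻¹))⁻¹) (a i) = σ (a (s i)) := by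
        intro i
        have h1 : Φ (s⁻¹, t⁻¹) (a (s i)) = a i := by
          rw [hΦa]; simp
        have h2 : (Φ (s⁻¹, t⁻¹))⁻¹ (a i) = a (s i) := by
          rw [← h1]; simp
        simp [Equiv.Perm.mul_apply, h2]
      have hτb : ∀ j, (σ * (Φ (s⁻¹, t⁻¹))⁻¹) (b j) = σ (b (t j)) := by
        intro j
        have h1 : Φ (s⁻¹, t⁻¹) (b (t j)) = b j := by
          rw [hΦb]; simp
        have h2 : (Φ (s⁻¹, t⁻¹))⁻¹ (b j) = b (t j) := by
          rw [← h1]; simp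
        simp [Equiv.Perm.mul_apply, h2]
      have hmonoA : StrictMono (fun i => σ (a (s i))) := by
        have hmon : Monotone ((fun i => σ (a i)) ∘ s) := Tuple.monotone_sort _
        have hinj : Function.Injective ((fun i => σ (a i)) ∘ s) :=
          (σ.injective.comp haInj).comp s.injective
        exact hmon.strictMono_of_injective hinj
      have hmonoB : StrictMono (fun j => σ (b (t j))) := by
        have hmon : Monotone ((fun j => σ (b j)) ∘ t) := Tuple.monotone_sort _
        have hinj : Function.Injective ((fun j => σ (b j)) ∘ t) :=
          (σ.injective.comp hbInj).comp t.injective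
        exact hmon.strictMono_of_injective hinj
      constructor
      · intro c₁ c₂ hlt hm2
        have hm1 : (c₁ : ℕ) < m := lt_trans (Fin.lt_def.mp hlt) hm2
        obtain ⟨i₁, rfl⟩ := hcaseA c₁ hm1
        obtain ⟨i₂, rfl⟩ := hcaseA c₂ hm2
        rw [hτa, hτa]
        exact hmonoA ((haLt _ _).mp hlt)
      · intro c₁ c₂ hlt hm1
        have hm2 : m ≤ (c₂ : ℕ) := le_trans hm1 (le_of_lt (Fin.lt_def.mp hlt))
        obtain ⟨j₁, rfl⟩ := hcaseB c₁ hm1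
        obtain ⟨j₂, rfl⟩ := hcaseB c₂ hm2
        rw [hτb, hτb]
        exact hmonoB ((hbLt _ _).mp hlt)
    · intro p hp; rfl
  rw [step1, Finset.sum_product]
  refine Finset.sum_congr rfl ?_
  intro τ hτ
  -- inner sum computation
  have hsplit : ∀ π : Equiv.Perm (Fin m) × Equiv.Perm (Fin k),
      (∏ c : Fin n, w ((τ * Φ π) c) ^ (if (c : ℕ) < m then (c : ℕ) else N + (c : ℕ)))
      = (∏ i : Fin m, w (τ (a (π.1 i))) ^ (i : ℕ)) *
        ∏ j : Fin k, w (τ (b (π.2 j))) ^ ((N + m) + (j : ℕ)) := by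
    intro π
    rw [← Equiv.prod_comp E (fun c => w ((τ * Φ π) c) ^
      (if (c : ℕ) < m then (c : ℕ) else N + (c : ℕ)))]
    rw [Fintype.prod_sum_type]
    congr 1
    · refine Finset.prod_congr rfl fun i _ => ?_
      have h1 : E (Sum.inl i) = a i := rfl
      rw [h1, Equiv.Perm.mul_apply, hΦa, if_pos (by rw [ha]; exact i.2), ha]
    · refine Finset.prod_congr rfl fun j _ => ?_
      have h1 : E (Sum.inr j) = b j := rfl
      rw [h1, Equiv.Perm.mul_apply, hΦb, if_neg (by rw [hb]; omega), hb]
      congr 1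
      omega
  have inner :
      (∑ π : Equiv.Perm (Fin m) × Equiv.Perm (Fin k),
        ((Equiv.Perm.sign (τ * Φ π) : ℤ) : R) * ∏ c : Fin n,
          w ((τ * Φ π) c) ^ (if (c : ℕ) < m then (c : ℕ) else N + (c : ℕ)))
      = ((Equiv.Perm.sign τ : ℤ) : R) *
        ((∏ i : Fin m, ∏ j ∈ Ioi i, (w (τ (a j)) - w (τ (a i)))) *
         ((∏ j : Fin k, w (τ (b j))) ^ (N + m) *
          ∏ i : Fin k, ∏ j ∈ Ioi i, (w (τ (b j)) - w (τ (b i))))) := by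
    have hterm : ∀ π : Equiv.Perm (Fin m) × Equiv.Perm (Fin k),
        ((Equiv.Perm.sign (τ * Φ π) : ℤ) : R) * ∏ c : Fin n,
          w ((τ * Φ π) c) ^ (if (c : ℕ) < m then (c : ℕ) else N + (c : ℕ))
        = ((Equiv.Perm.sign τ : ℤ) : R) *
          ((((Equiv.Perm.sign π.1 : ℤ) : R) * ∏ i : Fin m, w (τ (a (π.1 i))) ^ (i : ℕ)) *
           (((Equiv.Perm.sign π.2 : ℤ) : R) *
             ∏ j : Fin k, w (τ (b (π.2 j))) ^ ((N + m) + (j : ℕ)))) := by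
      intro π
      rw [hsplit π, Equiv.Perm.sign_mul, hΦs]
      push_cast
      ring
    rw [Finset.sum_congr rfl (fun π _ => hterm π)]
    rw [← Finset.mul_sum]
    congr 1
    rw [Fintype.sum_prod_type]
    refine Eq.trans (Finset.sum_congr rfl fun x _ =>
      (Finset.mul_sum Finset.univ
        (fun y : Equiv.Perm (Fin k) => ((Equiv.Perm.sign y : ℤ) : R) *
          ∏ j : Fin k, w (τ (b (y j))) ^ (N + m + (j : ℕ)))
        (((Equiv.Perm.sign x : ℤ) : R) *
          ∏ i : Fin m, w (τ (a (x i))) ^ (i : ℕ))).symm) ?_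
    rw [← Finset.sum_mul]
    rw [aux_vdm_sum (fun i => w (τ (a i))), aux_vdm_sum' (N + m) (fun j => w (τ (b j)))]
  rw [inner]
  -- now reindex the products
  have e1 : (∏ i : Fin m, ∏ j ∈ Ioi i, (w (τ (a j)) - w (τ (a i))))
      = ∏ p ∈ Finset.univ.filter
          (fun p : Fin n × Fin n => p.1 < p.2 ∧ (p.2 : ℕ) < m),
        (w (τ p.2) - w (τ p.1)) := by
    refine aux_reindex_pairs a _ (fun x y => w (τ y) - w (τ x)) haInj ?_ ?_
    · intro i j
      simp only [Finset.mem_filter, Finset.mem_univ, true_and]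
      rw [haLt, ha]
      exact and_iff_left_of_imp (fun _ => j.2)
    · intro p hp
      simp only [Finset.mem_filter, Finset.mem_univ, true_and] at hp
      obtain ⟨i, h1⟩ := hcaseA p.1 (lt_trans (Fin.lt_def.mp hp.1) hp.2)
      obtain ⟨j, h2⟩ := hcaseA p.2 hp.2
      exact ⟨i, j, by rw [← h1, ← h2]⟩
  have e2 : (∏ i : Fin k, ∏ j ∈ Ioi i, (w (τ (b j)) - w (τ (b i))))
      = ∏ p ∈ Finset.univ.filter
          (fun p : Fin n × Fin n => p.1 < p.2 ∧ m ≤ (p.1 : ℕ)),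
        (w (τ p.2) - w (τ p.1)) := by
    refine aux_reindex_pairs b _ (fun x y => w (τ y) - w (τ x)) hbInj ?_ ?_
    · intro i j
      simp only [Finset.mem_filter, Finset.mem_univ, true_and]
      rw [hbLt, hb]
      exact and_iff_left_of_imp (fun _ => Nat.le_add_right m i)
    · intro p hp
      simp only [Finset.mem_filter, Finset.mem_univ, true_and] at hp
      obtain ⟨i, h1⟩ := hcaseB p.1 hp.2
      obtain ⟨j, h2⟩ := hcaseB p.2 (le_trans hp.2 (le_of_lt (Fin.lt_def.mp hp.1)))
      exact ⟨i, j, by rw [← h1, ← h2]⟩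
  have e3 : (∏ j : Fin k, w (τ (b j)))
      = ∏ c ∈ Finset.univ.filter (fun c : Fin n => m ≤ (c : ℕ)), w (τ c) := by
    refine Finset.prod_bij (fun j _ => b j) ?_ ?_ ?_ ?_
    · intro j _
      simp only [Finset.mem_filter, Finset.mem_univ, true_and]
      rw [hb]; omega
    · intro i _ j _ h; exact hbInj h
    · intro c hc
      simp only [Finset.mem_filter, Finset.mem_univ, true_and] at hc
      obtain ⟨j, rfl⟩ := hcaseB c hc
      exact ⟨j, Finset.mem_univ _, rfl⟩
    · intro j _; rfl
  rw [e1, e2, e3]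
  ring
end

section
/- (Unitary combinatorial sum.) Let $0\le m\le n$, $N\ge 0$, and let $w_1,\dots,w_n$ be distinct nonzero elements of a field. Then $\frac{D_{N,m,n}(w_1,\dots,w_n)}{\prod_{1\le \ell<q\le n}(w_q-w_\ell)} = \sum_{\sigma\in\Xi_m} \frac{(w_{\sigma(m+1)}\cdots w_{\sigma(n)})^N}{\prod_{1\le \ell\le m,\ m+1\le q\le n} \big(1-w_{\sigma(\ell)}\,w_{\sigma(q)}^{-1}\big)}$, where $D_{N,m,n}$ is the $n\times n$ determinant with rows $(1,w_j,\dots,w_j^{m-1},w_j^{N+m},\dots,w_j^{N+n-1})$. -/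
open Finset

namespace Stmt11Aux

open Equiv Finset


open Finset Equiv

variable {n m : ℕ}

noncomputable def canonFun (S : Finset (Fin n)) (hS : S.card = m) (c : Fin n) : Fin n :=
  if h : (c : ℕ) < m then S.orderEmbOfFin hS ⟨c, h⟩
  else Sᶜ.orderEmbOfFin (by rw [card_compl, hS, Fintype.card_fin])
    ⟨(c : ℕ) - m, by have := c.isLt; omega⟩

lemma canonFun_injective (S : Finset (Fin n)) (hS : S.card = m) :
    Function.Injective (canonFun S hS) := by
  intro a b hab
  unfold canonFun at hab
  by_cases ha : (a : ℕ) < m <;> by_cases hb : (b : ℕ) < m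
  · rw [dif_pos ha, dif_pos hb] at hab
    have := (S.orderEmbOfFin hS).injective hab
    exact Fin.ext (congrArg Fin.val this :)
  · rw [dif_pos ha, dif_neg hb] at hab
    have h1 := Finset.orderEmbOfFin_mem S hS ⟨a, ha⟩
    rw [hab] at h1
    have h2 := Finset.orderEmbOfFin_mem Sᶜ (by rw [card_compl, hS, Fintype.card_fin])
      ⟨(b : ℕ) - m, by have := b.isLt; omega⟩
    rw [Finset.mem_compl] at h2
    exact absurd h1 h2
  · rw [dif_neg ha, dif_pos hb] at hab
    have h1 := Finset.orderEmbOfFin_mem S hS ⟨b, hb⟩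
    rw [← hab] at h1
    have h2 := Finset.orderEmbOfFin_mem Sᶜ (by rw [card_compl, hS, Fintype.card_fin])
      ⟨(a : ℕ) - m, by have := a.isLt; omega⟩
    rw [Finset.mem_compl] at h2
    exact absurd h1 h2
  · rw [dif_neg ha, dif_neg hb] at hab
    have := (Sᶜ.orderEmbOfFin (by rw [card_compl, hS, Fintype.card_fin])).injective hab
    have := congrArg Fin.val this
    simp only at this
    exact Fin.ext (by omega)

noncomputable def canonPerm (S : Finset (Fin n)) (hS : S.card = m) : Perm (Fin n) :=
  Equiv.ofBijective _ (Finite.injective_iff_bijective.mp (canonFun_injective S hS))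

lemma canonPerm_apply (S : Finset (Fin n)) (hS : S.card = m) (c : Fin n) :
    canonPerm S hS c = canonFun S hS c := rfl

lemma canonPerm_mem_iff (S : Finset (Fin n)) (hS : S.card = m) (c : Fin n) :
    canonPerm S hS c ∈ S ↔ (c : ℕ) < m := by
  rw [canonPerm_apply]
  unfold canonFun
  split_ifs with h
  · simp [h]
  · simp only [h, iff_false]
    have h2 := Finset.orderEmbOfFin_mem Sᶜ (by rw [card_compl, hS, Fintype.card_fin])
      ⟨(c : ℕ) - m, by have := c.isLt; omega⟩
    rw [Finset.mem_compl] at h2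
    exact h2

lemma canonPerm_mono1 (S : Finset (Fin n)) (hS : S.card = m) :
    ∀ a b : Fin n, a < b → (b : ℕ) < m → canonPerm S hS a < canonPerm S hS b := by
  intro a b hab hb
  have ha : (a : ℕ) < m := lt_trans hab hb
  rw [canonPerm_apply, canonPerm_apply]
  unfold canonFun
  rw [dif_pos ha, dif_pos hb]
  exact (S.orderEmbOfFin hS).strictMono (by exact hab)

lemma canonPerm_mono2 (S : Finset (Fin n)) (hS : S.card = m) :
    ∀ a b : Fin n, a < b → m ≤ (a : ℕ) → canonPerm S hS a < canonPerm S hS b := by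
  intro a b hab ha
  have ha' : ¬ (a : ℕ) < m := not_lt.mpr ha
  have hb' : ¬ (b : ℕ) < m := by
    have : (a : ℕ) < (b : ℕ) := hab
    omega
  rw [canonPerm_apply, canonPerm_apply]
  unfold canonFun
  rw [dif_neg ha', dif_neg hb']
  refine (Sᶜ.orderEmbOfFin _).strictMono ?_
  have : (a : ℕ) < (b : ℕ) := hab
  simp only [Fin.mk_lt_mk]
  omega

lemma eq_canonPerm (S : Finset (Fin n)) (hS : S.card = m) (σ : Perm (Fin n))
    (h1 : ∀ a b : Fin n, a < b → (b : ℕ) < m → σ a < σ b)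
    (h2 : ∀ a b : Fin n, a < b → m ≤ (a : ℕ) → σ a < σ b)
    (him : ∀ c : Fin n, σ c ∈ S ↔ (c : ℕ) < m) :
    σ = canonPerm S hS := by
  have hm : m ≤ n := by simpa [hS] using Finset.card_le_univ S
  have g1 : (fun i : Fin m => σ (Fin.castLE hm i)) = ⇑(S.orderEmbOfFin hS) := by
    apply Finset.orderEmbOfFin_unique
    · intro x
      exact (him _).mpr (by simp [x.isLt])
    · intro i j hij
      exact h1 _ _ (by simpa using hij) (by simp [j.isLt])
  have g2 : (fun i : Fin (n - m) => σ ⟨m + (i : ℕ), by have := i.isLt; omega⟩)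
      = ⇑(Sᶜ.orderEmbOfFin (by rw [card_compl, hS, Fintype.card_fin])) := by
    apply Finset.orderEmbOfFin_unique
    · intro x
      rw [Finset.mem_compl]
      rw [him]
      simp
    · intro i j hij
      refine h2 _ _ ?_ (by simp)
      have : (i : ℕ) < (j : ℕ) := hij
      simp only [Fin.mk_lt_mk]
      omega
  refine Equiv.ext fun c => ?_
  rw [canonPerm_apply]
  unfold canonFun
  split_ifs with h
  · calc σ c = σ (Fin.castLE hm ⟨(c : ℕ), h⟩) := congrArg σ (Fin.ext rfl)
      _ = _ := congrFun g1 ⟨(c : ℕ), h⟩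
  · calc σ c = σ ⟨m + ((c : ℕ) - m), by have := c.isLt; omega⟩ :=
        congrArg σ (Fin.ext (by simp only []; omega))
      _ = _ := congrFun g2 ⟨(c : ℕ) - m, by have := c.isLt; omega⟩


lemma card_filter_lt (hm : m ≤ n) :
    ((univ : Finset (Fin n)).filter fun c : Fin n => (c : ℕ) < m).card = m := by
  have h : ((univ : Finset (Fin n)).filter fun c : Fin n => (c : ℕ) < m)
      = Finset.map (Fin.castLEOrderEmb hm).toEmbedding univ := by
    ext x
    simp only [mem_filter, mem_univ, true_and, Finset.mem_map, Fin.castLEOrderEmb_toEmbedding]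
    constructor
    · intro h
      exact ⟨⟨(x : ℕ), h⟩, Fin.ext rfl⟩
    · rintro ⟨a, -, rfl⟩
      exact a.isLt
  rw [h, card_map, card_univ, Fintype.card_fin]


lemma prod_pairs {M : Type*} [CommMonoid M] {n : ℕ}
    (s : Finset (Fin n × Fin n)) (hs : ∀ p : Fin n × Fin n, p ∈ s ↔ p.1 < p.2)
    (f : Fin n → Fin n → M) :
    ∏ p ∈ s, f p.1 p.2 = ∏ i, ∏ j ∈ Ioi i, f i j := by
  rw [Finset.prod_sigma']
  refine Finset.prod_nbij' (fun p => ⟨p.1, p.2⟩) (fun q => (q.1, q.2)) ?_ ?_ ?_ ?_ ?_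
  · intro p hp
    rw [Finset.mem_sigma]
    exact ⟨mem_univ _, Finset.mem_Ioi.mpr ((hs p).mp hp)⟩
  · intro q hq
    rw [Finset.mem_sigma] at hq
    exact (hs _).mpr (Finset.mem_Ioi.mp hq.2)
  · intro p _; rfl
  · intro q _; rfl
  · intro p _; rfl


def emb2 {n m : ℕ} (hm : m ≤ n) (i : Fin (n - m)) : Fin n :=
  ⟨m + (i : ℕ), by have := i.isLt; omega⟩


variable {F : Type*} [Field F]

lemma sum_perm_decomp (hm : m ≤ n) (Ξ H : Finset (Perm (Fin n)))
    (hΞ : ∀ σ : Perm (Fin n), σ ∈ Ξ ↔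
      ((∀ a b : Fin n, a < b → (b : ℕ) < m → σ a < σ b) ∧
       (∀ a b : Fin n, a < b → m ≤ (a : ℕ) → σ a < σ b)))
    (hH : ∀ τ : Perm (Fin n), τ ∈ H ↔ (∀ c : Fin n, (c : ℕ) < m ↔ ((τ c : ℕ) < m)))
    (f : Perm (Fin n) → F) :
    ∑ π : Perm (Fin n), f π = ∑ σ ∈ Ξ, ∑ τ ∈ H, f (σ * τ) := by
  classical
  have hScard : ∀ π : Perm (Fin n),
      (((univ : Finset (Fin n)).filter fun c : Fin n => (c : ℕ) < m).image π).card = m := by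
    intro π
    rw [Finset.card_image_of_injective _ π.injective, card_filter_lt hm]
  set Sof : Perm (Fin n) → Finset (Fin n) :=
    fun π => ((univ : Finset (Fin n)).filter fun c : Fin n => (c : ℕ) < m).image π with hSof
  have hmemS : ∀ (π : Perm (Fin n)) (c : Fin n), π c ∈ Sof π ↔ (c : ℕ) < m := by
    intro π c
    simp only [hSof, Finset.mem_image, mem_filter, mem_univ, true_and]
    constructor
    · rintro ⟨x, hx, hxc⟩
      rwa [← π.injective hxc]
    · intro h
      exact ⟨c, h, rfl⟩
  rw [← Finset.sum_product']
  refine Finset.sum_nbij'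
    (fun π => (canonPerm (Sof π) (hScard π), (canonPerm (Sof π) (hScard π))⁻¹ * π))
    (fun p => p.1 * p.2) ?_ ?_ ?_ ?_ ?_
  · intro π _
    rw [Finset.mem_product]
    constructor
    · exact (hΞ _).mpr ⟨canonPerm_mono1 _ _, canonPerm_mono2 _ _⟩
    · rw [hH]
      intro c
      have h1 : canonPerm (Sof π) (hScard π) (((canonPerm (Sof π) (hScard π))⁻¹ * π) c) = π c := by
        simp [Perm.mul_apply]
      rw [← hmemS π c, ← h1, canonPerm_mem_iff]
  · intro p _
    exact mem_univ _
  · intro π _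
    simp [mul_inv_cancel_left]
  · rintro ⟨σ, τ⟩ hp
    rw [Finset.mem_product] at hp
    obtain ⟨hσ, hτ⟩ := hp
    simp only at hσ hτ
    rw [hΞ] at hσ
    rw [hH] at hτ
    have hca : canonPerm (Sof (σ * τ)) (hScard (σ * τ)) = σ := by
      refine (eq_canonPerm _ _ σ hσ.1 hσ.2 ?_).symm
      intro c
      have hc : σ c = (σ * τ) (τ⁻¹ c) := by simp [Perm.mul_apply]
      rw [hc, hmemS (σ * τ) (τ⁻¹ c), hτ (τ⁻¹ c), ← Perm.mul_apply, mul_inv_cancel, Perm.one_apply]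
    simp only [Prod.mk.injEq]
    refine ⟨hca, ?_⟩
    rw [hca, inv_mul_cancel_left]
  · intro π _
    simp [mul_inv_cancel_left]


lemma inner_sum2 {n m N : ℕ} (hm : m ≤ n) (w : Fin n → F) (σ : Equiv.Perm (Fin n))
    (H : Finset (Equiv.Perm (Fin n)))
    (hH : ∀ τ : Equiv.Perm (Fin n), τ ∈ H ↔
      (∀ c : Fin n, (c : ℕ) < m ↔ ((τ c : ℕ) < m))) :
    ∑ τ ∈ H, Equiv.Perm.sign τ • ∏ c : Fin n,
        w (σ (τ c)) ^ (if (c : ℕ) < m then (c : ℕ) else N + (c : ℕ))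
    = (∏ i : Fin m, ∏ j ∈ Ioi i,
          (w (σ (Fin.castLE hm j)) - w (σ (Fin.castLE hm i))))
      * ((∏ i : Fin (n - m), w (σ (emb2 hm i)) ^ (N + m))
        * ∏ i : Fin (n - m), ∏ j ∈ Ioi i,
            (w (σ (emb2 hm j)) - w (σ (emb2 hm i)))) := by
  classical
  set v1 : Fin m → F := fun i => w (σ (Fin.castLE hm i)) with hv1
  set v2 : Fin (n - m) → F := fun i => w (σ (emb2 hm i)) with hv2
  set B : Matrix (Fin n) (Fin n) F := Matrix.of fun j c =>
    if ((j : ℕ) < m ↔ (c : ℕ) < m) then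
      w (σ j) ^ (if (c : ℕ) < m then (c : ℕ) else N + (c : ℕ)) else 0 with hB
  have hdet : B.det = ∑ τ ∈ H, Equiv.Perm.sign τ • ∏ c : Fin n,
      w (σ (τ c)) ^ (if (c : ℕ) < m then (c : ℕ) else N + (c : ℕ)) := by
    rw [Matrix.det_apply, ← Finset.sum_subset (Finset.subset_univ H)]
    · apply Finset.sum_congr rfl
      intro τ hτ
      congr 1
      apply Finset.prod_congr rfl
      intro c _
      simp only [hB, Matrix.of_apply]
      rw [if_pos (((hH τ).mp hτ) c).symm]
    · intro τ _ hτ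
      rw [hH] at hτ
      push_neg at hτ
      obtain ⟨c, hc⟩ := hτ
      have hz : B (τ c) c = 0 := by
        simp only [hB, Matrix.of_apply]
        refine if_neg (fun h => ?_)
        rcases hc with ⟨h1, h2⟩ | ⟨h1, h2⟩
        · exact absurd (h.mpr h1) (by omega)
        · exact absurd (h.mp h2) (by omega)
      have hz2 : ∏ i : Fin n, B (τ i) i = 0 :=
        Finset.prod_eq_zero (Finset.mem_univ c) hz
      rw [hz2, smul_zero]
  let E : Fin m ⊕ Fin (n - m) ≃ Fin n :=
    finSumFinEquiv.trans (finCongr (by omega))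
  have hEl : ∀ i : Fin m, E (Sum.inl i) = Fin.castLE hm i := by
    intro i
    apply Fin.ext
    simp [E]
  have hEr : ∀ i : Fin (n - m), E (Sum.inr i) = emb2 hm i := by
    intro i
    apply Fin.ext
    simp [E, emb2]
  have hsub : B.submatrix E E = Matrix.fromBlocks (Matrix.vandermonde v1) 0 0
      (Matrix.of fun i j : Fin (n - m) => v2 i ^ (N + m) * v2 i ^ (j : ℕ)) := by
    ext i j
    rcases i with i | i <;> rcases j with j | j
    · simp only [Matrix.submatrix_apply, hEl, hB, Matrix.of_apply,
        Matrix.fromBlocks_apply₁₁, Matrix.vandermonde]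
      have h1 : ((Fin.castLE hm i : Fin n) : ℕ) = (i : ℕ) := rfl
      have h2 : ((Fin.castLE hm j : Fin n) : ℕ) = (j : ℕ) := rfl
      rw [h1, h2, if_pos (by simp [i.isLt, j.isLt]), if_pos j.isLt]
    · simp only [Matrix.submatrix_apply, hEl, hEr, hB, Matrix.of_apply,
        Matrix.fromBlocks_apply₁₂, Matrix.zero_apply]
      rw [if_neg]
      simp only [emb2]
      simp [i.isLt]
    · simp only [Matrix.submatrix_apply, hEl, hEr, hB, Matrix.of_apply,
        Matrix.fromBlocks_apply₂₁, Matrix.zero_apply]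
      rw [if_neg]
      simp only [emb2]
      simp [j.isLt]
    · simp only [Matrix.submatrix_apply, hEr, hB, Matrix.of_apply,
        Matrix.fromBlocks_apply₂₂]
      have h1 : ((emb2 hm i : Fin n) : ℕ) = m + (i : ℕ) := rfl
      have h2 : ((emb2 hm j : Fin n) : ℕ) = m + (j : ℕ) := rfl
      rw [h1, h2, if_pos (by omega), if_neg (by omega)]
      rw [← pow_add]
      congr 1
      omega
  have hBdet : B.det = (Matrix.vandermonde v1).det *
      (Matrix.of fun i j : Fin (n - m) => v2 i ^ (N + m) * v2 i ^ (j : ℕ)).det := by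
    rw [← Matrix.det_submatrix_equiv_self E B, hsub, Matrix.det_fromBlocks_zero₂₁]
  have hD : (Matrix.of fun i j : Fin (n - m) => v2 i ^ (N + m) * v2 i ^ (j : ℕ)).det
      = (∏ i : Fin (n - m), v2 i ^ (N + m)) * (Matrix.vandermonde v2).det := by
    have : (Matrix.of fun i j : Fin (n - m) => v2 i ^ (N + m) * v2 i ^ (j : ℕ))
        = Matrix.of fun i j => (fun k => v2 k ^ (N + m)) i * Matrix.vandermonde v2 i j := rfl
    rw [this, Matrix.det_mul_column]
  rw [← hdet, hBdet, hD, Matrix.det_vandermonde, Matrix.det_vandermonde]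


lemma key {n m N : ℕ} (hm : m ≤ n) (w : Fin n → F) (hw0 : ∀ i, w i ≠ 0)
    (hdist : ∀ i j : Fin n, i ≠ j → w i ≠ w j) (σ : Equiv.Perm (Fin n))
    (Lf Qf : Finset (Fin n)) (Pf : Finset (Fin n × Fin n))
    (hLf : ∀ c : Fin n, c ∈ Lf ↔ (c : ℕ) < m)
    (hQf : ∀ c : Fin n, c ∈ Qf ↔ m ≤ (c : ℕ))
    (hPf : ∀ p : Fin n × Fin n, p ∈ Pf ↔ p.1 < p.2) :
    (Equiv.Perm.sign σ •
      ((∏ i : Fin m, ∏ j ∈ Ioi i,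
          (w (σ (Fin.castLE hm j)) - w (σ (Fin.castLE hm i))))
      * ((∏ i : Fin (n - m), w (σ (emb2 hm i)) ^ (N + m))
        * ∏ i : Fin (n - m), ∏ j ∈ Ioi i,
            (w (σ (emb2 hm j)) - w (σ (emb2 hm i))))))
      / ∏ p ∈ Pf, (w p.2 - w p.1)
    = (∏ c ∈ Qf, w (σ c)) ^ N /
        ∏ l ∈ Lf, ∏ q ∈ Qf, (1 - w (σ l) * (w (σ q))⁻¹) := by
  classical
  set x : F := ∏ c ∈ Qf, w (σ c) with hx
  have hx0 : x ≠ 0 := Finset.prod_ne_zero_iff.mpr fun q _ => hw0 _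
  set P1 : F := ∏ i : Fin m, ∏ j ∈ Ioi i,
      (w (σ (Fin.castLE hm j)) - w (σ (Fin.castLE hm i))) with hP1
  set P2 : F := ∏ i : Fin (n - m), ∏ j ∈ Ioi i,
      (w (σ (emb2 hm j)) - w (σ (emb2 hm i))) with hP2
  set C : F := ∏ l ∈ Lf, ∏ q ∈ Qf, (w (σ q) - w (σ l)) with hC
  set V : F := ∏ p ∈ Pf, (w p.2 - w p.1) with hV
  have hsub0 : ∀ a b : Fin n, a ≠ b → w (σ a) - w (σ b) ≠ 0 := by
    intro a b hab
    exact sub_ne_zero.mpr (hdist _ _ fun h => hab (σ.injective h))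
  -- nonvanishing
  have hP10 : P1 ≠ 0 := by
    rw [hP1]
    refine Finset.prod_ne_zero_iff.mpr fun i _ => Finset.prod_ne_zero_iff.mpr fun j hj => ?_
    have : i < j := Finset.mem_Ioi.mp hj
    exact hsub0 _ _ (by
      intro h
      have := congrArg Fin.val h
      simp only [Fin.coe_castLE] at this
      exact absurd (Fin.ext this) (ne_of_gt ‹i < j›))
  have hP20 : P2 ≠ 0 := by
    rw [hP2]
    refine Finset.prod_ne_zero_iff.mpr fun i _ => Finset.prod_ne_zero_iff.mpr fun j hj => ?_
    have hij : i < j := Finset.mem_Ioi.mp hj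
    refine hsub0 _ _ fun h => ?_
    have h' := congrArg Fin.val h
    simp only [emb2] at h'
    have h'' : (i : ℕ) = (j : ℕ) := by omega
    exact absurd (Fin.ext h'') (ne_of_lt hij)
  have hC0 : C ≠ 0 := by
    rw [hC]
    refine Finset.prod_ne_zero_iff.mpr fun l hl => Finset.prod_ne_zero_iff.mpr fun q hq => ?_
    rw [hLf] at hl; rw [hQf] at hq
    exact hsub0 _ _ (fun h => by have := congrArg Fin.val h; omega)
  have hV0 : V ≠ 0 := by
    rw [hV]
    refine Finset.prod_ne_zero_iff.mpr fun p hp => ?_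
    have := (hPf p).mp hp
    refine sub_ne_zero.mpr (hdist _ _ (ne_of_gt this))
  -- sign as a field element
  set s : F := ((Equiv.Perm.sign σ : ℤ) : F) with hs
  have hss : s * s = 1 := by
    rcases Int.units_eq_one_or (Equiv.Perm.sign σ) with h | h <;> rw [hs, h] <;> norm_num
  -- alternating identity
  have hvan : ∏ i : Fin n, ∏ j ∈ Ioi i, (w (σ j) - w (σ i)) = s * V := by
    have h1 : Matrix.vandermonde (fun i => w (σ i))
        = (Matrix.vandermonde w).submatrix σ id := by
      ext i j; simp [Matrix.vandermonde]
    have h2 := congrArg Matrix.det h1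
    rw [Matrix.det_vandermonde, Matrix.det_permute, Matrix.det_vandermonde] at h2
    rw [h2, hV, prod_pairs Pf hPf (fun i j => w j - w i), hs]
  -- splitting the permuted product
  have hsplit : ∏ p ∈ Pf, (w (σ p.2) - w (σ p.1)) = P1 * (C * P2) := by
    rw [← Finset.prod_filter_mul_prod_filter_not Pf (fun p => (p.2 : ℕ) < m)]
    rw [← Finset.prod_filter_mul_prod_filter_not
      (Pf.filter (fun p => ¬ (p.2 : ℕ) < m)) (fun p => (p.1 : ℕ) < m)]
    congr 1
    · -- first block
      have him : Pf.filter (fun p => (p.2 : ℕ) < m)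
          = Finset.image (fun p : Fin m × Fin m => (Fin.castLE hm p.1, Fin.castLE hm p.2))
              ((univ : Finset (Fin m × Fin m)).filter fun p => p.1 < p.2) := by
        ext ⟨a, b⟩
        simp only [Finset.mem_filter, Finset.mem_image, hPf, Finset.mem_univ, true_and,
          Prod.mk.injEq, Prod.exists]
        constructor
        · rintro ⟨hab, hbm⟩
          have ham : (a : ℕ) < m := lt_trans hab hbm
          exact ⟨⟨a, ham⟩, ⟨b, hbm⟩, hab, Fin.ext rfl, Fin.ext rfl⟩
        · rintro ⟨i, j, hij, hia, hjb⟩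
          subst hia; subst hjb
          exact ⟨hij, j.isLt⟩
      have hinj : ∀ p ∈ ((univ : Finset (Fin m × Fin m)).filter fun p => p.1 < p.2),
          ∀ q ∈ ((univ : Finset (Fin m × Fin m)).filter fun p => p.1 < p.2),
          (Fin.castLE hm p.1, Fin.castLE hm p.2) = (Fin.castLE hm q.1, Fin.castLE hm q.2)
          → p = q := by
        intro p _ q _ hpq
        have h1 := congrArg (fun z : Fin n × Fin n => ((z.1 : ℕ), (z.2 : ℕ))) hpq
        simp only [Fin.coe_castLE] at h1
        exact Prod.ext (Fin.ext (congrArg Prod.fst h1)) (Fin.ext (congrArg Prod.snd h1))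
      rw [him, Finset.prod_image hinj]
      exact prod_pairs _ (fun p => by simp)
        (fun i j => w (σ (Fin.castLE hm j)) - w (σ (Fin.castLE hm i)))
    · congr 1
      · -- cross block
        have him : (Pf.filter (fun p => ¬ (p.2 : ℕ) < m)).filter (fun p => (p.1 : ℕ) < m)
            = Lf ×ˢ Qf := by
          ext ⟨a, b⟩
          simp only [Finset.mem_filter, Finset.mem_product, hPf, hLf, hQf, not_lt]
          constructor
          · rintro ⟨⟨hab, hb⟩, ha⟩
            exact ⟨ha, hb⟩
          · rintro ⟨ha, hb⟩
            exact ⟨⟨by rw [Fin.lt_def]; omega, hb⟩, ha⟩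
        rw [him, Finset.prod_product]
      · -- second block
        have him : (Pf.filter (fun p => ¬ (p.2 : ℕ) < m)).filter (fun p => ¬ (p.1 : ℕ) < m)
            = Finset.image (fun p : Fin (n - m) × Fin (n - m) => (emb2 hm p.1, emb2 hm p.2))
                ((univ : Finset (Fin (n - m) × Fin (n - m))).filter fun p => p.1 < p.2) := by
          ext ⟨a, b⟩
          simp only [Finset.mem_filter, Finset.mem_image, hPf, Finset.mem_univ, true_and,
            Prod.mk.injEq, Prod.exists, not_lt]
          constructor
          · rintro ⟨⟨hab, hb⟩, ha⟩
            have hav := a.isLt; have hbv := b.isLt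
            refine ⟨⟨(a : ℕ) - m, by omega⟩, ⟨(b : ℕ) - m, by omega⟩, ?_, ?_, ?_⟩
            · rw [Fin.lt_def]
              simp only []
              have : (a : ℕ) < (b : ℕ) := hab
              omega
            · exact Fin.ext (by simp [emb2]; omega)
            · exact Fin.ext (by simp [emb2]; omega)
          · rintro ⟨i, j, hij, hia, hjb⟩
            subst hia; subst hjb
            have : (i : ℕ) < (j : ℕ) := hij
            refine ⟨⟨by rw [Fin.lt_def]; simp [emb2]; omega, by simp [emb2]⟩, by simp [emb2]⟩
        have hinj : ∀ p ∈ ((univ : Finset (Fin (n - m) × Fin (n - m))).filter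
              fun p => p.1 < p.2),
            ∀ q ∈ ((univ : Finset (Fin (n - m) × Fin (n - m))).filter fun p => p.1 < p.2),
            (emb2 hm p.1, emb2 hm p.2) = (emb2 hm q.1, emb2 hm q.2) → p = q := by
          intro p _ q _ hpq
          have h1 := congrArg (fun z : Fin n × Fin n => ((z.1 : ℕ), (z.2 : ℕ))) hpq
          simp only [emb2] at h1
          have ha := congrArg Prod.fst h1
          have hb := congrArg Prod.snd h1
          simp only at ha hb
          refine Prod.ext (Fin.ext (by omega)) (Fin.ext (by omega))
        rw [him, Finset.prod_image hinj]
        exact prod_pairs _ (fun p => by simp)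
          (fun i j => w (σ (emb2 hm j)) - w (σ (emb2 hm i)))
  -- V in terms of P1 P2 C
  have hveq : V = s * (P1 * (C * P2)) := by
    have h0 : ∏ p ∈ Pf, (w (σ p.2) - w (σ p.1))
        = ∏ i : Fin n, ∏ j ∈ Ioi i, (w (σ j) - w (σ i)) :=
      prod_pairs Pf hPf (fun i j => w (σ j) - w (σ i))
    have hthis : P1 * (C * P2) = s * V := hsplit.symm.trans (h0.trans hvan)
    calc V = (s * s) * V := by rw [hss, one_mul]
      _ = s * (s * V) := by ring
      _ = s * (P1 * (C * P2)) := by rw [← hthis]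
  -- reindexing the product over the second block
  have hreidx : ∏ i : Fin (n - m), w (σ (emb2 hm i)) = x := by
    rw [hx]
    refine Finset.prod_bij (fun a _ => emb2 hm a) ?_ ?_ ?_ ?_
    · intro a _
      rw [hQf]
      simp [emb2]
    · intro a _ b _ h
      have h' := congrArg Fin.val h
      simp only [emb2] at h'
      exact Fin.ext (by omega)
    · intro b hb
      rw [hQf] at hb
      have hbv := b.isLt
      exact ⟨⟨(b : ℕ) - m, by omega⟩, Finset.mem_univ _, Fin.ext (by simp [emb2]; omega)⟩
    · intro a _
      rfl
  have hxpow : ∏ i : Fin (n - m), w (σ (emb2 hm i)) ^ (N + m) = x ^ (N + m) := by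
    rw [← hreidx, Finset.prod_pow]
  have hLcard : Lf.card = m := by
    have hLe : Lf = (univ : Finset (Fin n)).filter fun c : Fin n => (c : ℕ) < m := by
      ext c
      simp [hLf c]
    rw [hLe, card_filter_lt hm]
  have hQden : ∏ l ∈ Lf, ∏ q ∈ Qf, (1 - w (σ l) * (w (σ q))⁻¹) = C * (x⁻¹) ^ m := by
    calc ∏ l ∈ Lf, ∏ q ∈ Qf, (1 - w (σ l) * (w (σ q))⁻¹)
        = ∏ l ∈ Lf, ∏ q ∈ Qf, ((w (σ q) - w (σ l)) * (w (σ q))⁻¹) := by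
          refine Finset.prod_congr rfl fun l _ => Finset.prod_congr rfl fun q _ => ?_
          have hq0 := hw0 (σ q)
          field_simp
      _ = ∏ l ∈ Lf, ((∏ q ∈ Qf, (w (σ q) - w (σ l))) * ∏ q ∈ Qf, (w (σ q))⁻¹) := by
          refine Finset.prod_congr rfl fun l _ => ?_
          rw [Finset.prod_mul_distrib]
      _ = C * (∏ q ∈ Qf, (w (σ q))⁻¹) ^ Lf.card := by
          rw [Finset.prod_mul_distrib, Finset.prod_const, hC]
      _ = C * (x⁻¹) ^ m := by
          rw [hLcard, Finset.prod_inv_distrib, hx]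
  have hs0 : s ≠ 0 := by
    intro h
    rw [h, mul_zero] at hss
    exact zero_ne_one hss
  have hden2 : C * (x⁻¹) ^ m ≠ 0 :=
    mul_ne_zero hC0 (pow_ne_zero _ (inv_ne_zero hx0))
  rw [hxpow, hQden, Units.smul_def, zsmul_eq_mul, ← hs, hveq,
    div_eq_div_iff (by rw [hveq] at hV0; exact hV0) hden2]
  have hxm : x ^ (N + m) * (x⁻¹) ^ m = x ^ N := by
    rw [inv_pow, pow_add]
    field_simp
  calc s * (P1 * (x ^ (N + m) * P2)) * (C * x⁻¹ ^ m)
      = (x ^ (N + m) * x⁻¹ ^ m) * (s * (P1 * (C * P2))) := by ring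
    _ = x ^ N * (s * (P1 * (C * P2))) := by rw [hxm]


end Stmt11Aux

open Stmt11Aux in
open scoped Classical in
/-- Unitary combinatorial sum. -/
theorem stmt11 {F : Type*} [Field F] (n m N : ℕ) (hm : m ≤ n)
    (w : Fin n → F) (hw0 : ∀ i, w i ≠ 0)
    (hdist : ∀ i j : Fin n, i ≠ j → w i ≠ w j) :
    Matrix.det (Matrix.of fun j c : Fin n =>
        w j ^ (if (c : ℕ) < m then (c : ℕ) else N + (c : ℕ))) /
      ∏ p ∈ Finset.univ.filter (fun p : Fin n × Fin n => p.1 < p.2),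
        (w p.2 - w p.1)
    = ∑ σ ∈ Finset.univ.filter
          (fun σ : Equiv.Perm (Fin n) =>
            (∀ a b : Fin n, a < b → (b : ℕ) < m → σ a < σ b) ∧
            (∀ a b : Fin n, a < b → m ≤ (a : ℕ) → σ a < σ b)),
        (∏ c ∈ Finset.univ.filter (fun c : Fin n => m ≤ (c : ℕ)),
            w (σ c)) ^ N /
          ∏ l ∈ Finset.univ.filter (fun l : Fin n => (l : ℕ) < m),
            ∏ q ∈ Finset.univ.filter (fun q : Fin n => m ≤ (q : ℕ)),
              (1 - w (σ l) * (w (σ q))⁻¹) := by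
  set Ξ : Finset (Equiv.Perm (Fin n)) := Finset.univ.filter
      (fun σ : Equiv.Perm (Fin n) =>
        (∀ a b : Fin n, a < b → (b : ℕ) < m → σ a < σ b) ∧
        (∀ a b : Fin n, a < b → m ≤ (a : ℕ) → σ a < σ b)) with hXi
  set H : Finset (Equiv.Perm (Fin n)) := Finset.univ.filter
      (fun τ : Equiv.Perm (Fin n) => ∀ c : Fin n, (c : ℕ) < m ↔ ((τ c : ℕ) < m)) with hHdef
  have hXimem : ∀ σ : Equiv.Perm (Fin n), σ ∈ Ξ ↔
      ((∀ a b : Fin n, a < b → (b : ℕ) < m → σ a < σ b) ∧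
       (∀ a b : Fin n, a < b → m ≤ (a : ℕ) → σ a < σ b)) := by
    intro σ
    rw [hXi, Finset.mem_filter]
    simp
  have hHmem : ∀ τ : Equiv.Perm (Fin n), τ ∈ H ↔
      (∀ c : Fin n, (c : ℕ) < m ↔ ((τ c : ℕ) < m)) := by
    intro τ
    rw [hHdef, Finset.mem_filter]
    simp
  rw [Matrix.det_apply]
  rw [sum_perm_decomp hm Ξ H hXimem hHmem]
  rw [Finset.sum_div]
  apply Finset.sum_congr rfl
  intro σ hσ
  have htrans : ∑ τ ∈ H, Equiv.Perm.sign (σ * τ) • ∏ c : Fin n,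
        (Matrix.of fun j c : Fin n =>
          w j ^ (if (c : ℕ) < m then (c : ℕ) else N + (c : ℕ))) ((σ * τ) c) c
      = Equiv.Perm.sign σ • ∑ τ ∈ H, Equiv.Perm.sign τ • ∏ c : Fin n,
          w (σ (τ c)) ^ (if (c : ℕ) < m then (c : ℕ) else N + (c : ℕ)) := by
    rw [Finset.smul_sum]
    apply Finset.sum_congr rfl
    intro τ _
    rw [map_mul, mul_smul]
    congr 1
  rw [htrans, inner_sum2 hm w σ H hHmem]
  rw [hXimem] at hσ
  exact key hm w hw0 hdist σ
    (Finset.univ.filter (fun l : Fin n => (l : ℕ) < m))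
    (Finset.univ.filter (fun q : Fin n => m ≤ (q : ℕ)))
    (Finset.univ.filter (fun p : Fin n × Fin n => p.1 < p.2))
    (fun c => by simp) (fun c => by simp) (fun p => by simp)
end
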